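/- arXiv:1501.01641 — 11 statements merged into one kernel-verified Lean document; each statement's English description precedes it below -/
import Mathlib

section
/- There exists μ₀ > 0 such that for every real μ with |μ| ≥ μ₀ the function F_μ possesses a critical point (x_c, z_c) with x_c > 1 and z_c > 0, i.e. a point at which both partial derivatives of F_μ vanish. -/
open Real Filter Set Topology

private lemma aux_le2 : (2 : WithTop ℕ∞) ≤ ((⊤:ℕ∞) : WithTop ℕ∞) := by
  rw [show ((2:WithTop ℕ∞)) = ((2:ℕ∞):WithTop ℕ∞) by rfl]
  exact WithTop.coe_le_coe.mpr le_top

private lemma aux_le1 : (1 : WithTop ℕ∞) ≤ ((⊤:ℕ∞) : WithTop ℕ∞) := by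
  rw [show ((1:WithTop ℕ∞)) = ((1:ℕ∞):WithTop ℕ∞) by rfl]
  exact WithTop.coe_le_coe.mpr le_top

private lemma aux_deriv_smooth {g : ℝ → ℝ} {x : ℝ} (h : ContDiffAt ℝ (⊤:ℕ∞) g x) :
    ContinuousAt (deriv g) x ∧ DifferentiableAt ℝ (deriv g) x := by
  obtain ⟨u, hu, hcd⟩ := h.contDiffOn (m := 2) aux_le2 (by simp)
  obtain ⟨t, htu, ht, hxt⟩ := mem_nhds_iff.mp hu
  have hcd' : ContDiffOn ℝ 2 g t := hcd.mono htu
  constructor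
  · exact (hcd'.continuousOn_deriv_of_isOpen ht one_le_two).continuousAt (ht.mem_nhds hxt)
  · have h2 : (2:WithTop ℕ∞) = 1 + 1 := by norm_num
    rw [h2] at hcd'
    have := ((contDiffOn_succ_iff_deriv_of_isOpen ht).1 hcd').2.2
    exact (this.differentiableOn one_ne_zero).differentiableAt (ht.mem_nhds hxt)

theorem stmt_0 (σ f ν : ℝ → ℝ) (σ₁ : ℝ)
    (hσsm : ∀ x > (0:ℝ), ContDiffAt ℝ (⊤ : ℕ∞) σ x)
    (hσ₁ : 0 < σ₁)
    (hM1a : Filter.Tendsto σ Filter.atTop (nhds 1))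
    (hM1b : Filter.Tendsto (fun x => x ^ 2 * deriv σ x) Filter.atTop (nhds σ₁))
    (hM2a : σ 1 = 0)
    (hM2b : 0 < deriv σ 1)
    (hM3 : ∀ x > (1:ℝ), 0 < σ x ∧ 0 < deriv σ x)
    (hM4 : ∀ x > (1:ℝ),
      -3 < deriv (fun y => y ^ 2 * deriv σ y) x / (x * deriv σ x) ∧
      deriv (fun y => y ^ 2 * deriv σ y) x / (x * deriv σ x)
        < σ₁ / (2 * x) * (9 / (8 + σ₁ / (2 * x))))
    (hfsm : ∀ z > (0:ℝ), ContDiffAt ℝ (⊤ : ℕ∞) f z)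
    (hfpos : ∀ z > (0:ℝ), 0 < f z)
    (hν : ∀ z : ℝ, ν z = Real.sqrt (z * deriv f z / f z))
    (hF1 : Filter.Tendsto f (nhdsWithin 0 (Set.Ioi 0)) (nhds 1))
    (hF2 : ∀ z > (0:ℝ), 0 < ν z ∧ ν z < 1)
    (hF3 : ∀ z > (0:ℝ), 0 ≤ z * deriv ν z / ν z ∧ z * deriv ν z / ν z ≤ 1 / 3)
    (F : ℝ → ℝ → ℝ → ℝ)
    (hF : ∀ μ x z : ℝ, F μ x z = f z ^ 2 * (σ x + μ ^ 2 / (x ^ 4 * z ^ 2)))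
    :
    ∃ μ₀ > (0:ℝ), ∀ μ : ℝ, μ₀ ≤ |μ| →
      ∃ xc zc : ℝ, 1 < xc ∧ 0 < zc ∧
        deriv (fun x => F μ x zc) xc = 0 ∧
        deriv (fun z => F μ xc z) zc = 0 := by
  -- basic facts about ν
  have hq : ∀ z > (0:ℝ), 0 < z * deriv f z / f z := by
    intro z hz
    have h2 := (hF2 z hz).1
    rw [hν z] at h2
    exact Real.sqrt_pos.mp h2
  have hνsq : ∀ z > (0:ℝ), ν z ^ 2 = z * deriv f z / f z := by
    intro z hz
    rw [hν z, sq, Real.mul_self_sqrt (hq z hz).le]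
  have hνcont : ∀ z > (0:ℝ), ContinuousAt ν z := by
    intro z hz
    have : ContinuousAt (fun z => Real.sqrt (z * deriv f z / f z)) z :=
      Real.continuous_sqrt.continuousAt.comp
        ((continuousAt_id.mul (aux_deriv_smooth (hfsm z hz)).1).div
          (hfsm z hz).continuousAt (hfpos z hz).ne')
    exact this.congr (by filter_upwards with y using (hν y).symm)
  have hνdiff : ∀ z > (0:ℝ), DifferentiableAt ℝ ν z := by
    intro z hz
    have hqd : DifferentiableAt ℝ (fun z => z * deriv f z / f z) z :=
      (differentiableAt_id.mul (aux_deriv_smooth (hfsm z hz)).2).div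
        ((hfsm z hz).differentiableAt (by simp)) (hfpos z hz).ne'
    have : DifferentiableAt ℝ (fun z => Real.sqrt (z * deriv f z / f z)) z :=
      hqd.sqrt (hq z hz).ne'
    exact this.congr_of_eventuallyEq (by filter_upwards with y using (hν y))
  have hνmono : MonotoneOn ν (Ioi 0) := by
    apply monotoneOn_of_deriv_nonneg (convex_Ioi 0)
    · exact fun z hz => (hνcont z hz).continuousWithinAt
    · rw [interior_Ioi]
      exact fun z hz => (hνdiff z hz).differentiableWithinAt
    · rw [interior_Ioi]
      intro z hz
      have h3 := (hF3 z hz).1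
      by_contra hneg
      push_neg at hneg
      have : z * deriv ν z / ν z < 0 :=
        div_neg_of_neg_of_pos (mul_neg_of_pos_of_neg hz hneg) (hF2 z hz).1
      linarith
  -- σ' positive on [1,∞)
  have hσ'pos : ∀ x ≥ (1:ℝ), 0 < deriv σ x := by
    intro x hx
    rcases eq_or_lt_of_le hx with h | h
    · rwa [← h]
    · exact (hM3 x h).2
  -- x σ'(x) → 0
  have hxσ' : Tendsto (fun x => x * deriv σ x) atTop (nhds 0) := by
    have hcg : (fun x:ℝ => (x^2 * deriv σ x) * x⁻¹) =ᶠ[atTop] (fun x => x * deriv σ x) := by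
      filter_upwards [eventually_gt_atTop (0:ℝ)] with x hx
      field_simp
    have := hM1b.mul tendsto_inv_atTop_zero
    rw [mul_zero] at this
    exact Tendsto.congr' hcg this
  have hν1 := hF2 1 one_pos
  -- choose X
  have hlim : Tendsto (fun x => 4 * ν 1^2 * σ x - (1 - ν 1^2) * (x * deriv σ x)) atTop
      (nhds (4 * ν 1^2 * 1 - (1 - ν 1^2) * 0)) :=
    (tendsto_const_nhds.mul hM1a).sub (tendsto_const_nhds.mul hxσ')
  have hpos : (0:ℝ) < 4 * ν 1^2 * 1 - (1 - ν 1^2) * 0 := by nlinarith [hν1.1]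
  obtain ⟨X, hX⟩ := ((hlim.eventually (eventually_gt_nhds hpos)).and
    (eventually_gt_atTop (1:ℝ))).exists
  obtain ⟨hXineq, hX1⟩ := hX
  have hX0 : (0:ℝ) < X := by linarith
  have hσ'X : 0 < deriv σ X := hσ'pos X hX1.le
  -- μ₀
  refine ⟨max 1 (Real.sqrt (deriv σ X * X^5)), lt_of_lt_of_le one_pos (le_max_left _ _), ?_⟩
  intro μ hμ
  have hμ1 : (1:ℝ) ≤ |μ| := le_trans (le_max_left _ _) hμ
  have hμ0 : (0:ℝ) < |μ| := by linarith
  set w : ℝ → ℝ := fun x => 2 * |μ| / Real.sqrt (deriv σ x * x^5) with hwdef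
  have hwpos : ∀ x ≥ (1:ℝ), 0 < w x := by
    intro x hx
    have hx0 : (0:ℝ) < x := by linarith
    have : 0 < Real.sqrt (deriv σ x * x^5) :=
      Real.sqrt_pos.mpr (mul_pos (hσ'pos x hx) (by positivity))
    simp only [hwdef]
    exact div_pos (by linarith) this
  set H : ℝ → ℝ := fun x => ν (w x)^2 * (4 * σ x + x * deriv σ x) - x * deriv σ x with hHdef
  -- continuity of H on Icc 1 X
  have hHcont : ContinuousOn H (Icc 1 X) := by
    intro x hx
    have hx1 : (1:ℝ) ≤ x := hx.1
    have hx0 : (0:ℝ) < x := by linarith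
    have hd : ContinuousAt (deriv σ) x := (aux_deriv_smooth (hσsm x hx0)).1
    have hsc : ContinuousAt σ x := (hσsm x hx0).continuousAt
    have hsq : ContinuousAt (fun x => Real.sqrt (deriv σ x * x^5)) x :=
      Real.continuous_sqrt.continuousAt.comp (hd.mul (continuousAt_pow x 5))
    have hsqne : Real.sqrt (deriv σ x * x^5) ≠ 0 := by
      have : 0 < Real.sqrt (deriv σ x * x^5) :=
        Real.sqrt_pos.mpr (by have := hσ'pos x hx1; positivity)
      exact this.ne'
    have hwc : ContinuousAt w x := continuousAt_const.div hsq hsqne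
    have hνw : ContinuousAt (fun x => ν (w x)) x :=
      (hνcont (w x) (hwpos x hx1)).comp hwc
    exact (((hνw.pow 2).mul ((continuousAt_const.mul hsc).add
      (continuousAt_id.mul hd))).sub (continuousAt_id.mul hd)).continuousWithinAt
  -- H 1 < 0
  have hH1 : H 1 < 0 := by
    have hw1 := hwpos 1 le_rfl
    have hν2 := hF2 (w 1) hw1
    have hsq1 : ν (w 1)^2 < 1 := by nlinarith [hν2.1, hν2.2]
    rw [hHdef]
    simp only [hM2a]
    nlinarith [hM2b, hν2.1]
  -- H X > 0
  have hHX : 0 < H X := by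
    have hwX1 : (1:ℝ) ≤ w X := by
      have hs : 0 < Real.sqrt (deriv σ X * X^5) := Real.sqrt_pos.mpr (by positivity)
      rw [hwdef]
      rw [le_div_iff₀ hs]
      have : Real.sqrt (deriv σ X * X^5) ≤ |μ| := le_trans (le_max_right _ _) hμ
      nlinarith
    have hmono := hνmono (mem_Ioi.mpr one_pos) (mem_Ioi.mpr (hwpos X hX1.le)) hwX1
    have hν1sq : ν 1^2 ≤ ν (w X)^2 := by nlinarith [hν1.1]
    have hσX := (hM3 X hX1).1
    simp only [hHdef]
    nlinarith [hν1sq, hσX, hσ'X, hXineq,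
      mul_nonneg (sub_nonneg.mpr hν1sq) (by positivity : (0:ℝ) ≤ 4 * σ X + X * deriv σ X)]
  -- IVT
  obtain ⟨xc, hxcmem, hHxc⟩ := intermediate_value_Ioo hX1.le hHcont
    (show (0:ℝ) ∈ Ioo (H 1) (H X) from ⟨hH1, hHX⟩)
  have hxc1 : 1 < xc := hxcmem.1
  have hxc0 : (0:ℝ) < xc := by linarith
  set zc := w xc with hzcdef
  have hzc0 : 0 < zc := hwpos xc hxc1.le
  have hp : 0 < deriv σ xc := (hM3 xc hxc1).2
  have hs : 0 < σ xc := (hM3 xc hxc1).1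
  have ha : 0 < f zc := hfpos zc hzc0
  -- key algebraic relation: zc^2 * (deriv σ xc * xc^5) = 4 μ^2
  have hkey : zc^2 * (deriv σ xc * xc^5) = 4 * μ^2 := by
    have hpos5 : (0:ℝ) ≤ deriv σ xc * xc^5 := by positivity
    simp only [hzcdef, hwdef]
    rw [div_pow, Real.sq_sqrt hpos5]
    rw [div_mul_cancel₀]
    · rw [mul_pow, sq_abs]; ring
    · positivity
  -- the equation from H xc = 0
  have hN : ν zc^2 * (4 * σ xc + xc * deriv σ xc) = xc * deriv σ xc := by
    simp only [hHdef] at hHxc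
    rw [← hzcdef] at hHxc
    linarith [hHxc]
  -- relation zc * deriv f zc = ν zc ^2 * f zc
  have hb : zc * deriv f zc = ν zc^2 * f zc := by
    have := hνsq zc hzc0
    field_simp at this
    linarith [this]
  clear_value zc
  refine ⟨xc, zc, hxc1, hzc0, ?_, ?_⟩
  · -- x derivative
    have hσd : HasDerivAt σ (deriv σ xc) xc :=
      ((hσsm xc hxc0).differentiableAt (by simp)).hasDerivAt
    have hx4 : HasDerivAt (fun x:ℝ => x^4 * zc^2) (4*xc^3*zc^2) xc := by
      have := (hasDerivAt_pow 4 xc).mul_const (zc^2)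
      norm_num at this
      exact this
    have hne : xc^4 * zc^2 ≠ 0 := by positivity
    have hinv := hx4.inv hne
    have h1 : HasDerivAt (fun x => f zc^2 * (σ x + μ^2 * (x^4*zc^2)⁻¹))
        (f zc^2 * (deriv σ xc + μ^2 * (-(4*xc^3*zc^2)/(xc^4*zc^2)^2))) xc :=
      (hσd.add (hinv.const_mul (μ^2))).const_mul (f zc^2)
    have hfun : (fun x => F μ x zc) = fun x => f zc^2 * (σ x + μ^2 * (x^4*zc^2)⁻¹) := by
      funext x
      rw [hF, div_eq_mul_inv]
    rw [hfun, h1.deriv]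
    have hxc0' : xc ≠ 0 := hxc0.ne'
    have hzc0' : zc ≠ 0 := hzc0.ne'
    field_simp
    linear_combination (f zc^2) * hkey
  · -- z derivative
    have hfd : HasDerivAt f (deriv f zc) zc :=
      ((hfsm zc hzc0).differentiableAt (by simp)).hasDerivAt
    have hf2 : HasDerivAt (fun z => f z^2) (2 * f zc * deriv f zc) zc := by
      have h := hfd.pow 2
      norm_num at h
      exact h
    have hz2 : HasDerivAt (fun z:ℝ => xc^4 * z^2) (xc^4 * (2*zc)) zc := by
      have h := (hasDerivAt_pow 2 zc).const_mul (xc^4)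
      norm_num at h
      convert h using 1 <;> ring
    have hne : xc^4 * zc^2 ≠ 0 := by positivity
    have hinv := hz2.inv hne
    have h2 : HasDerivAt (fun z => f z^2 * (σ xc + μ^2 * (xc^4*z^2)⁻¹))
        (2 * f zc * deriv f zc * (σ xc + μ^2 * (xc^4*zc^2)⁻¹)
          + f zc^2 * (0 + μ^2 * (-(xc^4*(2*zc))/(xc^4*zc^2)^2))) zc :=
      hf2.mul ((hasDerivAt_const zc (σ xc)).add (hinv.const_mul (μ^2)))
    have hfun : (fun z => F μ xc z) = fun z => f z^2 * (σ xc + μ^2 * (xc^4*z^2)⁻¹) := by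
      funext z
      rw [hF, div_eq_mul_inv]
    rw [hfun, h2.deriv]
    have hxc0' : xc ≠ 0 := hxc0.ne'
    have hzc0' : zc ≠ 0 := hzc0.ne'
    have hm : μ^2 * (xc^4*zc^2)⁻¹ = deriv σ xc * xc / 4 := by
      field_simp
      linear_combination -hkey
    have hm2 : μ^2 * (-(xc^4*(2*zc))/(xc^4*zc^2)^2) = -(deriv σ xc * xc/(2*zc)) := by
      field_simp
      linear_combination hkey
    rw [hm, hm2]
    field_simp
    linear_combination (4*f zc*(4*σ xc + deriv σ xc*xc)) * hb + (4*f zc^2) * hN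
end

section
/- For every μ ≠ 0, the function F_μ has at most one critical point in (1,∞) × (0,∞), i.e. at most one point (x_c, z_c) with x_c > 1, z_c > 0 at which both partial derivatives of F_μ vanish. -/
open Real Filter Set Topology

private lemma derivDiffAt {g : ℝ → ℝ} {x : ℝ} (hg : ContDiffAt ℝ (⊤:ℕ∞) g x) :
    DifferentiableAt ℝ (deriv g) x := by
  obtain ⟨u, hu, hcd⟩ := hg.contDiffOn (m := 2)
    (by exact_mod_cast ENat.natCast_le_of_coe_top_le_withTop le_rfl 2) (by simp)
  have hx : x ∈ interior u := mem_interior_iff_mem_nhds.2 hu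
  have h2 : ContDiffOn ℝ 1 (deriv g) (interior u) :=
    (hcd.mono interior_subset).deriv_of_isOpen isOpen_interior (by norm_num)
  exact (h2.differentiableOn (by norm_num)).differentiableAt (isOpen_interior.mem_nhds hx)

private lemma keyIneq (x S E σ₁ θ P : ℝ) (hx : 1 < x) (hS : 0 < S) (hE : 0 < E)
    (hσ₁ : 0 < σ₁) (hθ0 : 0 ≤ θ) (hθ1 : θ ≤ 1/3)
    (hP2 : P < σ₁/(2*x) * (9/(8 + σ₁/(2*x))))
    (hK : σ₁ * S < x * E) :
    0 < (-(θ*(3+P)) + (E/(4*S+E))*(3+P) + (1-P)) / x := by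
  have hx0 : (0:ℝ) < x := by linarith
  set s := σ₁/(2*x) with hs
  have hs0 : 0 < s := by positivity
  have h8s : (0:ℝ) < 8 + s := by linarith
  have hP2' : P*(8+s) < 9*s := by
    have hc : s*(9/(8+s))*(8+s) = 9*s := by field_simp
    nlinarith [hP2, h8s]
  have hsx : 2*x*s = σ₁ := by rw [hs]; field_simp
  have hden : (0:ℝ) < 4*S+E := by linarith
  have hB0 : 0 < E/(4*S+E) := div_pos hE hden
  have hB1 : E/(4*S+E) ≤ 1 := (div_le_one hden).2 (by linarith)
  apply div_pos _ hx0
  set B := E/(4*S+E) with hB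
  rcases le_or_gt (3+P) 0 with h|h
  · have t1 : θ*(3+P) ≤ 0 := mul_nonpos_of_nonneg_of_nonpos hθ0 h
    have t2 : (1-B)*(3+P) ≤ 0 := mul_nonpos_of_nonneg_of_nonpos (by linarith) h
    nlinarith [t1, t2]
  · have hθ' : θ*(3+P) ≤ (3+P)/3 := by
      have := mul_le_mul_of_nonneg_right hθ1 h.le; linarith
    rcases le_or_gt P 0 with hp|hp
    · have := mul_pos hB0 h; linarith
    · have hA : 0 < 9*s - P*(8+s) := by linarith
      have h72 : 72 < (9-P)*(8+s) := by nlinarith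
      have c1 : 16*P*(x*S)*(8+s) < 144*s*(x*S) := by nlinarith [mul_pos hx0 hS]
      have c2 : 144*s*(x*S) = 72*σ₁*S := by rw [← hsx]; ring
      have c3 : 72*σ₁*S < 72*(x*E) := by linarith
      have c4 : 72*(x*E) < (9-P)*(8+s)*(x*E) := by nlinarith [mul_pos hx0 hE]
      have c5 : 16*P*(x*S)*(8+s) < (9-P)*(8+s)*(x*E) := by linarith
      have c5' : (16*P*(x*S))*(8+s) < ((9-P)*(x*E))*(8+s) := by linarith [c5]
      have key : 16*P*(x*S) < (9-P)*(x*E) := lt_of_mul_lt_mul_right c5' h8s.le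
      have key' : (16*P*S)*x < ((9-P)*E)*x := by linarith [key]
      have key2 : 16*P*S < (9-P)*E := lt_of_mul_lt_mul_right key' hx0.le
      have hfin : 4*P/3 < B*(3+P) := by
        rw [hB, div_mul_eq_mul_div, lt_div_iff₀ hden]
        nlinarith [key2]
      linarith [hθ', hfin]
set_option maxHeartbeats 1000000 in
theorem stmt_1 (σ f ν : ℝ → ℝ) (σ₁ : ℝ)
    (hσsm : ∀ x > (0:ℝ), ContDiffAt ℝ (⊤ : ℕ∞) σ x)
    (hσ₁ : 0 < σ₁)
    (hM1a : Filter.Tendsto σ Filter.atTop (nhds 1))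
    (hM1b : Filter.Tendsto (fun x => x ^ 2 * deriv σ x) Filter.atTop (nhds σ₁))
    (hM2a : σ 1 = 0)
    (hM2b : 0 < deriv σ 1)
    (hM3 : ∀ x > (1:ℝ), 0 < σ x ∧ 0 < deriv σ x)
    (hM4 : ∀ x > (1:ℝ),
      -3 < deriv (fun y => y ^ 2 * deriv σ y) x / (x * deriv σ x) ∧
      deriv (fun y => y ^ 2 * deriv σ y) x / (x * deriv σ x)
        < σ₁ / (2 * x) * (9 / (8 + σ₁ / (2 * x))))
    (hfsm : ∀ z > (0:ℝ), ContDiffAt ℝ (⊤ : ℕ∞) f z)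
    (hfpos : ∀ z > (0:ℝ), 0 < f z)
    (hν : ∀ z : ℝ, ν z = Real.sqrt (z * deriv f z / f z))
    (hF1 : Filter.Tendsto f (nhdsWithin 0 (Set.Ioi 0)) (nhds 1))
    (hF2 : ∀ z > (0:ℝ), 0 < ν z ∧ ν z < 1)
    (hF3 : ∀ z > (0:ℝ), 0 ≤ z * deriv ν z / ν z ∧ z * deriv ν z / ν z ≤ 1 / 3)
    (F : ℝ → ℝ → ℝ → ℝ)
    (hF : ∀ μ x z : ℝ, F μ x z = f z ^ 2 * (σ x + μ ^ 2 / (x ^ 4 * z ^ 2)))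
    (μ : ℝ) (hμ : μ ≠ 0) :
    ∀ xc zc xc' zc' : ℝ, 1 < xc → 0 < zc → 1 < xc' → 0 < zc' →
      deriv (fun x => F μ x zc) xc = 0 → deriv (fun z => F μ xc z) zc = 0 →
      deriv (fun x => F μ x zc') xc' = 0 → deriv (fun z => F μ xc' z) zc' = 0 →
      xc = xc' ∧ zc = zc' := by
  intro xc zc xc' zc' hxc hzc hxc' hzc' dX dZ dX' dZ'
  have hone : (1 : WithTop ℕ∞) ≤ ((⊤:ℕ∞) : WithTop ℕ∞) := by
    exact_mod_cast ENat.natCast_le_of_coe_top_le_withTop le_rfl 1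
  have hdσ : ∀ x : ℝ, 0 < x → DifferentiableAt ℝ σ x :=
    fun x hx => (hσsm x hx).differentiableAt (by simp)
  have hds' : ∀ x : ℝ, 0 < x → DifferentiableAt ℝ (deriv σ) x :=
    fun x hx => derivDiffAt (hσsm x hx)
  have hdf : ∀ z : ℝ, 0 < z → DifferentiableAt ℝ f z :=
    fun z hz => (hfsm z hz).differentiableAt (by simp)
  have hdf' : ∀ z : ℝ, 0 < z → DifferentiableAt ℝ (deriv f) z :=
    fun z hz => derivDiffAt (hfsm z hz)
  have hwpos : ∀ z : ℝ, 0 < z → 0 < z * deriv f z / f z := by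
    intro z hz
    have h1 := (hF2 z hz).1
    rw [hν z] at h1
    exact Real.sqrt_pos.mp h1
  have hν2 : ∀ z : ℝ, 0 < z → ν z ^ 2 = z * deriv f z / f z := by
    intro z hz; rw [hν z]; exact Real.sq_sqrt (hwpos z hz).le
  have hνdiff : ∀ z : ℝ, 0 < z → DifferentiableAt ℝ ν z := by
    intro z hz
    have hw : DifferentiableAt ℝ (fun y => y * deriv f y / f y) z :=
      (differentiableAt_fun_id.mul (hdf' z hz)).div (hdf z hz) (ne_of_gt (hfpos z hz))
    have : ν = fun y => Real.sqrt (y * deriv f y / f y) := funext hν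
    rw [this]
    exact hw.sqrt (ne_of_gt (hwpos z hz))
  -- Step 1 : σ₁ * σ x < x^2 * deriv σ x on (1, ∞)
  have hKey : ∀ x : ℝ, 1 < x → σ₁ * σ x < x ^ 2 * deriv σ x := by
    have hRdiff : ∀ x : ℝ, 1 < x →
        HasDerivAt (fun y => y ^ 2 * deriv σ y - σ₁ * σ y)
          (deriv (fun y => y ^ 2 * deriv σ y) x - σ₁ * deriv σ x) x := by
      intro x hx1
      have hx0 : (0:ℝ) < x := by linarith
      have hu : DifferentiableAt ℝ (fun y => y ^ 2 * deriv σ y) x :=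
        (differentiableAt_pow 2).mul (hds' x hx0)
      exact hu.hasDerivAt.sub (((hdσ x hx0).hasDerivAt).const_mul σ₁)
    have hRneg : ∀ x ∈ interior (Set.Ioi (1:ℝ)),
        deriv (fun y => y ^ 2 * deriv σ y - σ₁ * σ y) x < 0 := by
      intro x hx
      rw [interior_Ioi] at hx
      have hx1 : (1:ℝ) < x := hx
      have hx0 : (0:ℝ) < x := by linarith
      rw [(hRdiff x hx1).deriv]
      have hs'p := (hM3 x hx1).2
      have hxs' : 0 < x * deriv σ x := mul_pos hx0 hs'p
      have hM4u := (hM4 x hx1).2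
      have hdu : deriv (fun y => y ^ 2 * deriv σ y) x
          < x * deriv σ x * (σ₁ / (2*x) * (9 / (8 + σ₁/(2*x)))) := by
        have := (div_lt_iff₀ hxs').mp hM4u; linarith
      have hss : σ₁/(2*x) * (9/(8 + σ₁/(2*x))) < σ₁ / x := by
        set s := σ₁/(2*x) with hsdef
        have hs0 : 0 < s := by positivity
        have h92 : 9/(8+s) < 2 := by rw [div_lt_iff₀ (by linarith)]; linarith
        have : s * (9/(8+s)) < s * 2 := by nlinarith
        have h2s : s * 2 = σ₁ / x := by rw [hsdef]; field_simp
        linarith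
      have hfin : x * deriv σ x * (σ₁ / x) = σ₁ * deriv σ x := by field_simp
      nlinarith [mul_lt_mul_of_pos_left hss hxs']
    have hcont : ContinuousOn (fun y => y ^ 2 * deriv σ y - σ₁ * σ y) (Set.Ioi 1) :=
      fun x hx => ((hRdiff x hx).continuousAt).continuousWithinAt
    have hRanti : StrictAntiOn (fun y => y ^ 2 * deriv σ y - σ₁ * σ y) (Set.Ioi 1) :=
      strictAntiOn_of_deriv_neg (convex_Ioi 1) hcont hRneg
    have hRlim : Tendsto (fun y => y ^ 2 * deriv σ y - σ₁ * σ y) atTop (nhds 0) := by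
      have := hM1b.sub (hM1a.const_mul σ₁)
      simpa using this
    intro x hx1
    have hmem : x ∈ Set.Ioi (1:ℝ) := hx1
    have hmem1 : x + 1 ∈ Set.Ioi (1:ℝ) := by simp only [Set.mem_Ioi]; linarith
    have hnonneg : 0 ≤ (x+1) ^ 2 * deriv σ (x+1) - σ₁ * σ (x+1) := by
      apply le_of_tendsto hRlim
      filter_upwards [eventually_gt_atTop (x+1)] with y hy
      exact (hRanti hmem1 (by simp only [Set.mem_Ioi]; linarith [hmem1, hy] : y ∈ Set.Ioi (1:ℝ)) hy).le
    have hlt := hRanti hmem hmem1 (by linarith)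
    simp only at hlt
    linarith
  have key : ∀ x z : ℝ, 1 < x → 0 < z → deriv (fun t => F μ t z) x = 0 →
      deriv (fun w => F μ x w) z = 0 →
      z ^ 2 * (x ^ 5 * deriv σ x) = 4 * μ ^ 2 ∧
      ν z ^ 2 * (4 * σ x + x * deriv σ x) = x * deriv σ x := by
    intro x z hx1 hz0 h1 h2
    have hx0 : (0:ℝ) < x := by linarith
    have hxne : x ≠ 0 := ne_of_gt hx0
    have hzne : z ≠ 0 := ne_of_gt hz0
    have hfz : f z ≠ 0 := ne_of_gt (hfpos z hz0)
    have e1 : (fun t => F μ t z)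
        = fun t => f z ^ 2 * σ t + (f z ^ 2 * (μ ^ 2 / z ^ 2)) * (t ^ 4)⁻¹ := by
      funext t; rw [hF]; simp only [div_eq_mul_inv, mul_inv]; ring
    have hd1 := (((hdσ x hx0).hasDerivAt).const_mul (f z ^ 2)).add
        (((hasDerivAt_pow 4 x).inv (pow_ne_zero 4 hxne)).const_mul (f z ^ 2 * (μ ^ 2 / z ^ 2)))
    rw [e1, HasDerivAt.deriv (f := fun t => f z ^ 2 * σ t + (f z ^ 2 * (μ ^ 2 / z ^ 2)) * (t ^ 4)⁻¹) hd1] at h1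
    have eq1 : z ^ 2 * (x ^ 5 * deriv σ x) = 4 * μ ^ 2 := by
      field_simp at h1
      have hM1 : (f z ^ 2 * x ^ 3) ≠ 0 := by
        have := hfpos z hz0; positivity
      have h1' : (f z ^ 2 * x ^ 3) * (z ^ 2 * (x ^ 5 * deriv σ x))
          = (f z ^ 2 * x ^ 3) * (4 * μ ^ 2) := by linear_combination h1
      exact mul_left_cancel₀ hM1 h1'
    have e2 : (fun w => F μ x w)
        = fun w => f w ^ 2 * σ x + (μ ^ 2 / x ^ 4) * (f w ^ 2 * (w ^ 2)⁻¹) := by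
      funext w; rw [hF]; simp only [div_eq_mul_inv, mul_inv]; ring
    have hd2 := ((((hdf z hz0).hasDerivAt).pow 2).mul_const (σ x)).add
        (((((hdf z hz0).hasDerivAt).pow 2).mul
          ((hasDerivAt_pow 2 z).inv (pow_ne_zero 2 hzne))).const_mul (μ ^ 2 / x ^ 4))
    rw [e2, HasDerivAt.deriv (f := fun w => f w ^ 2 * σ x + (μ ^ 2 / x ^ 4) * (f w ^ 2 * (w ^ 2)⁻¹)) hd2] at h2
    have eq2 : ν z ^ 2 * (4 * σ x + x * deriv σ x) = x * deriv σ x := by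
      rw [hν2 z hz0]
      simp only [Pi.inv_apply, Pi.pow_apply] at h2
      simp only [Nat.reduceSub, pow_one, Nat.cast_ofNat] at h2
      field_simp at h2 ⊢
      have hM : (2 * f z * z ^ 5 * x ^ 4) ≠ 0 := by
        have := hfpos z hz0; positivity
      have G' : (2 * f z * z ^ 5 * x ^ 4) * (z * deriv f z * (4 * σ x + x * deriv σ x))
          = (2 * f z * z ^ 5 * x ^ 4) * (x * deriv σ x * f z) := by
        linear_combination (4 * z ^ 3) * h2 + (2 * f z * z ^ 3 * (deriv f z * z - f z)) * eq1
      linear_combination mul_left_cancel₀ hM G'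
    exact ⟨eq1, eq2⟩
  -- the function Z
  set Zf : ℝ → ℝ := fun y => 2 * |μ| * (Real.sqrt (y ^ 5 * deriv σ y))⁻¹ with hZf
  have htpos : ∀ x : ℝ, 1 < x → 0 < x ^ 5 * deriv σ x := fun x hx =>
    mul_pos (pow_pos (by linarith) 5) (hM3 x hx).2
  have hZpos : ∀ x : ℝ, 1 < x → 0 < Zf x := by
    intro x hx
    exact mul_pos (mul_pos two_pos (abs_pos.mpr hμ))
      (inv_pos.mpr (Real.sqrt_pos.mpr (htpos x hx)))
  have hZsq : ∀ x : ℝ, 1 < x → Zf x ^ 2 * (x ^ 5 * deriv σ x) = 4 * μ ^ 2 := by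
    intro x hx
    have ht := htpos x hx
    have hs : Real.sqrt (x ^ 5 * deriv σ x) ^ 2 = x ^ 5 * deriv σ x := Real.sq_sqrt ht.le
    have h1 : Zf x ^ 2 = 4 * μ ^ 2 * (Real.sqrt (x ^ 5 * deriv σ x) ^ 2)⁻¹ := by
      rw [hZf]
      simp only [mul_pow, inv_pow, sq_abs]
      ring
    rw [h1, hs]
    field_simp
    exact div_self (ne_of_gt (hM3 x hx).2)
  have hzeq : ∀ x z : ℝ, 1 < x → 0 < z → z ^ 2 * (x ^ 5 * deriv σ x) = 4 * μ ^ 2 → z = Zf x := by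
    intro x z hx hz he
    have ht := htpos x hx
    have h2 : z ^ 2 = Zf x ^ 2 := by
      have h3 := hZsq x hx
      have h4 : z ^ 2 * (x ^ 5 * deriv σ x) = Zf x ^ 2 * (x ^ 5 * deriv σ x) := by rw [he, h3]
      exact mul_right_cancel₀ (ne_of_gt ht) h4
    calc z = Real.sqrt (z ^ 2) := (Real.sqrt_sq hz.le).symm
      _ = Real.sqrt (Zf x ^ 2) := by rw [h2]
      _ = Zf x := Real.sqrt_sq (hZpos x hx).le
  -- the monotone function
  set G : ℝ → ℝ := fun y =>
    2 * Real.log (ν (Zf y)) + Real.log (4 * σ y + y * deriv σ y) - Real.log (y * deriv σ y)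
    with hG
  have hder : ∀ x : ℝ, 1 < x → ∃ d : ℝ, HasDerivAt G d x ∧ 0 < d := by
    intro x hx1
    have hx0 : (0:ℝ) < x := by linarith
    have hxne : x ≠ 0 := ne_of_gt hx0
    have hs'p : 0 < deriv σ x := (hM3 x hx1).2
    have hSp : 0 < σ x := (hM3 x hx1).1
    have ht := htpos x hx1
    have htne : x ^ 5 * deriv σ x ≠ 0 := ne_of_gt ht
    have hrt : 0 < Real.sqrt (x ^ 5 * deriv σ x) := Real.sqrt_pos.mpr ht
    have hrtne : Real.sqrt (x ^ 5 * deriv σ x) ≠ 0 := ne_of_gt hrt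
    have hsq : Real.sqrt (x ^ 5 * deriv σ x) ^ 2 = x ^ 5 * deriv σ x := Real.sq_sqrt ht.le
    have hZp := hZpos x hx1
    have hνp : 0 < ν (Zf x) := (hF2 (Zf x) hZp).1
    have hνne : ν (Zf x) ≠ 0 := ne_of_gt hνp
    have hAp : 0 < x * deriv σ x := mul_pos hx0 hs'p
    have hBp : 0 < 4 * σ x + x * deriv σ x := by linarith
    have hu : HasDerivAt (fun y => y ^ 2 * deriv σ y) (deriv (fun y => y ^ 2 * deriv σ y) x) x :=
      ((differentiableAt_pow 2).mul (hds' x hx0)).hasDerivAt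
    set du := deriv (fun y => y ^ 2 * deriv σ y) x with hdu
    set r := Real.sqrt (x ^ 5 * deriv σ x) with hr
    have hs'eq : deriv σ x = r ^ 2 / x ^ 5 := by
      rw [hsq]; exact (mul_div_cancel_left₀ _ (pow_ne_zero 5 hxne)).symm
    have hZxval : Zf x = 2 * |μ| * r⁻¹ := by rw [hZf]
    have hνne' : ν (2 * |μ| * r⁻¹) ≠ 0 := by rw [← hZxval]; exact hνne
    have habs : |μ| ≠ 0 := ne_of_gt (abs_pos.mpr hμ)
    have hσ'' : HasDerivAt (deriv σ)
        ((du * x ^ 2 - x ^ 2 * deriv σ x * (↑2 * x ^ 1)) / (x ^ 2) ^ 2) x := by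
      have hdiv := hu.div (hasDerivAt_pow 2 x) (pow_ne_zero 2 hxne)
      apply hdiv.congr_of_eventuallyEq
      filter_upwards [eventually_ne_nhds hxne] with y hy
      exact (mul_div_cancel_left₀ _ (pow_ne_zero 2 hy)).symm
    have hq := (hasDerivAt_pow 5 x).mul hσ''
    have hsqrt := hq.sqrt htne
    have hinv := hsqrt.inv hrtne
    have hZd : HasDerivAt Zf _ x := hinv.const_mul (2 * |μ|)
    have hZd2 : HasDerivAt Zf (-(Zf x * (3 + du / (x * deriv σ x))) / (2 * x)) x := by
      convert hZd using 1
      simp only [Pi.mul_apply]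
      rw [← hr, hZxval, hs'eq]
      push_cast
      field_simp
      ring
    have hνd : HasDerivAt ν (deriv ν (Zf x)) (Zf x) := (hνdiff (Zf x) hZp).hasDerivAt
    have hcomp0 := HasDerivAt.comp x hνd hZd2
    have hcomp : HasDerivAt (fun y => ν (Zf y)) _ x := hcomp0
    have hlog1 := hcomp.log hνne
    have hlog1' := hlog1.const_mul (2:ℝ)
    have hA := (hasDerivAt_id x).mul hσ''
    have hB := (((hdσ x hx0).hasDerivAt).const_mul (4:ℝ)).add hA
    have hlogB := hB.log (ne_of_gt hBp)
    have hlogA := hA.log (ne_of_gt hAp)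
    have hs'ne : deriv σ x ≠ 0 := ne_of_gt hs'p
    have hBne : 4 * σ x + x * deriv σ x ≠ 0 := ne_of_gt hBp
    have hlog1T : HasDerivAt (fun y => 2 * Real.log (ν (Zf y)))
        (-(Zf x * deriv ν (Zf x) / ν (Zf x) * (3 + du / (x * deriv σ x))) / x) x := by
      refine hlog1'.congr_deriv ?_
      exact (by intros; ring : ∀ Z d v q x : ℝ, -(Z*d/v*(3+q))/x = 2*(d*(-(Z*(3+q))/(2*x))/v)) _ _ _ _ _ |>.symm
    have hlogBT : HasDerivAt (fun y => Real.log (4 * σ y + y * deriv σ y))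
        (x * deriv σ x / (4 * σ x + x * deriv σ x) * (3 + du / (x * deriv σ x)) / x) x := by
      convert hlogB using 1
      all_goals simp only [id, Pi.mul_apply, Pi.add_apply]
      push_cast
      field_simp [hxne, hrtne, hνne', habs, hs'ne, hBne]
      ring
    have hlogAT : HasDerivAt (fun y => Real.log (y * deriv σ y))
        ((du / (x * deriv σ x) - 1) / x) x := by
      convert hlogA using 1
      all_goals simp only [id, Pi.mul_apply, Pi.add_apply]
      push_cast
      field_simp [hxne, hrtne, hνne', habs, hs'ne, hBne]
      ring
    have htot : HasDerivAt G _ x := (hlog1T.add hlogBT).sub hlogAT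
    refine ⟨_, htot, ?_⟩
    have hgoal := keyIneq x (σ x) (x * deriv σ x) σ₁
      (Zf x * deriv ν (Zf x) / ν (Zf x)) (du / (x * deriv σ x)) hx1 hSp hAp hσ₁
      (hF3 (Zf x) hZp).1 (hF3 (Zf x) hZp).2 (hM4 x hx1).2
      (by have := hKey x hx1; nlinarith [this])
    convert hgoal using 1
    ring
  have hcont : ContinuousOn G (Set.Ioi 1) := fun x hx =>
    ((hder x hx).choose_spec.1.continuousAt).continuousWithinAt
  have hmono : StrictMonoOn G (Set.Ioi 1) := by
    apply strictMonoOn_of_deriv_pos (convex_Ioi 1) hcont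
    intro x hx
    rw [interior_Ioi] at hx
    obtain ⟨d, hd, hdp⟩ := hder x hx
    rw [hd.deriv]; exact hdp
  obtain ⟨eqA, eqB⟩ := key xc zc hxc hzc dX dZ
  obtain ⟨eqA', eqB'⟩ := key xc' zc' hxc' hzc' dX' dZ'
  have hz1 : zc = Zf xc := hzeq xc zc hxc hzc eqA
  have hz1' : zc' = Zf xc' := hzeq xc' zc' hxc' hzc' eqA'
  have hGzero : ∀ x z : ℝ, 1 < x → 0 < z → z = Zf x →
      ν z ^ 2 * (4 * σ x + x * deriv σ x) = x * deriv σ x → G x = 0 := by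
    intro x z hx hz hzZ heq
    have hνp : 0 < ν z := (hF2 z hz).1
    have hs'p : 0 < deriv σ x := (hM3 x hx).2
    have hSp : 0 < σ x := (hM3 x hx).1
    have hAp : 0 < x * deriv σ x := mul_pos (by linarith) hs'p
    have hBp : 0 < 4 * σ x + x * deriv σ x := by linarith
    have l1 : Real.log (ν z ^ 2 * (4 * σ x + x * deriv σ x)) = Real.log (x * deriv σ x) := by
      rw [heq]
    rw [Real.log_mul (by positivity) (ne_of_gt hBp), Real.log_pow] at l1
    rw [hG]
    simp only
    rw [← hzZ]
    push_cast at l1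
    linarith [l1]
  have hG0 : G xc = 0 := hGzero xc zc hxc hzc hz1 eqB
  have hG0' : G xc' = 0 := hGzero xc' zc' hxc' hzc' hz1' eqB'
  have hxx : xc = xc' := hmono.injOn (Set.mem_Ioi.mpr hxc) (Set.mem_Ioi.mpr hxc')
    (by rw [hG0, hG0'])
  exact ⟨hxx, by rw [hz1, hz1', hxx]⟩
end

section
/- At any critical point (x_c, z_c) ∈ (1,∞) × (0,∞) of F_μ (a point where both partial derivatives of F_μ vanish), the determinant of the Hessian matrix of F_μ is strictly negative; in particular, (x_c, z_c) is a saddle point of F_μ and the linearization of the Hamiltonian vector field (∂F_μ/∂z, −∂F_μ/∂x) at (x_c, z_c) has one strictly positive and one strictly negative real eigenvalue. -/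
open Real Filter Set Topology

lemma aux_diffAt {g : ℝ → ℝ} {x : ℝ} (h : ContDiffAt ℝ (⊤:ℕ∞) g x) :
    DifferentiableAt ℝ g x :=
  (contDiffAt_infty.mp h 1).differentiableAt (by norm_num)

lemma aux_deriv_diffAt {g : ℝ → ℝ} {x : ℝ} (h : ContDiffAt ℝ (⊤:ℕ∞) g x) :
    DifferentiableAt ℝ (deriv g) x := by
  have h2 : ContDiffAt ℝ 2 g x := contDiffAt_infty.mp h 2
  have h1 : ContDiffAt ℝ 1 (fderiv ℝ g) x := h2.fderiv_right (by norm_num)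
  have h3 : DifferentiableAt ℝ (fun y => fderiv ℝ g y 1) x :=
    (h1.differentiableAt (by norm_num)).clm_apply (differentiableAt_const _)
  have : (fun y => fderiv ℝ g y 1) = deriv g := by
    funext y; exact fderiv_apply_one_eq_deriv
  rwa [this] at h3

lemma aux_det (a b c d l : ℝ) :
    Matrix.det (!![a, b; c, d] - l • (1 : Matrix (Fin 2) (Fin 2) ℝ)) = (a-l)*(d-l) - b*c := by
  simp [Matrix.det_fin_two, Matrix.one_apply]

lemma aux_qs (x q s m : ℝ) (hx : 0 < x) (h : 2 * x * q * s < 4 * m * x) : q * s < 2 * m := by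
  nlinarith

lemma aux_nq (q A m n : ℝ) (hq : 0 < q) (hm : 0 < m) (hA : 0 < A)
    (hen : n * (A + m) = m) (h1 : q * A < 2 * m) : q < n * (q + 2) := by
  nlinarith

lemma aux_main (q r n η : ℝ) (hq0 : 0 < q) (hr1 : -3 < r) (hr2 : r * (8 + q) < 9 * q)
    (hη0 : 0 ≤ η) (hη2 : η ≤ 1 / 3) (hn2 : n < 1) (hnq : q < n * (q + 2)) :
    (r + 3) * (1 - n + η) < 4 := by
  have h8q : (0:ℝ) < 8 + q := by linarith
  have hr3 : (0:ℝ) < r + 3 := by linarith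
  have hnn : (0:ℝ) < 1 - n + η := by linarith
  have hA : (r + 3) * (8 + q) < 12 * q + 24 := by nlinarith
  have hB : (1 - n + η) * (3 * (q + 2)) < q + 8 := by nlinarith
  have hprod := mul_lt_mul'' hA hB (by positivity) (by positivity)
  nlinarith [hprod, mul_pos (mul_pos hr3 h8q) (mul_pos hnn (by linarith : (0:ℝ) < 3 * (q + 2)))]

lemma aux_scale (c X : ℝ) (hc : 0 < c) (h : X < 4) : 16 * c * X < 64 * c := by nlinarith

lemma aux_neg (U V P : ℝ) (hP : 0 < P) (h : U * P < V * P) : U - V < 0 := by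
  have := lt_of_mul_lt_mul_right h hP.le
  linarith

set_option maxHeartbeats 2000000 in
theorem stmt_2 (σ f ν : ℝ → ℝ) (σ₁ : ℝ)
    (hσsm : ∀ x > (0:ℝ), ContDiffAt ℝ (⊤ : ℕ∞) σ x)
    (hσ₁ : 0 < σ₁)
    (hM1a : Filter.Tendsto σ Filter.atTop (nhds 1))
    (hM1b : Filter.Tendsto (fun x => x ^ 2 * deriv σ x) Filter.atTop (nhds σ₁))
    (hM2a : σ 1 = 0)
    (hM2b : 0 < deriv σ 1)
    (hM3 : ∀ x > (1:ℝ), 0 < σ x ∧ 0 < deriv σ x)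
    (hM4 : ∀ x > (1:ℝ),
      -3 < deriv (fun y => y ^ 2 * deriv σ y) x / (x * deriv σ x) ∧
      deriv (fun y => y ^ 2 * deriv σ y) x / (x * deriv σ x)
        < σ₁ / (2 * x) * (9 / (8 + σ₁ / (2 * x))))
    (hfsm : ∀ z > (0:ℝ), ContDiffAt ℝ (⊤ : ℕ∞) f z)
    (hfpos : ∀ z > (0:ℝ), 0 < f z)
    (hν : ∀ z : ℝ, ν z = Real.sqrt (z * deriv f z / f z))
    (hF1 : Filter.Tendsto f (nhdsWithin 0 (Set.Ioi 0)) (nhds 1))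
    (hF2 : ∀ z > (0:ℝ), 0 < ν z ∧ ν z < 1)
    (hF3 : ∀ z > (0:ℝ), 0 ≤ z * deriv ν z / ν z ∧ z * deriv ν z / ν z ≤ 1 / 3)
    (F : ℝ → ℝ → ℝ → ℝ)
    (hF : ∀ μ x z : ℝ, F μ x z = f z ^ 2 * (σ x + μ ^ 2 / (x ^ 4 * z ^ 2)))
    (μ : ℝ) (hμ : μ ≠ 0)
    (xc zc : ℝ) (hxc : 1 < xc) (hzc : 0 < zc)
    (hcritx : deriv (fun x => F μ x zc) xc = 0)
    (hcritz : deriv (fun z => F μ xc z) zc = 0)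
    (Fxx Fzz Fxz Fzx : ℝ)
    (hFxx : Fxx = deriv (deriv (fun x => F μ x zc)) xc)
    (hFzz : Fzz = deriv (deriv (fun z => F μ xc z)) zc)
    (hFxz : Fxz = deriv (fun z => deriv (fun x => F μ x z) xc) zc)
    (hFzx : Fzx = deriv (fun x => deriv (fun z => F μ x z) zc) xc) :
    Fxx * Fzz - Fxz * Fzx < 0 ∧
    ∃ lp lm : ℝ, 0 < lp ∧ lm < 0 ∧
      Matrix.det (!![Fzx, Fzz; -Fxx, -Fxz] - lp • (1 : Matrix (Fin 2) (Fin 2) ℝ)) = 0 ∧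
      Matrix.det (!![Fzx, Fzz; -Fxx, -Fxz] - lm • (1 : Matrix (Fin 2) (Fin 2) ℝ)) = 0 := by
  have hxc0 : (0:ℝ) < xc := lt_trans one_pos hxc
  have hxne : xc ≠ 0 := ne_of_gt hxc0
  have hzne : zc ≠ 0 := ne_of_gt hzc
  have hfzpos : 0 < f zc := hfpos zc hzc
  have hfzne : f zc ≠ 0 := ne_of_gt hfzpos
  have hσd : ∀ x > (0:ℝ), DifferentiableAt ℝ σ x := fun x hx => aux_diffAt (hσsm x hx)
  have hfd : ∀ z > (0:ℝ), DifferentiableAt ℝ f z := fun z hz => aux_diffAt (hfsm z hz)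
  have hσd2 : ∀ x > (0:ℝ), DifferentiableAt ℝ (deriv σ) x :=
    fun x hx => aux_deriv_diffAt (hσsm x hx)
  have hfd2 : DifferentiableAt ℝ (deriv f) zc := aux_deriv_diffAt (hfsm zc hzc)
  -- first x-derivative
  have hDx : ∀ z : ℝ, z ≠ 0 → ∀ x : ℝ, 0 < x →
      HasDerivAt (fun x => F μ x z)
        (f z ^ 2 * (deriv σ x - 4 * μ ^ 2 * (x ^ 5 * z ^ 2)⁻¹)) x := by
    intro z hz x hx
    have hbase : HasDerivAt (fun x : ℝ => x ^ 4 * z ^ 2) (4 * x ^ 3 * z ^ 2) x := by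
      simpa using (hasDerivAt_pow 4 x).mul_const (z ^ 2)
    have hne : x ^ 4 * z ^ 2 ≠ 0 := by positivity
    have hmain := (((hσd x hx).hasDerivAt).add
      ((hbase.inv hne).const_mul (μ ^ 2))).const_mul (f z ^ 2)
    have hfun : (fun x => F μ x z) = fun x => f z ^ 2 * (σ x + μ ^ 2 * (x ^ 4 * z ^ 2)⁻¹) := by
      funext y; rw [hF]; ring
    rw [hfun]
    refine HasDerivAt.congr_deriv hmain ?_
    have hx5 : x ^ 5 * z ^ 2 ≠ 0 := by positivity
    field_simp
    ring
  -- first z-derivative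
  have hDz : ∀ x : ℝ, 0 < x → ∀ z : ℝ, 0 < z →
      HasDerivAt (fun z => F μ x z)
        (2 * f z * deriv f z * (σ x + μ ^ 2 * (x ^ 4 * z ^ 2)⁻¹)
          - 2 * f z ^ 2 * μ ^ 2 * (x ^ 4 * z ^ 3)⁻¹) z := by
    intro x hx z hz
    have hbase : HasDerivAt (fun z : ℝ => x ^ 4 * z ^ 2) (x ^ 4 * (2 * z)) z := by
      simpa using ((hasDerivAt_pow 2 z).const_mul (x ^ 4))
    have hne : x ^ 4 * z ^ 2 ≠ 0 := by positivity
    have hG : HasDerivAt (fun z : ℝ => σ x + μ ^ 2 * (x ^ 4 * z ^ 2)⁻¹)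
        (μ ^ 2 * (-(x ^ 4 * (2 * z)) / (x ^ 4 * z ^ 2) ^ 2)) z :=
      ((hbase.inv hne).const_mul (μ ^ 2)).const_add (σ x)
    have hsq : HasDerivAt (fun z => f z ^ 2) (2 * f z * deriv f z) z := by
      have := ((hfd z hz).hasDerivAt).fun_pow 2
      simpa [mul_comm, mul_assoc] using this
    have hmain := hsq.mul hG
    have hfun : (fun z => F μ x z) = fun z => f z ^ 2 * (σ x + μ ^ 2 * (x ^ 4 * z ^ 2)⁻¹) := by
      funext y; rw [hF]; ring
    rw [hfun]
    refine HasDerivAt.congr_deriv hmain ?_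
    have h3 : x ^ 4 * z ^ 3 ≠ 0 := by positivity
    field_simp
    ring
  -- critical point conditions (raw)
  have hcxraw : f zc ^ 2 * (deriv σ xc - 4 * μ ^ 2 * (xc ^ 5 * zc ^ 2)⁻¹) = 0 := by
    rw [← (hDx zc hzne xc hxc0).deriv, hcritx]
  have hczraw : 2 * f zc * deriv f zc * (σ xc + μ ^ 2 * (xc ^ 4 * zc ^ 2)⁻¹)
      - 2 * f zc ^ 2 * μ ^ 2 * (xc ^ 4 * zc ^ 3)⁻¹ = 0 := by
    rw [← (hDz xc hxc0 zc hzc).deriv, hcritz]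
  -- second derivatives
  have hσ2 := (hσd2 xc hxc0).hasDerivAt
  have hVxx : HasDerivAt (fun x => f zc ^ 2 * (deriv σ x - 4 * μ ^ 2 * (x ^ 5 * zc ^ 2)⁻¹))
      (f zc ^ 2 * (deriv (deriv σ) xc + 20 * μ ^ 2 * (xc ^ 6 * zc ^ 2)⁻¹)) xc := by
    have hbase : HasDerivAt (fun x : ℝ => x ^ 5 * zc ^ 2) (5 * xc ^ 4 * zc ^ 2) xc := by
      simpa using (hasDerivAt_pow 5 xc).mul_const (zc ^ 2)
    have hne : xc ^ 5 * zc ^ 2 ≠ 0 := by positivity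
    have h := (hσ2.sub ((hbase.inv hne).const_mul (4 * μ ^ 2))).const_mul (f zc ^ 2)
    refine HasDerivAt.congr_deriv h ?_
    have h6 : xc ^ 6 * zc ^ 2 ≠ 0 := by positivity
    field_simp
    ring
  have hFxxe : Fxx = f zc ^ 2 * (deriv (deriv σ) xc + 20 * μ ^ 2 * (xc ^ 6 * zc ^ 2)⁻¹) := by
    rw [hFxx]
    have hev : deriv (fun x => F μ x zc) =ᶠ[𝓝 xc]
        (fun x => f zc ^ 2 * (deriv σ x - 4 * μ ^ 2 * (x ^ 5 * zc ^ 2)⁻¹)) :=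
      Filter.eventuallyEq_of_mem (Ioi_mem_nhds hxc0) fun x hx => (hDx zc hzne x hx).deriv
    rw [hev.deriv_eq, hVxx.deriv]
  have hf1 := (hfd zc hzc).hasDerivAt
  have hf2 := hfd2.hasDerivAt
  have hsqz : HasDerivAt (fun z => f z ^ 2) (2 * f zc * deriv f zc) zc := by
    have := ((hfd zc hzc).hasDerivAt).fun_pow 2
    simpa [mul_comm, mul_assoc] using this
  have hVzz : HasDerivAt (fun z => 2 * f z * deriv f z * (σ xc + μ ^ 2 * (xc ^ 4 * z ^ 2)⁻¹)
        - 2 * f z ^ 2 * μ ^ 2 * (xc ^ 4 * z ^ 3)⁻¹)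
      ((2 * deriv f zc ^ 2 + 2 * f zc * deriv (deriv f) zc)
          * (σ xc + μ ^ 2 * (xc ^ 4 * zc ^ 2)⁻¹)
        - 8 * f zc * deriv f zc * μ ^ 2 * (xc ^ 4 * zc ^ 3)⁻¹
        + 6 * f zc ^ 2 * μ ^ 2 * (xc ^ 4 * zc ^ 4)⁻¹) zc := by
    have hb2 : HasDerivAt (fun z : ℝ => xc ^ 4 * z ^ 2) (xc ^ 4 * (2 * zc)) zc := by
      simpa using ((hasDerivAt_pow 2 zc).const_mul (xc ^ 4))
    have hne2 : xc ^ 4 * zc ^ 2 ≠ 0 := by positivity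
    have hG : HasDerivAt (fun z : ℝ => σ xc + μ ^ 2 * (xc ^ 4 * z ^ 2)⁻¹)
        (μ ^ 2 * (-(xc ^ 4 * (2 * zc)) / (xc ^ 4 * zc ^ 2) ^ 2)) zc :=
      ((hb2.inv hne2).const_mul (μ ^ 2)).const_add (σ xc)
    have hT1 : HasDerivAt (fun z => 2 * (f z * deriv f z))
        (2 * (deriv f zc * deriv f zc + f zc * deriv (deriv f) zc)) zc :=
      (hf1.mul hf2).const_mul 2
    have hb3 : HasDerivAt (fun z : ℝ => xc ^ 4 * z ^ 3) (xc ^ 4 * (3 * zc ^ 2)) zc := by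
      simpa using ((hasDerivAt_pow 3 zc).const_mul (xc ^ 4))
    have hne3 : xc ^ 4 * zc ^ 3 ≠ 0 := by positivity
    have hT2 : HasDerivAt (fun z => f z ^ 2 * (2 * μ ^ 2 * (xc ^ 4 * z ^ 3)⁻¹))
        (2 * f zc * deriv f zc * (2 * μ ^ 2 * (xc ^ 4 * zc ^ 3)⁻¹)
          + f zc ^ 2 * (2 * μ ^ 2 * (-(xc ^ 4 * (3 * zc ^ 2)) / (xc ^ 4 * zc ^ 3) ^ 2))) zc :=
      hsqz.mul ((hb3.inv hne3).const_mul (2 * μ ^ 2))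
    have h := (hT1.mul hG).sub hT2
    have hfun : (fun z => 2 * f z * deriv f z * (σ xc + μ ^ 2 * (xc ^ 4 * z ^ 2)⁻¹)
        - 2 * f z ^ 2 * μ ^ 2 * (xc ^ 4 * z ^ 3)⁻¹)
        = (fun z => 2 * (f z * deriv f z) * (σ xc + μ ^ 2 * (xc ^ 4 * z ^ 2)⁻¹)
          - f z ^ 2 * (2 * μ ^ 2 * (xc ^ 4 * z ^ 3)⁻¹)) := by
      funext y; ring
    rw [hfun]
    refine HasDerivAt.congr_deriv h ?_
    have h4 : xc ^ 4 * zc ^ 4 ≠ 0 := by positivity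
    field_simp
    ring
  have hFzze : Fzz = (2 * deriv f zc ^ 2 + 2 * f zc * deriv (deriv f) zc)
          * (σ xc + μ ^ 2 * (xc ^ 4 * zc ^ 2)⁻¹)
        - 8 * f zc * deriv f zc * μ ^ 2 * (xc ^ 4 * zc ^ 3)⁻¹
        + 6 * f zc ^ 2 * μ ^ 2 * (xc ^ 4 * zc ^ 4)⁻¹ := by
    rw [hFzz]
    have hev : deriv (fun z => F μ xc z) =ᶠ[𝓝 zc]
        (fun z => 2 * f z * deriv f z * (σ xc + μ ^ 2 * (xc ^ 4 * z ^ 2)⁻¹)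
          - 2 * f z ^ 2 * μ ^ 2 * (xc ^ 4 * z ^ 3)⁻¹) :=
      Filter.eventuallyEq_of_mem (Ioi_mem_nhds hzc) fun z hz => (hDz xc hxc0 z hz).deriv
    rw [hev.deriv_eq, hVzz.deriv]
  -- mixed derivative Fxz
  have hVxz : HasDerivAt (fun z => f z ^ 2 * (deriv σ xc - 4 * μ ^ 2 * (xc ^ 5 * z ^ 2)⁻¹))
      (2 * f zc * deriv f zc * (deriv σ xc - 4 * μ ^ 2 * (xc ^ 5 * zc ^ 2)⁻¹)
        + 8 * f zc ^ 2 * μ ^ 2 * (xc ^ 5 * zc ^ 3)⁻¹) zc := by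
    have hb : HasDerivAt (fun z : ℝ => xc ^ 5 * z ^ 2) (xc ^ 5 * (2 * zc)) zc := by
      simpa using ((hasDerivAt_pow 2 zc).const_mul (xc ^ 5))
    have hne : xc ^ 5 * zc ^ 2 ≠ 0 := by positivity
    have h := hsqz.mul (((hb.inv hne).const_mul (4 * μ ^ 2)).const_sub (deriv σ xc))
    refine HasDerivAt.congr_deriv h ?_
    have h3 : xc ^ 5 * zc ^ 3 ≠ 0 := by positivity
    simp only [Pi.inv_apply]
    field_simp
    ring
  have hFxze : Fxz = 2 * f zc * deriv f zc * (deriv σ xc - 4 * μ ^ 2 * (xc ^ 5 * zc ^ 2)⁻¹)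
      + 8 * f zc ^ 2 * μ ^ 2 * (xc ^ 5 * zc ^ 3)⁻¹ := by
    rw [hFxz]
    have hev : (fun z => deriv (fun x => F μ x z) xc) =ᶠ[𝓝 zc]
        (fun z => f z ^ 2 * (deriv σ xc - 4 * μ ^ 2 * (xc ^ 5 * z ^ 2)⁻¹)) :=
      Filter.eventuallyEq_of_mem (Ioi_mem_nhds hzc)
        fun z hz => (hDx z (ne_of_gt hz) xc hxc0).deriv
    rw [hev.deriv_eq, hVxz.deriv]
  -- mixed derivative Fzx
  have hVzx : HasDerivAt (fun x => 2 * f zc * deriv f zc * (σ x + μ ^ 2 * (x ^ 4 * zc ^ 2)⁻¹)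
        - 2 * f zc ^ 2 * μ ^ 2 * (x ^ 4 * zc ^ 3)⁻¹)
      (2 * f zc * deriv f zc * (deriv σ xc - 4 * μ ^ 2 * (xc ^ 5 * zc ^ 2)⁻¹)
        + 8 * f zc ^ 2 * μ ^ 2 * (xc ^ 5 * zc ^ 3)⁻¹) xc := by
    have hb4 : HasDerivAt (fun x : ℝ => x ^ 4 * zc ^ 2) (4 * xc ^ 3 * zc ^ 2) xc := by
      simpa using (hasDerivAt_pow 4 xc).mul_const (zc ^ 2)
    have hne4 : xc ^ 4 * zc ^ 2 ≠ 0 := by positivity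
    have hb43 : HasDerivAt (fun x : ℝ => x ^ 4 * zc ^ 3) (4 * xc ^ 3 * zc ^ 3) xc := by
      simpa using (hasDerivAt_pow 4 xc).mul_const (zc ^ 3)
    have hne43 : xc ^ 4 * zc ^ 3 ≠ 0 := by positivity
    have h := ((((hσd xc hxc0).hasDerivAt).add
        ((hb4.inv hne4).const_mul (μ ^ 2))).const_mul (2 * f zc * deriv f zc)).sub
      ((hb43.inv hne43).const_mul (2 * f zc ^ 2 * μ ^ 2))
    refine HasDerivAt.congr_deriv h ?_
    have h5 : xc ^ 5 * zc ^ 2 ≠ 0 := by positivity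
    have h53 : xc ^ 5 * zc ^ 3 ≠ 0 := by positivity
    field_simp
    ring
  have hFzxe : Fzx = 2 * f zc * deriv f zc * (deriv σ xc - 4 * μ ^ 2 * (xc ^ 5 * zc ^ 2)⁻¹)
      + 8 * f zc ^ 2 * μ ^ 2 * (xc ^ 5 * zc ^ 3)⁻¹ := by
    rw [hFzx]
    have hev : (fun x => deriv (fun z => F μ x z) zc) =ᶠ[𝓝 xc]
        (fun x => 2 * f zc * deriv f zc * (σ x + μ ^ 2 * (x ^ 4 * zc ^ 2)⁻¹)
          - 2 * f zc ^ 2 * μ ^ 2 * (x ^ 4 * zc ^ 3)⁻¹) :=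
      Filter.eventuallyEq_of_mem (Ioi_mem_nhds hxc0) fun x hx => (hDz x hx zc hzc).deriv
    rw [hev.deriv_eq, hVzx.deriv]
  have hsym : Fxz = Fzx := by rw [hFxze, hFzxe]
  -- derivative of y^2 * deriv sigma y
  have hyd : ∀ x : ℝ, 0 < x → HasDerivAt (fun y => y ^ 2 * deriv σ y)
      (2 * x * deriv σ x + x ^ 2 * deriv (deriv σ) x) x := by
    intro x hx
    have h := (hasDerivAt_pow 2 x).mul (hσd2 x hx).hasDerivAt
    refine HasDerivAt.congr_deriv h ?_
    ring
  -- key positivity: sigma1 * sigma xc < xc^2 * deriv sigma xc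
  have hkey : σ₁ * σ xc < xc ^ 2 * deriv σ xc := by
    have hPd : ∀ x : ℝ, 1 < x → HasDerivAt (fun y => y ^ 2 * deriv σ y - σ₁ * σ y)
        (2 * x * deriv σ x + x ^ 2 * deriv (deriv σ) x - σ₁ * deriv σ x) x := by
      intro x hx
      exact (hyd x (by linarith)).sub (((hσd x (by linarith)).hasDerivAt).const_mul σ₁)
    have hDneg : ∀ x : ℝ, 1 < x →
        2 * x * deriv σ x + x ^ 2 * deriv (deriv σ) x - σ₁ * deriv σ x < 0 := by
      intro x hx
      have hx0 : (0:ℝ) < x := by linarith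
      have hσx := (hM3 x hx).2
      have hxσ : 0 < x * deriv σ x := mul_pos hx0 hσx
      have h2 := (hM4 x hx).2
      rw [div_lt_iff₀ hxσ] at h2
      rw [(hyd x hx0).deriv] at h2
      have hq0 : 0 < σ₁ / (2 * x) := by positivity
      have h8 : (0:ℝ) < 8 + σ₁ / (2 * x) := by positivity
      have hbnd : σ₁ / (2 * x) * (9 / (8 + σ₁ / (2 * x))) ≤ σ₁ / x := by
        rw [show σ₁ / (2 * x) * (9 / (8 + σ₁ / (2 * x)))
            = 9 * (σ₁ / (2 * x)) / (8 + σ₁ / (2 * x)) by ring, div_le_iff₀ h8]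
        have hx2 : σ₁ / x = 2 * (σ₁ / (2 * x)) := by field_simp
        rw [hx2]
        nlinarith [hq0, sq_nonneg (σ₁ / (2 * x))]
      have hfin : σ₁ / (2 * x) * (9 / (8 + σ₁ / (2 * x))) * (x * deriv σ x)
          ≤ σ₁ / x * (x * deriv σ x) := mul_le_mul_of_nonneg_right hbnd hxσ.le
      have heq : σ₁ / x * (x * deriv σ x) = σ₁ * deriv σ x := by
        field_simp
      rw [heq] at hfin
      linarith
    have hcont : ContinuousOn (fun y => y ^ 2 * deriv σ y - σ₁ * σ y) (Ici (1:ℝ)) := by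
      intro x hx
      have hx0 : (0:ℝ) < x := lt_of_lt_of_le one_pos hx
      have hdiff : DifferentiableAt ℝ (fun y => y ^ 2 * deriv σ y - σ₁ * σ y) x :=
        (((differentiable_pow 2).differentiableAt).mul (hσd2 x hx0)).sub
          ((hσd x hx0).const_mul σ₁)
      exact hdiff.continuousAt.continuousWithinAt
    have hanti : StrictAntiOn (fun y => y ^ 2 * deriv σ y - σ₁ * σ y) (Ici (1:ℝ)) := by
      apply strictAntiOn_of_deriv_neg (convex_Ici 1) hcont
      intro x hx
      rw [interior_Ici] at hx
      rw [(hPd x hx).deriv]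
      exact hDneg x hx
    have hlim : Tendsto (fun y => y ^ 2 * deriv σ y - σ₁ * σ y) atTop (𝓝 0) := by
      have h := hM1b.sub (hM1a.const_mul σ₁)
      simpa using h
    have hge : (0:ℝ) ≤ (xc + 1) ^ 2 * deriv σ (xc + 1) - σ₁ * σ (xc + 1) := by
      apply le_of_tendsto hlim
      filter_upwards [eventually_ge_atTop (xc + 1)] with y hy
      rcases eq_or_lt_of_le hy with h | h
      · rw [← h]
      · exact (hanti (mem_Ici.mpr (by linarith)) (mem_Ici.mpr (by linarith)) h).le
    have hlt := hanti (mem_Ici.mpr hxc.le) (mem_Ici.mpr (by linarith)) (lt_add_one xc)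
    simp only at hlt
    linarith
  -- nu facts
  have hn0 : 0 < zc * deriv f zc / f zc := by
    have h := (hF2 zc hzc).1
    rw [hν zc] at h
    exact Real.sqrt_pos.mp h
  have hnlt1 : zc * deriv f zc / f zc < 1 := by
    have h := (hF2 zc hzc).2
    rw [hν zc] at h
    nlinarith [Real.sq_sqrt hn0.le, Real.sqrt_nonneg (zc * deriv f zc / f zc)]
  have hu : HasDerivAt (fun z => z * deriv f z / f z)
      (((1 * deriv f zc + zc * deriv (deriv f) zc) * f zc
        - zc * deriv f zc * deriv f zc) / f zc ^ 2) zc :=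
    ((hasDerivAt_id zc).mul hf2).div hf1 hfzne
  have hνfun : ν = fun z => Real.sqrt (z * deriv f z / f z) := funext hν
  have hνd : HasDerivAt ν
      ((((1 * deriv f zc + zc * deriv (deriv f) zc) * f zc - zc * deriv f zc * deriv f zc)
          / f zc ^ 2)
        / (2 * Real.sqrt (zc * deriv f zc / f zc))) zc := by
    rw [hνfun]
    exact hu.sqrt (ne_of_gt hn0)
  have hη := hF3 zc hzc
  have hM4c := hM4 xc hxc
  obtain ⟨m, hmdef⟩ : ∃ m' : ℝ, m' = μ ^ 2 / (xc ^ 4 * zc ^ 2) := ⟨_, rfl⟩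
  obtain ⟨n, hndef⟩ : ∃ n' : ℝ, n' = zc * deriv f zc / f zc := ⟨_, rfl⟩
  obtain ⟨η, hηdef⟩ : ∃ e' : ℝ, e' = zc * deriv ν zc / ν zc := ⟨_, rfl⟩
  obtain ⟨q, hqdef⟩ : ∃ q' : ℝ, q' = σ₁ / (2 * xc) := ⟨_, rfl⟩
  obtain ⟨r, hrdef⟩ : ∃ r' : ℝ, r' = deriv (fun y => y ^ 2 * deriv σ y) xc / (xc * deriv σ xc) := ⟨_, rfl⟩
  rw [← hndef] at hn0 hnlt1 hνd
  rw [← hηdef] at hη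
  rw [← hqdef, ← hrdef] at hM4c
  have hm0 : 0 < m := by rw [hmdef]; positivity
  have hmμ : μ ^ 2 = m * (xc ^ 4 * zc ^ 2) := by rw [hmdef]; field_simp
  have hq0 : 0 < q := by rw [hqdef]; positivity
  have hnne : n ≠ 0 := ne_of_gt hn0
  have hf1e : deriv f zc = n * f zc / zc := by rw [hndef]; field_simp
  -- critical point conditions
  have hcx : deriv σ xc = 4 * m / xc := by
    have h : deriv σ xc - 4 * μ ^ 2 * (xc ^ 5 * zc ^ 2)⁻¹ = 0 := by
      rcases mul_eq_zero.mp hcxraw with h | h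
      · exact absurd h (pow_ne_zero 2 hfzne)
      · exact h
    have h' : deriv σ xc = 4 * μ ^ 2 * (xc ^ 5 * zc ^ 2)⁻¹ := by linarith
    rw [h', hmμ]
    field_simp
  have he_n : n * (σ xc + m) = m := by
    have h := hczraw
    rw [hmμ, hf1e] at h
    field_simp at h
    have hfac : (2 * f zc ^ 2 * xc ^ 4 * zc ^ 3) * (n * (σ xc + m) - m) = 0 := by
      linear_combination xc ^ 4 * zc ^ 3 * h
    have hcne : (2 * f zc ^ 2 * xc ^ 4 * zc ^ 3) ≠ 0 := by positivity
    have h2 := (mul_eq_zero.mp hfac).resolve_left hcne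
    linarith
  have he_g2 : zc ^ 2 * deriv (deriv f) zc * f zc = f zc ^ 2 * (2 * n * η - n + n ^ 2) := by
    have hd := hνd.deriv
    have hsn : Real.sqrt n ≠ 0 := ne_of_gt (Real.sqrt_pos.mpr hn0)
    have hsq : Real.sqrt n * Real.sqrt n = n := Real.mul_self_sqrt hn0.le
    have h : η = zc * ((((1 * deriv f zc + zc * deriv (deriv f) zc) * f zc
        - zc * deriv f zc * deriv f zc) / f zc ^ 2) / (2 * Real.sqrt n)) / Real.sqrt n := by
      rw [hηdef, hd, hν zc, ← hndef]
    rw [hf1e] at h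
    field_simp at h
    have hfac : zc * (zc ^ 2 * deriv (deriv f) zc * f zc)
        = zc * (f zc ^ 2 * (2 * n * η - n + n ^ 2)) := by
      linear_combination 2 * η * zc * f zc ^ 2 * hsq - zc * f zc * h
    exact mul_left_cancel₀ hzne hfac
  have hs2e : deriv (deriv σ) xc = 4 * m * (r - 2) / xc ^ 2 := by
    have h : r * (xc * deriv σ xc) = 2 * xc * deriv σ xc + xc ^ 2 * deriv (deriv σ) xc := by
      rw [hrdef, (hyd xc hxc0).deriv, div_mul_cancel₀]
      exact mul_ne_zero hxne (ne_of_gt (hM3 xc hxc).2)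
    rw [hcx] at h
    field_simp at h ⊢
    have hfac : xc * (deriv (deriv σ) xc * xc ^ 2) = xc * (4 * m * (r - 2)) := by
      linear_combination -xc * h
    exact mul_left_cancel₀ hxne (by linear_combination hfac)
  -- Hessian entries
  have hFxxv : Fxx * xc ^ 2 = 4 * f zc ^ 2 * m * (r + 3) := by
    rw [hFxxe, hs2e, hmμ]; field_simp; ring
  have hFxzv : Fxz * (xc * zc) = 8 * f zc ^ 2 * m := by
    rw [hFxze, hcx, hmμ]; field_simp; ring
  have hFzxv : Fzx * (xc * zc) = 8 * f zc ^ 2 * m := by rw [← hsym]; exact hFxzv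
  have hσe : σ xc = m / n - m := by
    field_simp
    linear_combination he_n
  have hg2e : deriv (deriv f) zc = f zc * (2 * n * η - n + n ^ 2) / zc ^ 2 := by
    have hfac : f zc * (deriv (deriv f) zc * zc ^ 2)
        = f zc * (f zc * (2 * n * η - n + n ^ 2)) := by linear_combination he_g2
    rw [eq_div_iff (pow_ne_zero 2 hzne)]
    exact mul_left_cancel₀ hfzne hfac
  have hFzzv : Fzz * zc ^ 2 = 4 * f zc ^ 2 * m * (1 - n + η) := by
    rw [hFzze, hg2e, hf1e, hσe, hmμ]
    field_simp
    ring
  -- main inequality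
  have hσpos := (hM3 xc hxc).1
  have hnq : q < n * (q + 2) := by
    have h1 : σ₁ * σ xc < 4 * m * xc := by
      rw [hcx] at hkey
      have heq : xc ^ 2 * (4 * m / xc) = 4 * m * xc := by field_simp
      rw [heq] at hkey
      exact hkey
    have hσ₁q : σ₁ = 2 * xc * q := by rw [hqdef]; field_simp
    rw [hσ₁q] at h1
    exact aux_nq q (σ xc) m n hq0 hm0 hσpos he_n (aux_qs xc q (σ xc) m hxc0 h1)
  have h8q : (0:ℝ) < 8 + q := by linarith
  have hr2 : r * (8 + q) < 9 * q := by
    have h := hM4c.2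
    rw [show q * (9 / (8 + q)) = 9 * q / (8 + q) by ring, lt_div_iff₀ h8q] at h
    exact h
  have hmain : (r + 3) * (1 - n + η) < 4 :=
    aux_main q r n η hq0 hM4c.1 hr2 hη.1 hη.2 hnlt1 hnq
  have hdet : Fxx * Fzz - Fxz * Fzx < 0 := by
    have e1 : Fxx * Fzz * (xc ^ 2 * zc ^ 2)
        = 16 * (f zc ^ 4 * m ^ 2) * ((r + 3) * (1 - n + η)) := by
      calc Fxx * Fzz * (xc ^ 2 * zc ^ 2) = (Fxx * xc ^ 2) * (Fzz * zc ^ 2) := by ring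
        _ = _ := by rw [hFxxv, hFzzv]; ring
    have e2 : Fxz * Fzx * (xc ^ 2 * zc ^ 2) = 64 * (f zc ^ 4 * m ^ 2) := by
      calc Fxz * Fzx * (xc ^ 2 * zc ^ 2) = (Fxz * (xc * zc)) * (Fzx * (xc * zc)) := by ring
        _ = _ := by rw [hFxzv, hFzxv]; ring
    have h3 : Fxx * Fzz * (xc ^ 2 * zc ^ 2) < Fxz * Fzx * (xc ^ 2 * zc ^ 2) := by
      rw [e1, e2]
      exact aux_scale (f zc ^ 4 * m ^ 2) ((r + 3) * (1 - n + η)) (by positivity) hmain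
    exact aux_neg (Fxx * Fzz) (Fxz * Fzx) (xc ^ 2 * zc ^ 2) (by positivity) h3
  have hD0 : 0 < Fxz * Fzx - Fxx * Fzz := by linarith
  refine ⟨hdet, Real.sqrt (Fxz * Fzx - Fxx * Fzz), -Real.sqrt (Fxz * Fzx - Fxx * Fzz),
    Real.sqrt_pos.mpr hD0, by simp [Real.sqrt_pos.mpr hD0], ?_, ?_⟩
  · rw [aux_det]
    have hsq := Real.sq_sqrt hD0.le
    linear_combination hsq + Real.sqrt (Fxz * Fzx - Fxx * Fzz) * hsym
  · rw [aux_det]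
    have hsq := Real.sq_sqrt hD0.le
    linear_combination hsq - Real.sqrt (Fxz * Fzx - Fxx * Fzz) * hsym
end

section
/- The function a(x) := σ(x)/(x σ'(x)), defined for x ≥ 1, is monotonically increasing, satisfies a(1) = 0 and lim_{x→∞} a(x)/x = 1/σ₁, and for all x > 1 the inequalities 0 < a(x) < x/σ₁ and (4a(x)+1)²/(16a(x)+1) < x a'(x) < 1 + 4a(x) hold. -/
open Real Filter Set Topology

lemma aux_smooth_deriv {f : ℝ → ℝ} {x : ℝ} (h : ContDiffAt ℝ (⊤ : ℕ∞) f x) :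
    DifferentiableAt ℝ f x ∧ DifferentiableAt ℝ (deriv f) x ∧ ContinuousAt (deriv f) x := by
  obtain ⟨u, hu, hcd⟩ := h.contDiffOn (m := 3) (by norm_cast) (by simp)
  obtain ⟨t, hts, ht, hxt⟩ := mem_nhds_iff.mp hu
  have hcd' : ContDiffOn ℝ 3 f t := hcd.mono hts
  have hd : ContDiffOn ℝ 2 (deriv f) t := hcd'.deriv_of_isOpen ht (by norm_num)
  have hdx : ContDiffAt ℝ 2 (deriv f) x := (hd.contDiffAt (ht.mem_nhds hxt))
  exact ⟨h.differentiableAt (by norm_cast), hdx.differentiableAt (by norm_num), hdx.continuousAt⟩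

theorem stmt_6 (σ : ℝ → ℝ) (σ₁ : ℝ)
    (hσsm : ∀ x > (0:ℝ), ContDiffAt ℝ (⊤ : ℕ∞) σ x)
    (hσ₁ : 0 < σ₁)
    (hM1a : Filter.Tendsto σ Filter.atTop (nhds 1))
    (hM1b : Filter.Tendsto (fun x => x ^ 2 * deriv σ x) Filter.atTop (nhds σ₁))
    (hM2a : σ 1 = 0)
    (hM2b : 0 < deriv σ 1)
    (hM3 : ∀ x > (1:ℝ), 0 < σ x ∧ 0 < deriv σ x)
    (hM4 : ∀ x > (1:ℝ),
      -3 < deriv (fun y => y ^ 2 * deriv σ y) x / (x * deriv σ x) ∧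
      deriv (fun y => y ^ 2 * deriv σ y) x / (x * deriv σ x)
        < σ₁ / (2 * x) * (9 / (8 + σ₁ / (2 * x))))
    (a : ℝ → ℝ) (ha : ∀ x : ℝ, a x = σ x / (x * deriv σ x)) :
    MonotoneOn a (Set.Ici 1) ∧
    a 1 = 0 ∧
    Filter.Tendsto (fun x => a x / x) Filter.atTop (nhds (1 / σ₁)) ∧
    ∀ x > (1:ℝ),
      0 < a x ∧ a x < x / σ₁ ∧
      (4 * a x + 1) ^ 2 / (16 * a x + 1) < x * deriv a x ∧
      x * deriv a x < 1 + 4 * a x := by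
  have haf : a = fun y => σ y / (y * deriv σ y) := funext ha
  have hfacts : ∀ x : ℝ, 0 < x → DifferentiableAt ℝ σ x ∧ DifferentiableAt ℝ (deriv σ) x
      ∧ ContinuousAt (deriv σ) x := fun x hx => aux_smooth_deriv (hσsm x hx)
  have hden : ∀ x : ℝ, 1 ≤ x → 0 < x * deriv σ x := by
    intro x hx
    rcases eq_or_lt_of_le hx with h | h
    · rw [← h]; simpa using hM2b
    · exact mul_pos (by linarith) (hM3 x h).2
  -- continuity of a on Ici 1
  have hconta : ∀ x ∈ Ici (1:ℝ), ContinuousAt a x := by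
    intro x hx
    have hx0 : (0:ℝ) < x := lt_of_lt_of_le one_pos hx
    obtain ⟨h1, h2, h3⟩ := hfacts x hx0
    rw [haf]
    exact h1.continuousAt.div (continuousAt_id.mul h3) (ne_of_gt (hden x hx))
  -- formula for x * deriv a x
  have hderiva : ∀ x : ℝ, 1 < x → x * deriv a x
      = 1 + a x - a x * (deriv (fun y => y ^ 2 * deriv σ y) x / (x * deriv σ x)) := by
    intro x hx
    have hx0 : (0:ℝ) < x := by linarith
    obtain ⟨h1, h2, h3⟩ := hfacts x hx0
    have hdenx : x * deriv σ x ≠ 0 := ne_of_gt (hden x hx.le)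
    have hgdiff : DifferentiableAt ℝ (fun y => y * deriv σ y) x := differentiableAt_id.mul h2
    have hderg : deriv (fun y => y * deriv σ y) x = deriv σ x + x * deriv (deriv σ) x := by
      rw [deriv_fun_mul differentiableAt_fun_id h2, deriv_id'']; ring
    have hP : deriv (fun y => y ^ 2 * deriv σ y) x
        = 2 * x * deriv σ x + x ^ 2 * deriv (deriv σ) x := by
      rw [deriv_fun_mul (differentiableAt_pow 2) h2, deriv_pow_field 2]; ring
    have hda : deriv a x = (deriv σ x * (x * deriv σ x)
        - σ x * (deriv σ x + x * deriv (deriv σ) x)) / (x * deriv σ x) ^ 2 := by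
      rw [haf, deriv_fun_div h1 hgdiff hdenx, hderg]
    rw [hda, hP, ha x]
    have hdx : deriv σ x ≠ 0 := ne_of_gt (hM3 x hx).2
    field_simp
    ring
  -- G := y^2 σ' - σ₁ σ is decreasing with limit 0, hence positive
  have hGtend : Tendsto (fun y => y ^ 2 * deriv σ y - σ₁ * σ y) atTop (nhds 0) := by
    have h := hM1b.sub (hM1a.const_mul σ₁)
    simpa using h
  have hGneg : ∀ x : ℝ, 1 < x → deriv (fun y => y ^ 2 * deriv σ y - σ₁ * σ y) x < 0 := by
    intro x hx
    have hx0 : (0:ℝ) < x := by linarith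
    obtain ⟨h1, h2, h3⟩ := hfacts x hx0
    have hGd : deriv (fun y => y ^ 2 * deriv σ y - σ₁ * σ y) x
        = deriv (fun y => y ^ 2 * deriv σ y) x - σ₁ * deriv σ x := by
      rw [deriv_fun_sub (show DifferentiableAt ℝ (fun y => y ^ 2 * deriv σ y) x from (differentiableAt_pow 2).mul h2) (h1.const_mul σ₁),
        deriv_const_mul σ₁ h1]
    rw [hGd]
    set T := deriv (fun y => y ^ 2 * deriv σ y) x with hT
    have hV : 0 < x * deriv σ x := hden x hx.le
    set s := σ₁ / (2 * x) with hs
    have hs0 : 0 < s := by positivity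
    have h8 : (0:ℝ) < 8 + s := by linarith
    have hup : T < s * (9 / (8 + s)) * (x * deriv σ x) := (div_lt_iff₀ hV).mp (hM4 x hx).2
    have hVs : s * (x * deriv σ x) = σ₁ * deriv σ x / 2 := by
      rw [hs]; field_simp
    have hdx : 0 < deriv σ x := (hM3 x hx).2
    have hkey : T * (8 + s) < 9 * (σ₁ * deriv σ x / 2) := by
      have : s * (9 / (8 + s)) * (x * deriv σ x) * (8 + s) = 9 * (s * (x * deriv σ x)) := by
        field_simp
      nlinarith [mul_lt_mul_of_pos_right hup h8]
    nlinarith [mul_pos (mul_pos hσ₁ hdx) hs0]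
  have hGpos : ∀ x : ℝ, 1 < x → 0 < x ^ 2 * deriv σ x - σ₁ * σ x := by
    intro x hx
    set G := fun y => y ^ 2 * deriv σ y - σ₁ * σ y with hG
    have hcont : ContinuousOn G (Ici x) := by
      intro y hy
      have hy1 : (1:ℝ) < y := lt_of_lt_of_le hx hy
      obtain ⟨h1, h2, h3⟩ := hfacts y (by linarith)
      exact (((continuousAt_id.pow 2).mul h3).sub
        (continuousAt_const.mul h1.continuousAt)).continuousWithinAt
    have hanti : StrictAntiOn G (Ici x) := by
      apply strictAntiOn_of_deriv_neg (convex_Ici x) hcont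
      intro y hy
      rw [interior_Ici] at hy
      exact hGneg y (lt_trans hx hy)
    have h1 : G (x + 1) < G x :=
      hanti (self_mem_Ici) (mem_Ici.mpr (by linarith)) (by linarith)
    have h2 : 0 ≤ G (x + 1) := by
      refine le_of_tendsto hGtend ?_
      filter_upwards [eventually_ge_atTop (x + 1)] with z hz
      rcases eq_or_lt_of_le hz with h | h
      · rw [← h]
      · exact le_of_lt (hanti (mem_Ici.mpr (by linarith)) (mem_Ici.mpr (by linarith)) h)
    have : 0 < G x := by linarith
    simpa [hG] using this
  -- pointwise facts for x > 1
  have hmain : ∀ x : ℝ, 1 < x → 0 < a x ∧ a x < x / σ₁ ∧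
      (4 * a x + 1) ^ 2 / (16 * a x + 1) < x * deriv a x ∧
      x * deriv a x < 1 + 4 * a x := by
    intro x hx
    have hx0 : (0:ℝ) < x := by linarith
    have hV : 0 < x * deriv σ x := hden x hx.le
    have hapos : 0 < a x := by rw [ha x]; exact div_pos (hM3 x hx).1 hV
    have haxlt : a x < x / σ₁ := by
      rw [ha x, div_lt_div_iff₀ hV hσ₁]
      nlinarith [hGpos x hx]
    refine ⟨hapos, haxlt, ?_, ?_⟩
    · -- lower bound
      rw [hderiva x hx]
      set R := deriv (fun y => y ^ 2 * deriv σ y) x / (x * deriv σ x) with hR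
      set A := a x with hA
      set s := σ₁ / (2 * x) with hs
      have hs0 : 0 < s := by positivity
      have h8 : (0:ℝ) < 8 + s := by linarith
      have hRu : R < s * (9 / (8 + s)) := (hM4 x hx).2
      have hAs : A * s < 1 / 2 := by
        have hAσ : A * σ₁ < x := (lt_div_iff₀ hσ₁).mp haxlt
        have hseq : A * s = (A * σ₁) / (2 * x) := by rw [hs]; ring
        rw [hseq, div_lt_div_iff₀ (by linarith) (by norm_num : (0:ℝ) < 2)]
        linarith
      have h16 : (0:ℝ) < 16 * A + 1 := by linarith
      rw [div_lt_iff₀ h16]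
      have hkey : R * (8 + s) < 9 * s := by
        have hh := mul_lt_mul_of_pos_right hRu h8
        have heq : s * (9 / (8 + s)) * (8 + s) = 9 * s := by field_simp
        linarith
      have h1 : R * (8 + s) * (A * (16 * A + 1)) < 9 * s * (A * (16 * A + 1)) :=
        mul_lt_mul_of_pos_right hkey (by positivity : (0:ℝ) < A * (16 * A + 1))
      have h2 : 144 * A ^ 2 * s < 72 * A := by
        nlinarith [mul_lt_mul_of_pos_right hAs (by positivity : (0:ℝ) < 144 * A)]
      have h3 : A * R * (16 * A + 1) * (8 + s) < 9 * A * (8 + s) := by nlinarith [h1, h2]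
      have hK : A * R * (16 * A + 1) < 9 * A := (mul_lt_mul_iff_of_pos_right h8).mp h3
      nlinarith [hK]
    · -- upper bound
      rw [hderiva x hx]
      have hRl := (hM4 x hx).1
      nlinarith [hapos]
  refine ⟨?_, ?_, ?_, fun x hx => hmain x hx⟩
  · -- monotone
    have hsm : StrictMonoOn a (Ici 1) := by
      apply strictMonoOn_of_deriv_pos (convex_Ici 1) (fun x hx => (hconta x hx).continuousWithinAt)
      intro x hx
      rw [interior_Ici] at hx
      have h := (hmain x hx).2.2.1
      have hpos : 0 < (4 * a x + 1) ^ 2 / (16 * a x + 1) := by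
        have := (hmain x hx).1
        positivity
      have hxd : 0 < x * deriv a x := lt_trans hpos h
      have hx0 : (0:ℝ) < x := lt_trans one_pos hx
      by_contra hc
      push_neg at hc
      nlinarith [hxd, mul_nonpos_of_nonneg_of_nonpos hx0.le hc]
    exact hsm.monotoneOn
  · rw [ha 1, hM2a]; simp
  · have heq : (fun x => a x / x) = fun x => σ x / (x ^ 2 * deriv σ x) := by
      funext x
      rw [ha x, div_div]
      ring_nf
    rw [heq]
    have := hM1a.div hM1b (ne_of_gt hσ₁)
    simpa using (show Tendsto (fun x => σ x / (x ^ 2 * deriv σ x)) atTop (nhds (1 / σ₁)) from this)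
end

section
/- For every z₁ > 0 there exists δ > 0 such that for all z with 0 < z ≤ z₁ the inequalities ν(z) ≥ δ z^{1/3} and f(z) ≥ exp((3/2) δ² z^{2/3}) hold. -/
open Real Filter Set Topology

theorem stmt_7 (f ν : ℝ → ℝ)
    (hfsm : ∀ z > (0:ℝ), ContDiffAt ℝ (⊤ : ℕ∞) f z)
    (hfpos : ∀ z > (0:ℝ), 0 < f z)
    (hν : ∀ z : ℝ, ν z = Real.sqrt (z * deriv f z / f z))
    (hF1 : Filter.Tendsto f (nhdsWithin 0 (Set.Ioi 0)) (nhds 1))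
    (hF2 : ∀ z > (0:ℝ), 0 < ν z ∧ ν z < 1)
    (hF3 : ∀ z > (0:ℝ), 0 ≤ z * deriv ν z / ν z ∧ z * deriv ν z / ν z ≤ 1 / 3)
    :
    ∀ z₁ > (0:ℝ), ∃ δ > (0:ℝ), ∀ z : ℝ, 0 < z → z ≤ z₁ →
      δ * z ^ ((1:ℝ) / 3) ≤ ν z ∧
      Real.exp (3 / 2 * δ ^ 2 * z ^ ((2:ℝ) / 3)) ≤ f z := by
  have hν' : ν = fun z => Real.sqrt (z * deriv f z / f z) := funext hν
  have hfd : ∀ z > (0:ℝ), DifferentiableAt ℝ f z := fun z hz =>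
    (hfsm z hz).differentiableAt (by simp)
  have hdf : ∀ z > (0:ℝ), DifferentiableAt ℝ (deriv f) z := by
    intro z hz
    have h1 : ContDiffAt ℝ 1 (fderiv ℝ f) z := (hfsm z hz).fderiv_right (mod_cast le_top : ((1:ℕ∞)+1 ≤ ((⊤:ℕ∞):WithTop ℕ∞)))
    have h2 : DifferentiableAt ℝ (fun x => (fderiv ℝ f x) (1:ℝ)) z :=
      (h1.differentiableAt one_ne_zero).clm_apply (differentiableAt_const _)
    have h3 : (fun x => (fderiv ℝ f x) (1:ℝ)) = deriv f := by
      funext x; exact fderiv_apply_one_eq_deriv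
    rwa [h3] at h2
  have hq_pos : ∀ z > (0:ℝ), 0 < z * deriv f z / f z := by
    intro z hz
    have h := (hF2 z hz).1
    rw [hν] at h
    exact Real.sqrt_pos.mp h
  have hqd : ∀ z > (0:ℝ), DifferentiableAt ℝ (fun w => w * deriv f w / f w) z := by
    intro z hz
    exact (differentiableAt_id.mul (hdf z hz)).div (hfd z hz) (ne_of_gt (hfpos z hz))
  have hνd : ∀ z > (0:ℝ), DifferentiableAt ℝ ν z := by
    intro z hz
    rw [hν']
    exact (hqd z hz).sqrt (ne_of_gt (hq_pos z hz))
  have hνsq : ∀ z > (0:ℝ), ν z ^ 2 = z * deriv f z / f z := by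
    intro z hz
    rw [hν]
    exact Real.sq_sqrt (hq_pos z hz).le
  intro z₁ hz₁
  refine ⟨ν z₁ / z₁ ^ ((1:ℝ)/3), div_pos (hF2 z₁ hz₁).1 (Real.rpow_pos_of_pos hz₁ _), ?_⟩
  set δ : ℝ := ν z₁ / z₁ ^ ((1:ℝ)/3) with hδdef
  have hδ_pos : 0 < δ := div_pos (hF2 z₁ hz₁).1 (Real.rpow_pos_of_pos hz₁ _)
  -- the auxiliary function h for part A
  have hderiv : ∀ x > (0:ℝ),
      HasDerivAt (fun w => Real.log (ν w) - (1/3) * Real.log w)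
        (deriv ν x / ν x - (1/3) * x⁻¹) x := by
    intro x hx
    have h1 : HasDerivAt (fun w => Real.log (ν w)) (deriv ν x / ν x) x :=
      ((hνd x hx).hasDerivAt).log (ne_of_gt (hF2 x hx).1)
    have h2 : HasDerivAt (fun w : ℝ => (1/3) * Real.log w) ((1/3) * x⁻¹) x :=
      (Real.hasDerivAt_log (ne_of_gt hx)).const_mul (1/3)
    exact h1.sub h2
  have partA : ∀ z : ℝ, 0 < z → z ≤ z₁ → δ * z ^ ((1:ℝ)/3) ≤ ν z := by
    intro z hz hzz₁
    have hanti : AntitoneOn (fun w => Real.log (ν w) - (1/3) * Real.log w) (Icc z z₁) := by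
      apply antitoneOn_of_deriv_nonpos (convex_Icc _ _)
      · intro x hx
        exact ((hderiv x (lt_of_lt_of_le hz hx.1)).differentiableAt.continuousAt).continuousWithinAt
      · intro x hx
        rw [interior_Icc] at hx
        exact (hderiv x (hz.trans hx.1)).differentiableAt.differentiableWithinAt
      · intro x hx
        rw [interior_Icc] at hx
        have hx0 : 0 < x := hz.trans hx.1
        rw [(hderiv x hx0).deriv]
        have h3 := (hF3 x hx0).2
        rw [mul_div_assoc] at h3
        have ht : deriv ν x / ν x ≤ (1/3) / x := by
          rw [le_div_iff₀ hx0]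
          linarith [mul_comm x (deriv ν x / ν x)]
        rw [div_eq_mul_inv (1/3:ℝ) x] at ht
        linarith
    have hstep := hanti ⟨le_refl z, hzz₁⟩ ⟨hzz₁, le_refl z₁⟩ hzz₁
    simp only at hstep
    have hzr : (0:ℝ) < z ^ ((1:ℝ)/3) := Real.rpow_pos_of_pos hz _
    have hz₁r : (0:ℝ) < z₁ ^ ((1:ℝ)/3) := Real.rpow_pos_of_pos hz₁ _
    have hlog : Real.log (δ * z ^ ((1:ℝ)/3)) ≤ Real.log (ν z) := by
      rw [Real.log_mul (ne_of_gt hδ_pos) (ne_of_gt hzr), hδdef,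
        Real.log_div (ne_of_gt (hF2 z₁ hz₁).1) (ne_of_gt hz₁r),
        Real.log_rpow hz, Real.log_rpow hz₁]
      linarith
    exact (Real.log_le_log_iff (by positivity) (hF2 z hz).1).mp hlog
  intro z hz hzz₁
  refine ⟨partA z hz hzz₁, ?_⟩
  -- Part B
  have hFderiv : ∀ x, 0 < x →
      HasDerivAt (fun w => Real.log (f w) - 3/2 * δ^2 * w ^ ((2:ℝ)/3))
        (deriv f x / f x - δ^2 * x ^ ((2:ℝ)/3 - 1)) x := by
    intro x hx
    have h1 : HasDerivAt (fun w => Real.log (f w)) (deriv f x / f x) x :=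
      ((hfd x hx).hasDerivAt).log (ne_of_gt (hfpos x hx))
    have h2 : HasDerivAt (fun w : ℝ => w ^ ((2:ℝ)/3)) (((2:ℝ)/3) * x ^ ((2:ℝ)/3 - 1)) x :=
      Real.hasDerivAt_rpow_const (Or.inl (ne_of_gt hx))
    have h3 := h2.const_mul (3/2 * δ^2)
    have h4 := h1.sub h3
    refine h4.congr_deriv ?_
    ring
  have hFmono : ∀ ε, 0 < ε → ε ≤ z →
      Real.log (f ε) - 3/2 * δ^2 * ε ^ ((2:ℝ)/3) ≤
      Real.log (f z) - 3/2 * δ^2 * z ^ ((2:ℝ)/3) := by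
    intro ε hε hεz
    have hmono : MonotoneOn (fun w => Real.log (f w) - 3/2 * δ^2 * w ^ ((2:ℝ)/3)) (Icc ε z) := by
      apply monotoneOn_of_deriv_nonneg (convex_Icc _ _)
      · intro x hx
        exact ((hFderiv x (lt_of_lt_of_le hε hx.1)).differentiableAt.continuousAt).continuousWithinAt
      · intro x hx
        rw [interior_Icc] at hx
        exact (hFderiv x (hε.trans hx.1)).differentiableAt.differentiableWithinAt
      · intro x hx
        rw [interior_Icc] at hx
        have hx0 : 0 < x := hε.trans hx.1
        have hxz₁ : x ≤ z₁ := (hx.2.le.trans hzz₁)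
        rw [(hFderiv x hx0).deriv]
        have hA := partA x hx0 hxz₁
        have hxx : x ^ ((1:ℝ)/3) * x ^ ((1:ℝ)/3) = x ^ ((2:ℝ)/3) := by
          rw [← Real.rpow_add hx0]; norm_num
        have h0 : (0:ℝ) ≤ δ * x ^ ((1:ℝ)/3) := by positivity
        have hmm : (δ * x ^ ((1:ℝ)/3)) * (δ * x ^ ((1:ℝ)/3)) ≤ ν x * ν x :=
          mul_le_mul hA hA h0 (hF2 x hx0).1.le
        have hν2 : δ^2 * x ^ ((2:ℝ)/3) ≤ ν x ^ 2 := by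
          calc δ^2 * x ^ ((2:ℝ)/3) = (δ * x ^ ((1:ℝ)/3)) * (δ * x ^ ((1:ℝ)/3)) := by
                rw [← hxx]; ring
            _ ≤ ν x * ν x := hmm
            _ = ν x ^ 2 := (sq (ν x)).symm
        have hdfx : deriv f x / f x = ν x ^ 2 / x := by
          rw [hνsq x hx0, mul_div_assoc, mul_div_cancel_left₀ _ (ne_of_gt hx0)]
        have hsub : x ^ ((2:ℝ)/3 - 1) = x ^ ((2:ℝ)/3) / x := by
          rw [Real.rpow_sub hx0, Real.rpow_one]
        rw [hdfx, hsub, sub_nonneg]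
        calc δ^2 * (x ^ ((2:ℝ)/3) / x) = δ^2 * x ^ ((2:ℝ)/3) / x := by ring
          _ ≤ ν x ^ 2 / x := by gcongr
    exact hmono ⟨le_refl ε, hεz⟩ ⟨hεz, le_refl z⟩ hεz
  have hTlog : Tendsto (fun w => Real.log (f w)) (𝓝[>] (0:ℝ)) (𝓝 0) := by
    have h := (Real.continuousAt_log one_ne_zero).tendsto.comp hF1
    simpa [Function.comp_def] using h
  have hTr : Tendsto (fun w : ℝ => w ^ ((2:ℝ)/3)) (𝓝[>] (0:ℝ)) (𝓝 0) := by
    have h := (Real.continuousAt_rpow_const 0 ((2:ℝ)/3) (Or.inr (by norm_num))).tendsto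
    rw [Real.zero_rpow (by norm_num : ((2:ℝ)/3) ≠ 0)] at h
    exact h.mono_left nhdsWithin_le_nhds
  have hT : Tendsto (fun w => Real.log (f w) - 3/2 * δ^2 * w ^ ((2:ℝ)/3))
      (𝓝[>] (0:ℝ)) (𝓝 0) := by
    have h := hTlog.sub (hTr.const_mul (3/2 * δ^2))
    simpa using h
  have h0F : (0:ℝ) ≤ Real.log (f z) - 3/2 * δ^2 * z ^ ((2:ℝ)/3) := by
    apply le_of_tendsto hT
    filter_upwards [Ioc_mem_nhdsGT_of_mem ⟨le_refl (0:ℝ), hz⟩] with ε hε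
    exact hFmono ε hε.1 hε.2
  have hfinal : 3/2 * δ^2 * z ^ ((2:ℝ)/3) ≤ Real.log (f z) := by linarith
  calc Real.exp (3/2 * δ^2 * z ^ ((2:ℝ)/3)) ≤ Real.exp (Real.log (f z)) :=
        Real.exp_le_exp.mpr hfinal
    _ = f z := Real.exp_log (hfpos z hz)
end

section
/- The function a(x) := σ(x)/(x σ'(x)) is a monotone bijection from [1,∞) onto [0,∞); define x_c(z) := a⁻¹((ν(z)⁻² − 1)/4) for z > 0. Then the function 𝓛(z) := f(z)²·σ(x_c(z))/(1 − ν(z)²) is strictly monotonically increasing on (0,∞) and satisfies lim_{z→0} 𝓛(z) = 1 and lim_{z→∞} 𝓛(z) = ∞. In particular, for every f_∞ > 1 there exists a unique z_c > 0 with 𝓛(z_c) = f_∞². -/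
open Real Filter Set Topology ContDiff

theorem deriv_contDiffAt_aux {h : ℝ → ℝ} {x : ℝ} (hh : ContDiffAt ℝ (⊤ : ℕ∞) h x) :
    ContDiffAt ℝ (⊤ : ℕ∞) (deriv h) x := by
  rw [show ((⊤ : ℕ∞) : WithTop ℕ∞) = ∞ from rfl, contDiffAt_infty]
  intro n
  obtain ⟨u, hu, hcd⟩ := (hh.of_le (show ((n+1:ℕ) : WithTop ℕ∞) ≤ _ by exact_mod_cast le_top)).contDiffOn
    (m := ((n+1 : ℕ) : WithTop ℕ∞)) le_rfl (by simp)
  obtain ⟨t, htu, hto, hxt⟩ := mem_nhds_iff.1 hu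
  have : ContDiffOn ℝ n (deriv h) t :=
    (hcd.mono htu).deriv_of_isOpen hto (by exact_mod_cast le_rfl)
  exact this.contDiffAt (hto.mem_nhds hxt)

set_option maxHeartbeats 2000000 in
theorem stmt_10 (σ f ν : ℝ → ℝ) (σ₁ : ℝ)
    (hσsm : ∀ x > (0:ℝ), ContDiffAt ℝ (⊤ : ℕ∞) σ x)
    (hσ₁ : 0 < σ₁)
    (hM1a : Filter.Tendsto σ Filter.atTop (nhds 1))
    (hM1b : Filter.Tendsto (fun x => x ^ 2 * deriv σ x) Filter.atTop (nhds σ₁))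
    (hM2a : σ 1 = 0)
    (hM2b : 0 < deriv σ 1)
    (hM3 : ∀ x > (1:ℝ), 0 < σ x ∧ 0 < deriv σ x)
    (hM4 : ∀ x > (1:ℝ),
      -3 < deriv (fun y => y ^ 2 * deriv σ y) x / (x * deriv σ x) ∧
      deriv (fun y => y ^ 2 * deriv σ y) x / (x * deriv σ x)
        < σ₁ / (2 * x) * (9 / (8 + σ₁ / (2 * x))))
    (hfsm : ∀ z > (0:ℝ), ContDiffAt ℝ (⊤ : ℕ∞) f z)
    (hfpos : ∀ z > (0:ℝ), 0 < f z)
    (hν : ∀ z : ℝ, ν z = Real.sqrt (z * deriv f z / f z))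
    (hF1 : Filter.Tendsto f (nhdsWithin 0 (Set.Ioi 0)) (nhds 1))
    (hF2 : ∀ z > (0:ℝ), 0 < ν z ∧ ν z < 1)
    (hF3 : ∀ z > (0:ℝ), 0 ≤ z * deriv ν z / ν z ∧ z * deriv ν z / ν z ≤ 1 / 3)
    (a : ℝ → ℝ) (ha : ∀ x : ℝ, a x = σ x / (x * deriv σ x)) :
    (MonotoneOn a (Set.Ici 1) ∧ Set.BijOn a (Set.Ici 1) (Set.Ici 0)) ∧
    ∀ xc : ℝ → ℝ,
      (∀ z > (0:ℝ), xc z ∈ Set.Ici (1:ℝ) ∧ a (xc z) = ((ν z) ^ 2)⁻¹ / 4 - 1 / 4) →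
      ∀ L : ℝ → ℝ,
        (∀ z : ℝ, L z = f z ^ 2 * σ (xc z) / (1 - (ν z) ^ 2)) →
        StrictMonoOn L (Set.Ioi 0) ∧
        Filter.Tendsto L (nhdsWithin 0 (Set.Ioi 0)) (nhds 1) ∧
        Filter.Tendsto L Filter.atTop Filter.atTop ∧
        ∀ finf > (1:ℝ), ∃! zc : ℝ, 0 < zc ∧ L zc = finf ^ 2 := by
  -- basic smoothness facts
  set g : ℝ → ℝ := fun y => y ^ 2 * deriv σ y with hg
  have hσ'cd : ∀ x > (0:ℝ), ContDiffAt ℝ (⊤ : ℕ∞) (deriv σ) x := fun x hx =>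
    deriv_contDiffAt_aux (hσsm x hx)
  have hgcd : ∀ x > (0:ℝ), ContDiffAt ℝ (⊤ : ℕ∞) g x := fun x hx =>
    (contDiffAt_id.pow 2).mul (hσ'cd x hx)
  have hone : ((⊤:ℕ∞) : WithTop ℕ∞) ≠ 0 := by simp
  have hσd : ∀ x > (0:ℝ), HasDerivAt σ (deriv σ x) x := fun x hx =>
    ((hσsm x hx).differentiableAt hone).hasDerivAt
  have hgd : ∀ x > (0:ℝ), HasDerivAt g (deriv g x) x := fun x hx =>
    ((hgcd x hx).differentiableAt hone).hasDerivAt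
  -- positivity on (1, ∞)
  have hgpos : ∀ x > (1:ℝ), 0 < g x := by
    intro x hx
    have hp := (hM3 x hx).2
    have : (0:ℝ) < x := by linarith
    positivity
  -- Step B : σ₁ * σ x < g x for x > 1
  have hu' : ∀ x > (1:ℝ), deriv (fun y => g y - σ₁ * σ y) x < 0 := by
    intro x hx
    have hx0 : (0:ℝ) < x := by linarith
    have hp := (hM3 x hx).2
    have h4 := (hM4 x hx).2
    have hxp : 0 < x * deriv σ x := by positivity
    have hden : 0 < 8 + σ₁ / (2 * x) := by positivity
    have hG : deriv g x < x * deriv σ x * (σ₁ / (2 * x) * (9 / (8 + σ₁ / (2 * x)))) := by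
      rw [div_lt_iff₀ hxp] at h4; linarith
    have heq : deriv (fun y => g y - σ₁ * σ y) x = deriv g x - σ₁ * deriv σ x := by
      have h1 := (hgd x hx0)
      have h2 := (hσd x hx0)
      exact (h1.sub (h2.const_mul σ₁)).deriv
    rw [heq]
    have hne1 : (2*x) ≠ 0 := by positivity
    have hne2 : (8 + σ₁/(2*x)) ≠ 0 := ne_of_gt hden
    have hne3 : (16*x + σ₁) ≠ 0 := by positivity
    have he : σ₁/(2*x)*(9/(8+σ₁/(2*x))) = 9*σ₁/(16*x+σ₁) := by
      field_simp
      ring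
    have hkey : x * deriv σ x * (σ₁ / (2 * x) * (9 / (8 + σ₁ / (2 * x)))) < σ₁ * deriv σ x := by
      rw [he]
      rw [show x * deriv σ x * (9 * σ₁ / (16 * x + σ₁)) = (x * deriv σ x * 9 * σ₁) / (16 * x + σ₁) by ring,
        div_lt_iff₀ (by positivity)]
      nlinarith [mul_pos (mul_pos hσ₁ hp) hx0]
    linarith
  have hu0 : Tendsto (fun y => g y - σ₁ * σ y) atTop (nhds 0) := by
    have h := hM1b.sub (hM1a.const_mul σ₁)
    simpa using h
  have husgn : ∀ x > (1:ℝ), σ₁ * σ x < g x := by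
    intro x hx
    by_contra hcon
    push_neg at hcon
    have hanti : StrictAntiOn (fun y => g y - σ₁ * σ y) (Ici x) := by
      apply strictAntiOn_of_deriv_neg (convex_Ici x)
      · intro y hy
        have hy1 : (0:ℝ) < y := lt_of_lt_of_le (by linarith) hy
        exact (((hgd y hy1).sub ((hσd y hy1).const_mul σ₁)).differentiableAt.continuousAt).continuousWithinAt
      · intro y hy
        rw [interior_Ici] at hy
        exact hu' y (lt_trans hx hy)
    have hx1m : x ∈ Ici x := self_mem_Ici
    have hx2m : x + 1 ∈ Ici x := by simp [mem_Ici]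
    have h1 : g (x+1) - σ₁ * σ (x+1) < 0 := by
      have := hanti hx1m hx2m (by linarith)
      simp only at this
      linarith
    have h2 : ∀ᶠ y in atTop, g (x+1) - σ₁ * σ (x+1) < g y - σ₁ * σ y :=
      hu0.eventually (eventually_gt_nhds h1)
    obtain ⟨y, hy1, hy2⟩ := (h2.and (eventually_gt_atTop (x+1))).exists
    have : g y - σ₁ * σ y < g (x+1) - σ₁ * σ (x+1) :=
      hanti hx2m (by simp [mem_Ici]; linarith) hy2
    linarith
  have hσ''d : ∀ x > (0:ℝ), HasDerivAt (deriv σ) (deriv (deriv σ) x) x := fun x hx =>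
    ((hσ'cd x hx).differentiableAt hone).hasDerivAt
  have hgderiv : ∀ x > (0:ℝ), deriv g x = 2*x*deriv σ x + x^2 * deriv (deriv σ) x := by
    intro x hx
    have h : HasDerivAt g (2*x*deriv σ x + x^2 * deriv (deriv σ) x) x := by
      have h2 := (hasDerivAt_pow 2 x).mul (hσ''d x hx)
      exact h2.congr_deriv (by ring)
    exact h.deriv
  have haD : ∀ x > (1:ℝ), HasDerivAt a
      ((deriv σ x * (x * deriv σ x) - σ x * (deriv σ x + x * deriv (deriv σ) x)) / (x * deriv σ x)^2) x := by
    intro x hx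
    have hx0 : (0:ℝ) < x := lt_trans one_pos hx
    have hp := (hM3 x hx).2
    have hden : HasDerivAt (fun y => y * deriv σ y) (1 * deriv σ x + x * deriv (deriv σ) x) x :=
      (hasDerivAt_id x).mul (hσ''d x hx0)
    have hne : x * deriv σ x ≠ 0 := by positivity
    have h := (hσd x hx0).div hden hne
    have hae : a = fun y => σ y / (y * deriv σ y) := funext ha
    rw [hae]
    exact h.congr_deriv (by ring)
  have hapos' : ∀ x > (1:ℝ), 0 < a x := by
    intro x hx
    have hp := (hM3 x hx).2
    have hs := (hM3 x hx).1
    rw [ha]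
    have hx0 : (0:ℝ) < x := lt_trans one_pos hx
    positivity
  have hkey : ∀ x > (1:ℝ), (4 * a x + 1)^2 < x * deriv a x * (16 * a x + 1) := by
    intro x hx
    have hx0 : (0:ℝ) < x := lt_trans one_pos hx
    have hp := (hM3 x hx).2
    have hs := (hM3 x hx).1
    set p := deriv σ x with hpdef
    set s := σ x with hsdef
    set q := deriv (deriv σ) x with hqdef
    have hA : a x = s / (x * p) := ha x
    have hApos : 0 < a x := hapos' x hx
    set A := a x with hAdef
    have hderiva : deriv a x = (p * (x * p) - s * (p + x * q)) / (x * p)^2 := (haD x hx).deriv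
    have hgd' : deriv g x = 2*x*p + x^2*q := hgderiv x hx0
    have hxp : (0:ℝ) < x * p := by positivity
    have hTden : (0:ℝ) < 16 * x + σ₁ := by positivity
    set T := 9 * σ₁ / (16 * x + σ₁) with hTdef
    have h4 := (hM4 x hx).2
    rw [hgd'] at h4
    have hTeq : σ₁ / (2 * x) * (9 / (8 + σ₁ / (2 * x))) = T := by
      rw [hTdef]
      have h1 : (2*x) ≠ 0 := by positivity
      have h2 : (8 + σ₁/(2*x)) ≠ 0 := by positivity
      have h3 : (16*x + σ₁) ≠ 0 := by positivity
      field_simp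
      ring
    rw [hTeq, div_lt_iff₀ hxp] at h4
    have h1 : x * q / p < T - 2 := by
      rw [div_lt_iff₀ hp]
      nlinarith
    have h2 : s * q / p^2 = A * (x * q / p) := by
      rw [hA]
      field_simp
    have h3 : A * (x * q / p) < A * (T - 2) := (mul_lt_mul_iff_right₀ hApos).2 h1
    have h4' : x * deriv a x = 1 - A - s * q / p^2 := by
      rw [hderiva, hA]
      field_simp
      ring
    have h5 : T < 9 / (16 * A + 1) := by
      have hσA : σ₁ * A < x := by
        have hh := husgn x hx
        rw [hA, ← mul_div_assoc, div_lt_iff₀ hxp]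
        simp only [hg] at hh
        nlinarith
      rw [hTdef, div_lt_div_iff₀ hTden (by positivity)]
      nlinarith
    have h6 : A * T < 9 * A / (16 * A + 1) := by
      have hh := (mul_lt_mul_iff_right₀ hApos).2 h5
      have he2 : A * (9 / (16 * A + 1)) = 9 * A / (16 * A + 1) := by ring
      linarith
    have h7 : (1 + A - 9 * A / (16 * A + 1)) * (16 * A + 1) = (4 * A + 1)^2 := by
      field_simp
      ring
    have h8 : 1 + A - 9 * A / (16 * A + 1) < x * deriv a x := by
      rw [h4']
      nlinarith
    nlinarith [mul_lt_mul_of_pos_right h8 (show (0:ℝ) < 16 * A + 1 by positivity)]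
  have hapos : ∀ x > (1:ℝ), 0 < deriv a x := by
    intro x hx
    have h := hkey x hx
    have hApos := hapos' x hx
    have hx0 : (0:ℝ) < x := lt_trans one_pos hx
    by_contra h'
    push_neg at h'
    have h1 : x * deriv a x ≤ 0 := mul_nonpos_of_nonneg_of_nonpos (le_of_lt hx0) h'
    have h2 : x * deriv a x * (16 * a x + 1) ≤ 0 :=
      mul_nonpos_of_nonpos_of_nonneg h1 (by positivity)
    nlinarith
  have hpge : ∀ x : ℝ, 1 ≤ x → 0 < deriv σ x := by
    intro x hx
    rcases eq_or_lt_of_le hx with h | h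
    · rwa [← h]
    · exact (hM3 x h).2
  have hacont : ContinuousOn a (Ici 1) := by
    intro x hx
    have hx0 : (0:ℝ) < x := lt_of_lt_of_le one_pos hx
    have hp := hpge x hx
    have hne : x * deriv σ x ≠ 0 := by positivity
    have h : ContinuousAt (fun y => σ y / (y * deriv σ y)) x :=
      ((hσsm x hx0).continuousAt).div (continuousAt_id.mul (hσ'cd x hx0).continuousAt) hne
    have hae : a = fun y => σ y / (y * deriv σ y) := funext ha
    rw [hae]
    exact h.continuousWithinAt
  have haSM : StrictMonoOn a (Ici 1) := by
    apply strictMonoOn_of_deriv_pos (convex_Ici 1) hacont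
    intro x hx
    rw [interior_Ici] at hx
    exact hapos x hx
  have ha1 : a 1 = 0 := by rw [ha]; simp [hM2a]
  have hatop : Tendsto a atTop atTop := by
    have hgσ : Tendsto (fun x => σ x / g x) atTop (nhds (1/σ₁)) := by
      exact hM1a.div hM1b (ne_of_gt hσ₁)
    have h : Tendsto (fun x => x * (σ x / g x)) atTop atTop :=
      Filter.Tendsto.atTop_mul_pos (by positivity) tendsto_id hgσ
    apply h.congr'
    filter_upwards [eventually_gt_atTop (0:ℝ)] with x hx
    show x * (σ x / g x) = a x
    rw [ha, hg]
    rcases eq_or_ne (deriv σ x) 0 with hp | hp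
    · simp [hp]
    · rw [mul_div_assoc']
      rw [div_eq_div_iff (by positivity) (by simp [hp]; positivity)]
      ring
  have haMaps : MapsTo a (Ici 1) (Ici 0) := by
    intro x hx
    rcases eq_or_lt_of_le (mem_Ici.1 hx) with h | h
    · simp [mem_Ici, ← h, ha1]
    · exact mem_Ici.2 (le_of_lt (hapos' x h))
  have haBij : BijOn a (Ici 1) (Ici 0) := by
    refine ⟨haMaps, haSM.injOn, ?_⟩
    intro y hy
    obtain ⟨M, hMy, hM1⟩ := ((hatop.eventually (eventually_ge_atTop y)).and (eventually_ge_atTop 1)).exists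
    have hsub : Icc (a 1) (a M) ⊆ a '' Icc 1 M :=
      intermediate_value_Icc hM1 (hacont.mono (Icc_subset_Ici_self))
    have : y ∈ Icc (a 1) (a M) := by
      rw [ha1]
      exact ⟨mem_Ici.1 hy, hMy⟩
    exact (image_mono (f := a) Icc_subset_Ici_self) (hsub this)
  refine ⟨⟨haSM.monotoneOn, haBij⟩, ?_⟩
  intro xc hxc L hL
  have hLfun : L = fun w => f w ^ 2 * σ (xc w) / (1 - ν w ^ 2) := funext hL
  -- basic facts about ν and f
  have hνpos : ∀ z > (0:ℝ), 0 < ν z := fun z hz => (hF2 z hz).1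
  have hνlt1 : ∀ z > (0:ℝ), ν z < 1 := fun z hz => (hF2 z hz).2
  have hwpos : ∀ z > (0:ℝ), 0 < z * deriv f z / f z := by
    intro z hz
    have h := hν z
    have h2 := hνpos z hz
    rw [h] at h2
    exact Real.sqrt_pos.1 h2
  have hν2 : ∀ z > (0:ℝ), ν z ^ 2 = z * deriv f z / f z := by
    intro z hz
    rw [hν z, Real.sq_sqrt (hwpos z hz).le]
  have hfd : ∀ z > (0:ℝ), HasDerivAt f (deriv f z) z := fun z hz =>
    ((hfsm z hz).differentiableAt hone).hasDerivAt
  have hf'cd : ∀ z > (0:ℝ), ContDiffAt ℝ (⊤ : ℕ∞) (deriv f) z := fun z hz =>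
    deriv_contDiffAt_aux (hfsm z hz)
  have hfeq' : ∀ z > (0:ℝ), deriv f z = ν z ^ 2 * f z / z := by
    intro z hz
    have h := hν2 z hz
    have hfz : f z ≠ 0 := ne_of_gt (hfpos z hz)
    rw [eq_comm, div_eq_iff hfz] at h
    rw [eq_div_iff (ne_of_gt hz)]
    linarith [h]
  have hνd : ∀ z > (0:ℝ), HasDerivAt ν (deriv ν z) z := by
    intro z hz
    have hfz : f z ≠ 0 := ne_of_gt (hfpos z hz)
    have hwdiff : DifferentiableAt ℝ (fun w => w * deriv f w / f w) z :=
      (differentiableAt_id.mul ((hf'cd z hz).differentiableAt hone)).div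
        ((hfsm z hz).differentiableAt hone) hfz
    have hsq : DifferentiableAt ℝ (fun w => Real.sqrt (w * deriv f w / f w)) z :=
      hwdiff.sqrt (ne_of_gt (hwpos z hz))
    have hνeq : ν = fun w => Real.sqrt (w * deriv f w / f w) := funext hν
    rw [hνeq]
    exact hsq.hasDerivAt
  have hν'0 : ∀ z > (0:ℝ), 0 ≤ deriv ν z := by
    intro z hz
    have h := (hF3 z hz).1
    have hn := hνpos z hz
    by_contra h'
    push_neg at h'
    have h2 : z * deriv ν z < 0 := mul_neg_of_pos_of_neg hz h'
    have h3 : z * deriv ν z / ν z < 0 := div_neg_of_neg_of_pos h2 hn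
    linarith
  have hν'le : ∀ z > (0:ℝ), deriv ν z ≤ ν z / (3 * z) := by
    intro z hz
    have h := (hF3 z hz).2
    have hn := hνpos z hz
    rw [div_le_iff₀ hn] at h
    rw [le_div_iff₀ (by positivity)]
    nlinarith
  have hνmono : MonotoneOn ν (Ioi 0) := by
    apply monotoneOn_of_deriv_nonneg (convex_Ioi 0)
    · intro w hw
      exact ((hνd w hw).differentiableAt.continuousAt).continuousWithinAt
    · intro w hw
      rw [interior_Ioi] at hw
      exact (hνd w hw).differentiableAt.differentiableWithinAt
    · intro w hw
      rw [interior_Ioi] at hw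
      exact hν'0 w hw
  -- ν tends to 0 at 0+
  have hνsmall : ∀ ε > (0:ℝ), ∃ z₀ > (0:ℝ), ν z₀ < ε := by
    intro ε hε
    by_contra hcon
    push_neg at hcon
    have hmono : MonotoneOn (fun w => Real.log (f w) - ε ^ 2 * Real.log w) (Ioc 0 1) := by
      apply monotoneOn_of_deriv_nonneg (convex_Ioc 0 1)
      · intro w hw
        have hw0 : (0:ℝ) < w := hw.1
        have h1 : ContinuousAt (fun w => Real.log (f w)) w :=
          ContinuousAt.log ((hfd w hw0).differentiableAt.continuousAt) (ne_of_gt (hfpos w hw0))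
        have h2 : ContinuousAt (fun w => ε ^ 2 * Real.log w) w :=
          (Real.continuousAt_log (ne_of_gt hw0)).const_mul _
        exact (h1.sub h2).continuousWithinAt
      · intro w hw
        rw [interior_Ioc] at hw
        have hw0 : (0:ℝ) < w := hw.1
        exact (((hfd w hw0).differentiableAt.log (ne_of_gt (hfpos w hw0))).sub
          ((Real.differentiableAt_log (ne_of_gt hw0)).const_mul _)).differentiableWithinAt
      · intro w hw
        rw [interior_Ioc] at hw
        have hw0 : (0:ℝ) < w := hw.1
        have hD : HasDerivAt (fun w => Real.log (f w) - ε ^ 2 * Real.log w)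
            (deriv f w / f w - ε ^ 2 * w⁻¹) w :=
          ((hfd w hw0).log (ne_of_gt (hfpos w hw0))).sub
            ((Real.hasDerivAt_log (ne_of_gt hw0)).const_mul _)
        rw [hD.deriv]
        have hfw := hfpos w hw0
        have hf'w := hfeq' w hw0
        rw [hf'w]
        have heq : ν w ^ 2 * f w / w / f w = ν w ^ 2 / w := by field_simp <;> ring
        rw [heq]
        have hge : ε ≤ ν w := hcon w hw0
        have h2 : ε ^ 2 ≤ ν w ^ 2 := by nlinarith [hνpos w hw0]
        have h3 : ν w ^ 2 / w = ν w ^ 2 * w⁻¹ := div_eq_mul_inv _ _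
        rw [h3]
        have h4 : (0:ℝ) ≤ w⁻¹ := (inv_pos.2 hw0).le
        nlinarith [mul_le_mul_of_nonneg_right h2 h4]
    have hub : ∀ w ∈ Ioc (0:ℝ) 1, f w ≤ Real.exp (Real.log (f 1) + ε ^ 2 * Real.log w) := by
      intro w hw
      have h1 := hmono hw (right_mem_Ioc.2 one_pos) hw.2
      simp only [Real.log_one, mul_zero, sub_zero] at h1
      have h2 : Real.log (f w) ≤ Real.log (f 1) + ε ^ 2 * Real.log w := by linarith
      calc f w = Real.exp (Real.log (f w)) := (Real.exp_log (hfpos w hw.1)).symm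
        _ ≤ _ := Real.exp_le_exp.2 h2
    have hlim : Tendsto (fun w => Real.exp (Real.log (f 1) + ε ^ 2 * Real.log w))
        (nhdsWithin 0 (Set.Ioi 0)) (nhds 0) := by
      apply Real.tendsto_exp_atBot.comp
      apply tendsto_atBot_add_const_left
      exact Real.tendsto_log_nhdsGT_zero.const_mul_atBot (by positivity)
    have hle : (1:ℝ) ≤ 0 := by
      apply le_of_tendsto_of_tendsto hF1 hlim
      filter_upwards [Ioc_mem_nhdsGT_of_mem (by norm_num : (0:ℝ) ∈ Ico (0:ℝ) 1)] with w hw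
      exact hub w hw
    linarith
  have hν0 : Tendsto ν (nhdsWithin 0 (Set.Ioi 0)) (nhds 0) := by
    rw [Metric.tendsto_nhdsWithin_nhds]
    intro ε hε
    obtain ⟨z₀, hz₀, hz₀ε⟩ := hνsmall ε hε
    refine ⟨z₀, hz₀, ?_⟩
    intro z hz hdist
    rw [Real.dist_eq, sub_zero] at hdist
    rw [Real.dist_eq, sub_zero]
    have hz0 : (0:ℝ) < z := hz
    have hzz₀ : z ≤ z₀ := by
      rw [abs_of_pos hz0] at hdist
      linarith
    have h1 : ν z ≤ ν z₀ := hνmono hz (mem_Ioi.2 hz₀) hzz₀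
    rw [abs_of_pos (hνpos z hz0)]
    linarith
  -- positivity of the target of a ∘ xc
  have hApos : ∀ z > (0:ℝ), 0 < ((ν z) ^ 2)⁻¹ / 4 - 1 / 4 := by
    intro z hz
    have h1 := hνpos z hz
    have h2 := hνlt1 z hz
    have h4 : ν z ^ 2 < 1 := by nlinarith
    have h5 : ν z ^ 2 * (ν z ^ 2)⁻¹ = 1 := mul_inv_cancel₀ (by positivity)
    have h6 : 0 < (ν z ^ 2)⁻¹ := by positivity
    nlinarith
  have hxc1 : ∀ z > (0:ℝ), 1 < xc z := by
    intro z hz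
    obtain ⟨h1, h2⟩ := hxc z hz
    rcases lt_or_eq_of_le (mem_Ici.1 h1) with h | h
    · exact h
    · exfalso
      rw [← h, ha1] at h2
      have := hApos z hz
      linarith
  -- the main derivative computation
  have hmain : ∀ z ∈ Ioi (0:ℝ), ∃ c, HasDerivAt L c z ∧ 0 < c := by
    intro z hz
    rw [mem_Ioi] at hz
    obtain ⟨hxmem, haxc⟩ := hxc z hz
    have hx1 : 1 < xc z := hxc1 z hz
    set x := xc z with hxdef
    have hx0 : (0:ℝ) < x := by linarith
    have hn := hνpos z hz
    have hn1 := hνlt1 z hz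
    have hnne : ν z ≠ 0 := ne_of_gt hn
    have hp : 0 < deriv σ x := (hM3 x hx1).2
    have hs : 0 < σ x := (hM3 x hx1).1
    have hF : 0 < f z := hfpos z hz
    have ha' : 0 < deriv a x := hapos x hx1
    have hane : deriv a x ≠ 0 := ne_of_gt ha'
    have hkx := hkey x hx1
    have hax : a x = σ x / (x * deriv σ x) := ha x
    have haxpos : 0 < a x := hapos' x hx1
    have hn2eq : ν z ^ 2 * (4 * a x + 1) = 1 := by
      rw [haxc]
      field_simp <;> ring
    -- derivative of the target map
    have hνdz := hνd z hz
    have hν2d : HasDerivAt (fun w => (ν w) ^ 2) (2 * ν z * deriv ν z) z := by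
      have h := hνdz.pow 2
      exact h.congr_deriv (by ring)
    have hAd : HasDerivAt (fun w => ((ν w) ^ 2)⁻¹ / 4 - 1 / 4)
        (-(2 * ν z * deriv ν z) / ((ν z ^ 2) ^ 2) / 4) z :=
      ((hν2d.inv (pow_ne_zero 2 hnne)).div_const 4).sub_const _
    -- a is smooth at x with nonvanishing derivative : local inverse
    have hacd : ContDiffAt ℝ (⊤ : ℕ∞) a x := by
      have h : ContDiffAt ℝ (⊤ : ℕ∞) (fun y => σ y / (y * deriv σ y)) x :=
        (hσsm x hx0).div (contDiffAt_id.mul (hσ'cd x hx0)) (by positivity)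
      have hae : a = fun y => σ y / (y * deriv σ y) := funext ha
      rw [hae]
      exact h
    have hsd : HasStrictDerivAt a (deriv a x) x := hacd.hasStrictDerivAt hone
    set φ : ℝ → ℝ := hsd.localInverse a (deriv a x) x hane with hφdef
    have hφd : HasStrictDerivAt φ (deriv a x)⁻¹ (a x) := hsd.to_localInverse hane
    have hri : ∀ᶠ y in nhds (a x), a (φ y) = y :=
      (hsd.hasStrictFDerivAt_equiv hane).eventually_right_inverse
    have hφax : φ (a x) = x :=
      (hsd.hasStrictFDerivAt_equiv hane).localInverse_apply_image
    have hφcont : ContinuousAt φ (a x) :=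
      (hsd.hasStrictFDerivAt_equiv hane).localInverse_continuousAt
    have hAt : Tendsto (fun w => ((ν w) ^ 2)⁻¹ / 4 - 1 / 4) (nhds z) (nhds (a x)) := by
      rw [haxc]
      exact hAd.differentiableAt.continuousAt
    have hev1 : ∀ᶠ w in nhds z, a (φ (((ν w) ^ 2)⁻¹ / 4 - 1 / 4)) = ((ν w) ^ 2)⁻¹ / 4 - 1 / 4 :=
      hAt.eventually hri
    have hev2 : ∀ᶠ w in nhds z, 1 < φ (((ν w) ^ 2)⁻¹ / 4 - 1 / 4) := by
      have ht : Tendsto (fun w => φ (((ν w) ^ 2)⁻¹ / 4 - 1 / 4)) (nhds z) (nhds x) := by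
        have h := hφcont.tendsto.comp hAt
        rwa [hφax] at h
      exact ht.eventually (eventually_gt_nhds hx1)
    have hev3 : ∀ᶠ w in nhds z, 0 < w := eventually_gt_nhds hz
    have hxcev : (fun w => φ (((ν w) ^ 2)⁻¹ / 4 - 1 / 4)) =ᶠ[nhds z] xc := by
      filter_upwards [hev1, hev2, hev3] with w h1 h2 h3
      have hxcw := hxc w h3
      refine haSM.injOn (mem_Ici.2 h2.le) hxcw.1 ?_
      rw [h1, hxcw.2]
    have hxcD : HasDerivAt xc
        ((deriv a x)⁻¹ * (-(2 * ν z * deriv ν z) / ((ν z ^ 2) ^ 2) / 4)) z := by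
      have hφd' : HasDerivAt φ (deriv a x)⁻¹ (((ν z) ^ 2)⁻¹ / 4 - 1 / 4) := by
        rw [← haxc]
        exact hφd.hasDerivAt
      exact (hφd'.comp z hAd).congr_of_eventuallyEq hxcev.symm
    -- derivative of L
    have hσxd : HasDerivAt (fun w => σ (xc w))
        (deriv σ x * ((deriv a x)⁻¹ * (-(2 * ν z * deriv ν z) / ((ν z ^ 2) ^ 2) / 4))) z :=
      (hσd x hx0).comp z hxcD
    have hf2d : HasDerivAt (fun w => f w ^ 2) (2 * f z * deriv f z) z := by
      have h := (hfd z hz).pow 2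
      exact h.congr_deriv (by ring)
    have hNd : HasDerivAt (fun w => f w ^ 2 * σ (xc w))
        (2 * f z * deriv f z * σ x +
          f z ^ 2 * (deriv σ x * ((deriv a x)⁻¹ * (-(2 * ν z * deriv ν z) / ((ν z ^ 2) ^ 2) / 4)))) z := by
      have h := hf2d.mul hσxd
      exact h.congr_deriv (by ring)
    have hDd : HasDerivAt (fun w => 1 - ν w ^ 2) (-(2 * ν z * deriv ν z)) z := by
      have h := hν2d.const_sub 1
      convert h using 1 <;> ring <;> ring
    have hDne : 1 - ν z ^ 2 ≠ 0 := by nlinarith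
    have hLd : HasDerivAt L
        (((2 * f z * deriv f z * σ x +
            f z ^ 2 * (deriv σ x * ((deriv a x)⁻¹ * (-(2 * ν z * deriv ν z) / ((ν z ^ 2) ^ 2) / 4)))) *
            (1 - ν z ^ 2) -
          f z ^ 2 * σ x * (-(2 * ν z * deriv ν z))) / (1 - ν z ^ 2) ^ 2) z := by
      rw [hLfun]
      exact hNd.div hDd hDne
    refine ⟨_, hLd, ?_⟩
    -- positivity of the derivative
    have hf' := hfeq' z hz
    have hσeq : σ x = a x * x * deriv σ x := by
      rw [hax]
      field_simp <;> ring
    have h1mn : 1 - ν z ^ 2 = 4 * ν z ^ 2 * a x := by linear_combination -hn2eq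
    have hn'0 := hν'0 z hz
    have hn'le := hν'le z hz
    have hnum : (2 * f z * deriv f z * σ x +
            f z ^ 2 * (deriv σ x * ((deriv a x)⁻¹ * (-(2 * ν z * deriv ν z) / ((ν z ^ 2) ^ 2) / 4)))) *
            (1 - ν z ^ 2) -
          f z ^ 2 * σ x * (-(2 * ν z * deriv ν z))
        = 2 * a x * deriv σ x * f z ^ 2 *
            (4 * ν z ^ 4 * a x * x / z - deriv ν z / (ν z * deriv a x) + x * ν z * deriv ν z) := by
      rw [hf', hσeq, h1mn]
      field_simp
      ring
    have hB : 0 < 4 * ν z ^ 4 * a x * x / z - deriv ν z / (ν z * deriv a x) + x * ν z * deriv ν z := by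
      have hBsplit : 4 * ν z ^ 4 * a x * x / z - deriv ν z / (ν z * deriv a x) + x * ν z * deriv ν z
          = 4 * ν z ^ 4 * a x * x / z + deriv ν z * (x * ν z - 1 / (ν z * deriv a x)) := by
        field_simp
        ring
      rw [hBsplit]
      have hfirst : 0 < 4 * ν z ^ 4 * a x * x / z := by positivity
      rcases le_or_gt (1 / (ν z * deriv a x)) (x * ν z) with hc | hc
      · have h2 : 0 ≤ deriv ν z * (x * ν z - 1 / (ν z * deriv a x)) :=
          mul_nonneg hn'0 (by linarith)
        linarith
      · have hle2 : ν z / (3 * z) * (x * ν z - 1 / (ν z * deriv a x))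
            ≤ deriv ν z * (x * ν z - 1 / (ν z * deriv a x)) :=
          mul_le_mul_of_nonpos_right hn'le (by linarith)
        have heq2 : 4 * ν z ^ 4 * a x * x / z + ν z / (3 * z) * (x * ν z - 1 / (ν z * deriv a x))
            = (12 * ν z ^ 4 * a x * x * deriv a x + x * ν z ^ 2 * deriv a x - 1) / (3 * z * deriv a x) := by
          field_simp
          ring
        have hn4 : ν z ^ 4 * (4 * a x + 1) ^ 2 = 1 := by
          have h := congrArg (fun t => t ^ 2) hn2eq
          simp only [mul_pow, one_pow] at h
          calc ν z ^ 4 * (4 * a x + 1) ^ 2 = (ν z ^ 2) ^ 2 * (4 * a x + 1) ^ 2 := by ring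
            _ = 1 := h
        have hE : (12 * ν z ^ 4 * a x * x * deriv a x + x * ν z ^ 2 * deriv a x) * (4 * a x + 1) ^ 2
            = x * deriv a x * (16 * a x + 1) := by
          linear_combination (12 * a x * x * deriv a x) * hn4 +
            (x * deriv a x * (4 * a x + 1)) * hn2eq
        have hEgt : (12 * ν z ^ 4 * a x * x * deriv a x + x * ν z ^ 2 * deriv a x) * (4 * a x + 1) ^ 2
            > 1 * (4 * a x + 1) ^ 2 := by
          rw [hE, one_mul]
          exact hkx
        have hfac : (0:ℝ) < (4 * a x + 1) ^ 2 := by positivity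
        have hEgt' : 1 < 12 * ν z ^ 4 * a x * x * deriv a x + x * ν z ^ 2 * deriv a x :=
          lt_of_mul_lt_mul_right (by linarith) hfac.le
        have hpos2 : 0 < 4 * ν z ^ 4 * a x * x / z + ν z / (3 * z) * (x * ν z - 1 / (ν z * deriv a x)) := by
          rw [heq2]
          apply div_pos (by linarith) (by positivity)
        linarith
    rw [hnum]
    exact div_pos (mul_pos (by positivity) hB) (by positivity)
  -- strict monotonicity of L
  have hLdiff : ∀ z ∈ Ioi (0:ℝ), DifferentiableAt ℝ L z := fun z hz =>
    (hmain z hz).choose_spec.1.differentiableAt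
  have hLcont : ContinuousOn L (Ioi 0) := fun z hz =>
    ((hLdiff z hz).continuousAt).continuousWithinAt
  have hSM : StrictMonoOn L (Ioi 0) := by
    apply strictMonoOn_of_deriv_pos (convex_Ioi 0) hLcont
    intro z hz
    rw [interior_Ioi] at hz
    obtain ⟨c, hc, hcpos⟩ := hmain z hz
    rwa [hc.deriv]
  -- limit at 0+
  have hν20 : Tendsto (fun z => ν z ^ 2) (nhdsWithin 0 (Set.Ioi 0)) (nhds 0) := by
    have h := hν0.pow 2
    simpa using h
  have hνz2 : Tendsto (fun z => ν z ^ 2) (nhdsWithin 0 (Set.Ioi 0)) (nhdsWithin 0 (Set.Ioi 0)) := by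
    rw [tendsto_nhdsWithin_iff]
    refine ⟨hν20, ?_⟩
    filter_upwards [self_mem_nhdsWithin] with z hz
    exact mem_Ioi.2 (pow_pos (hνpos z hz) 2)
  have hAtop : Tendsto (fun z => ((ν z) ^ 2)⁻¹ / 4 - 1 / 4) (nhdsWithin 0 (Set.Ioi 0)) atTop := by
    have h1 : Tendsto (fun z => ((ν z) ^ 2)⁻¹) (nhdsWithin 0 (Set.Ioi 0)) atTop :=
      tendsto_inv_nhdsGT_zero.comp hνz2
    have h2 := h1.atTop_div_const (by norm_num : (0:ℝ) < 4)
    exact tendsto_atTop_add_const_right _ _ h2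
  have hxctop : Tendsto xc (nhdsWithin 0 (Set.Ioi 0)) atTop := by
    rw [tendsto_atTop]
    intro b
    filter_upwards [hAtop.eventually_gt_atTop (a (max b 1)), self_mem_nhdsWithin] with z h1 h2
    have hz : (0:ℝ) < z := h2
    by_contra h3
    push_neg at h3
    have hm : max b 1 ∈ Ici (1:ℝ) := mem_Ici.2 (le_max_right _ _)
    have hxz := hxc z hz
    have h4 : a (xc z) ≤ a (max b 1) :=
      haSM.monotoneOn hxz.1 hm (le_trans h3.le (le_max_left _ _))
    rw [hxz.2] at h4
    linarith
  have hσxc1 : Tendsto (fun z => σ (xc z)) (nhdsWithin 0 (Set.Ioi 0)) (nhds 1) :=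
    hM1a.comp hxctop
  have hL0 : Tendsto L (nhdsWithin 0 (Set.Ioi 0)) (nhds 1) := by
    have h1 : Tendsto (fun z => f z ^ 2 * σ (xc z) / (1 - ν z ^ 2)) (nhdsWithin 0 (Set.Ioi 0))
        (nhds (1 ^ 2 * 1 / (1 - 0))) :=
      ((hF1.pow 2).mul hσxc1).div (tendsto_const_nhds.sub hν20) (by norm_num)
    have h2 : (1:ℝ) ^ 2 * 1 / (1 - 0) = 1 := by norm_num
    rw [h2] at h1
    rwa [hLfun]
  -- limit at infinity
  have hc1 : 0 < ν 1 := hνpos 1 one_pos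
  have hνge : ∀ z, (1:ℝ) ≤ z → ν 1 ≤ ν z := fun z hzz =>
    hνmono (mem_Ioi.2 one_pos) (mem_Ioi.2 (by linarith)) hzz
  have hftop : Tendsto f atTop atTop := by
    have hmono : MonotoneOn (fun w => Real.log (f w) - (ν 1) ^ 2 * Real.log w) (Ici 1) := by
      apply monotoneOn_of_deriv_nonneg (convex_Ici 1)
      · intro w hw
        have hw0 : (0:ℝ) < w := lt_of_lt_of_le one_pos hw
        have h1 : ContinuousAt (fun w => Real.log (f w)) w :=
          ContinuousAt.log ((hfd w hw0).differentiableAt.continuousAt) (ne_of_gt (hfpos w hw0))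
        have h2 : ContinuousAt (fun w => (ν 1) ^ 2 * Real.log w) w :=
          (Real.continuousAt_log (ne_of_gt hw0)).const_mul _
        exact (h1.sub h2).continuousWithinAt
      · intro w hw
        rw [interior_Ici] at hw
        have hw0 : (0:ℝ) < w := lt_trans one_pos hw
        exact (((hfd w hw0).differentiableAt.log (ne_of_gt (hfpos w hw0))).sub
          ((Real.differentiableAt_log (ne_of_gt hw0)).const_mul _)).differentiableWithinAt
      · intro w hw
        rw [interior_Ici] at hw
        have hw1 : (1:ℝ) < w := hw
        have hw0 : (0:ℝ) < w := by linarith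
        have hD : HasDerivAt (fun w => Real.log (f w) - (ν 1) ^ 2 * Real.log w)
            (deriv f w / f w - (ν 1) ^ 2 * w⁻¹) w :=
          ((hfd w hw0).log (ne_of_gt (hfpos w hw0))).sub
            ((Real.hasDerivAt_log (ne_of_gt hw0)).const_mul _)
        rw [hD.deriv, hfeq' w hw0]
        have hfw := hfpos w hw0
        have heq : ν w ^ 2 * f w / w / f w = ν w ^ 2 * w⁻¹ := by field_simp
        rw [heq]
        have hge := hνge w hw1.le
        have h2 : (ν 1) ^ 2 ≤ ν w ^ 2 := by nlinarith
        nlinarith [mul_le_mul_of_nonneg_right h2 (inv_pos.2 hw0).le]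
    have hgrow : ∀ w, (1:ℝ) ≤ w → Real.exp (Real.log (f 1) + (ν 1) ^ 2 * Real.log w) ≤ f w := by
      intro w hw
      have h1 := hmono self_mem_Ici (mem_Ici.2 hw) hw
      simp only [Real.log_one, mul_zero, sub_zero] at h1
      have h2 : Real.log (f 1) + (ν 1) ^ 2 * Real.log w ≤ Real.log (f w) := by linarith
      calc Real.exp (Real.log (f 1) + (ν 1) ^ 2 * Real.log w)
          ≤ Real.exp (Real.log (f w)) := Real.exp_le_exp.2 h2
        _ = f w := Real.exp_log (hfpos w (by linarith))
    have hbase : Tendsto (fun w => Real.exp (Real.log (f 1) + (ν 1) ^ 2 * Real.log w)) atTop atTop := by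
      apply Real.tendsto_exp_atTop.comp
      apply tendsto_atTop_add_const_left
      exact Real.tendsto_log_atTop.const_mul_atTop (by positivity)
    apply tendsto_atTop_mono' atTop ?_ hbase
    filter_upwards [eventually_ge_atTop (1:ℝ)] with w hw
    exact hgrow w hw
  -- lower bound for L on [1, ∞)
  have hx1c := hxc 1 one_pos
  have hx1le : (1:ℝ) ≤ xc 1 := mem_Ici.1 hx1c.1
  obtain ⟨t₀, ht₀, hmin⟩ := (isCompact_Icc (a := (1:ℝ)) (b := xc 1)).exists_isMinOn
    ⟨1, left_mem_Icc.2 hx1le⟩ (fun t ht => ((hσ'cd t (lt_of_lt_of_le one_pos ht.1)).continuousAt).continuousWithinAt)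
  have hm : 0 < deriv σ t₀ := hpge t₀ ht₀.1
  have hinv : ∀ u v : ℝ, 0 < u → u ≤ v → v⁻¹ ≤ u⁻¹ := by
    intro u v hu huv
    have hv : 0 < v := lt_of_lt_of_le hu huv
    rw [inv_eq_one_div, inv_eq_one_div]
    exact one_div_le_one_div_of_le hu huv
  have hLlow : ∀ z, (1:ℝ) ≤ z → f z ^ 2 * deriv σ t₀ / 4 ≤ L z := by
    intro z hz
    have hz0 : (0:ℝ) < z := by linarith
    have hxz := hxc z hz0
    have hx1 : 1 < xc z := hxc1 z hz0
    have hn := hνpos z hz0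
    have hn1 := hνlt1 z hz0
    have hxle : xc z ≤ xc 1 := by
      by_contra h'
      push_neg at h'
      have h1 := haSM hx1c.1 hxz.1 h'
      rw [hxz.2, hx1c.2] at h1
      have h2 : ν 1 ≤ ν z := hνge z hz
      have h3 : ν 1 ^ 2 ≤ ν z ^ 2 := by nlinarith
      have h4 : (ν z ^ 2)⁻¹ ≤ (ν 1 ^ 2)⁻¹ := hinv _ _ (by positivity) h3
      linarith
    have hpz : 0 < deriv σ (xc z) := hpge _ hx1.le
    have hmle : deriv σ t₀ ≤ deriv σ (xc z) := isMinOn_iff.1 hmin (xc z) ⟨hx1.le, hxle⟩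
    have hn2eq : ν z ^ 2 * (4 * a (xc z) + 1) = 1 := by
      rw [hxz.2]
      field_simp <;> ring
    have haxp : 0 < a (xc z) := hapos' _ hx1
    have hLz : L z = f z ^ 2 * (xc z * deriv σ (xc z)) / (4 * ν z ^ 2) := by
      rw [hL z]
      have hσeq : σ (xc z) = a (xc z) * xc z * deriv σ (xc z) := by
        rw [ha]
        field_simp <;> ring
      have h1mn : 1 - ν z ^ 2 = 4 * ν z ^ 2 * a (xc z) := by linear_combination -hn2eq
      rw [hσeq, h1mn]
      rw [div_eq_div_iff (by positivity) (by positivity)]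
      ring
    rw [hLz]
    have hn2le : ν z ^ 2 ≤ 1 := by nlinarith
    have hstep1 : f z ^ 2 * deriv σ t₀ / 4 ≤ f z ^ 2 * (xc z * deriv σ (xc z)) / 4 := by
      gcongr
      nlinarith
    have hstep2 : f z ^ 2 * (xc z * deriv σ (xc z)) / 4
        ≤ f z ^ 2 * (xc z * deriv σ (xc z)) / (4 * ν z ^ 2) := by
      have ha2 : 0 ≤ f z ^ 2 * (xc z * deriv σ (xc z)) := by positivity
      rw [div_le_div_iff₀ (by positivity) (by positivity)]
      nlinarith [mul_le_mul_of_nonneg_left hn2le ha2]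
    linarith
  have hLtop : Tendsto L atTop atTop := by
    have hbase : Tendsto (fun z => f z ^ 2 * deriv σ t₀ / 4) atTop atTop := by
      have h1 : Tendsto (fun z => f z * f z) atTop atTop := hftop.atTop_mul_atTop₀ hftop
      have h2 := h1.atTop_mul_const (show (0:ℝ) < deriv σ t₀ / 4 by positivity)
      apply h2.congr
      intro z
      ring
    apply tendsto_atTop_mono' atTop ?_ hbase
    filter_upwards [eventually_ge_atTop (1:ℝ)] with z hz
    exact hLlow z hz
  refine ⟨hSM, hL0, hLtop, ?_⟩
  intro finf hfinf
  have ht1 : 1 < finf ^ 2 := by nlinarith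
  have hev1 : ∀ᶠ z in nhdsWithin 0 (Set.Ioi 0), L z < finf ^ 2 :=
    hL0.eventually (eventually_lt_nhds ht1)
  obtain ⟨z₁, hz₁L, hz₁0⟩ := (hev1.and self_mem_nhdsWithin).exists
  have hz₁0' : (0:ℝ) < z₁ := hz₁0
  obtain ⟨z₂, hz₂L, hz₂ge⟩ := ((hLtop.eventually_ge_atTop (finf ^ 2)).and (eventually_ge_atTop z₁)).exists
  have hsub : Icc z₁ z₂ ⊆ Ioi 0 := fun w hw => lt_of_lt_of_le hz₁0' hw.1
  obtain ⟨zc, hzc, hzcL⟩ := intermediate_value_Icc hz₂ge (hLcont.mono hsub) ⟨hz₁L.le, hz₂L⟩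
  have hzc0 : 0 < zc := lt_of_lt_of_le hz₁0' hzc.1
  refine ⟨zc, ⟨hzc0, hzcL⟩, ?_⟩
  rintro y ⟨hy0, hyL⟩
  exact hSM.injOn (mem_Ioi.2 hy0) (mem_Ioi.2 hzc0) (by rw [hyL, hzcL])
end

section
/- Fix μ ≠ 0 and define the auxiliary function 𝓕_μ(x) := ν(z(x))²·(1 + 4a(x)) − 1 for x ≥ 1, where z(x) := 2|μ|/√(x⁵σ'(x)) and a(x) := σ(x)/(x σ'(x)). Then 𝓕_μ'(x) > 0 for all x > 1, so 𝓕_μ is strictly monotonically increasing and has at most one zero in (1,∞); moreover, a point (x_c, z_c) with x_c > 1, z_c > 0 is a critical point of F_μ (both partial derivatives of F_μ vanish there) if and only if 𝓕_μ(x_c) = 0 and z_c = z(x_c). -/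
open Real Filter Set Topology

lemma derivCD {g : ℝ → ℝ} {x : ℝ} (h : ContDiffAt ℝ (⊤ : ℕ∞) g x) :
    ContDiffAt ℝ (⊤ : ℕ∞) (deriv g) x := by
  have h1 : ContDiffAt ℝ (⊤ : ℕ∞) (fderiv ℝ g) x :=
    h.fderiv_right (by rw [show ((⊤:ℕ∞) : WithTop ℕ∞) + 1 = ((⊤:ℕ∞) : WithTop ℕ∞) from rfl])
  have h2 : deriv g = fun y => (fderiv ℝ g y) 1 := by
    funext y; rw [fderiv_apply_one_eq_deriv]
  rw [h2]
  exact h1.clm_apply contDiffAt_const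

lemma sigma_bound (σ : ℝ → ℝ) (σ₁ : ℝ) (hσ₁ : 0 < σ₁)
    (hσsm : ∀ x > (0:ℝ), ContDiffAt ℝ (⊤ : ℕ∞) σ x)
    (hM1a : Filter.Tendsto σ Filter.atTop (nhds 1))
    (hM1b : Filter.Tendsto (fun x => x ^ 2 * deriv σ x) Filter.atTop (nhds σ₁))
    (hM3 : ∀ x > (1:ℝ), 0 < σ x ∧ 0 < deriv σ x)
    (hM4r : ∀ x > (1:ℝ), deriv (fun y => y ^ 2 * deriv σ y) x / (x * deriv σ x)
        < σ₁ / (2 * x) * (9 / (8 + σ₁ / (2 * x)))) :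
    ∀ x > (1:ℝ), σ₁ * σ x < x ^ 2 * deriv σ x := by
  set w : ℝ → ℝ := fun y => σ₁ * σ y - y ^ 2 * deriv σ y with hw
  have hderiv : ∀ y > (1:ℝ), HasDerivAt w (σ₁ * deriv σ y - deriv (fun t => t ^ 2 * deriv σ t) y) y ∧
      0 < σ₁ * deriv σ y - deriv (fun t => t ^ 2 * deriv σ t) y := by
    intro y hy
    have hy0 : (0:ℝ) < y := by linarith
    have hσ'd : DifferentiableAt ℝ (deriv σ) y := (derivCD (hσsm y hy0)).differentiableAt (by simp)
    have hσd : DifferentiableAt ℝ σ y := (hσsm y hy0).differentiableAt (by simp)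
    have hhd : DifferentiableAt ℝ (fun t => t ^ 2 * deriv σ t) y :=
      (differentiableAt_pow 2).mul hσ'd
    have H1 : HasDerivAt (fun t => t ^ 2 * deriv σ t) (deriv (fun t => t ^ 2 * deriv σ t) y) y :=
      hhd.hasDerivAt
    have Hw : HasDerivAt w (σ₁ * deriv σ y - deriv (fun t => t ^ 2 * deriv σ t) y) y :=
      ((hσd.hasDerivAt.const_mul σ₁).sub H1)
    refine ⟨Hw, ?_⟩
    have hs' := (hM3 y hy).2
    have hB := hM4r y hy
    have hB2 : σ₁ / (2 * y) * (9 / (8 + σ₁ / (2 * y))) = 9 * σ₁ / (16 * y + σ₁) := by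
      have h2y : (2:ℝ)*y ≠ 0 := by positivity
      have h8 : (8:ℝ) + σ₁/(2*y) ≠ 0 := by positivity
      field_simp
      ring
    rw [hB2] at hB
    have hys : 0 < y * deriv σ y := by positivity
    have hDh : deriv (fun t => t ^ 2 * deriv σ t) y < 9 * σ₁ / (16 * y + σ₁) * (y * deriv σ y) :=
      (div_lt_iff₀ hys).mp hB
    have h16 : (0:ℝ) < 16 * y + σ₁ := by linarith
    rw [div_mul_eq_mul_div, lt_div_iff₀ h16] at hDh
    nlinarith [mul_pos hσ₁ hs']
  have hmono : StrictMonoOn w (Set.Ici (1:ℝ)) := by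
    apply strictMonoOn_of_deriv_pos (convex_Ici 1)
    · intro y hy
      have hy0 : (0:ℝ) < y := lt_of_lt_of_le one_pos hy
      have hσ'c : ContinuousAt (deriv σ) y :=
        ((derivCD (hσsm y hy0)).differentiableAt (by simp)).continuousAt
      have hσc : ContinuousAt σ y :=
        ((hσsm y hy0).differentiableAt (by simp)).continuousAt
      have : ContinuousAt w y := (hσc.const_mul σ₁).sub ((continuousAt_id.pow 2).mul hσ'c)
      exact this.continuousWithinAt
    · intro y hy
      rw [interior_Ici] at hy
      obtain ⟨Hw, hpos⟩ := hderiv y hy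
      rw [Hw.deriv]
      exact hpos
  intro x hx
  have hlim : Filter.Tendsto w Filter.atTop (nhds 0) := by
    have := (hM1a.const_mul σ₁).sub hM1b
    simpa [mul_one] using this
  have hle : w x ≤ 0 := by
    refine ge_of_tendsto hlim ?_
    filter_upwards [eventually_gt_atTop x] with y hy
    exact (hmono (by simp; linarith) (by simp; linarith [hy, hx]) hy).le
  have hlt : w x < w (x + 1) := hmono (by simp; linarith) (by simp; linarith) (by linarith)
  have hle1 : w (x+1) ≤ 0 := by
    refine ge_of_tendsto hlim ?_
    filter_upwards [eventually_gt_atTop (x+1)] with y hy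
    exact (hmono (by simp; linarith) (by simp; linarith) hy).le
  have : w x < 0 := lt_of_lt_of_le hlt hle1
  simpa [hw, sub_neg] using this


-- key positivity: x * deriv G = -νz*u*(3+β)*(1+4a) + 4*νz^2*(1+a-a*β) > 0
lemma key_ineq (ν u β A x σ₁ : ℝ) (hν : 0 < ν) (hu : 0 ≤ u) (hu3 : 3 * u ≤ ν)
    (hA : 0 < A) (hAx : A * σ₁ < x) (hx : 1 < x) (hσ₁ : 0 < σ₁)
    (hβl : -3 < β) (hβu : β * (16 * x + σ₁) < 9 * σ₁) :
    0 < -(ν * u * (3 + β) * (1 + 4 * A)) + 4 * ν ^ 2 * (1 + A - A * β) := by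
  have h1 : 0 < (3 + β) * (1 + 4 * A) := by nlinarith
  have h2 : ν * u * ((3+β)*(1+4*A)) ≤ ν * (ν/3) * ((3+β)*(1+4*A)) := by
    apply mul_le_mul_of_nonneg_right _ h1.le
    have : u ≤ ν / 3 := by linarith
    nlinarith
  have h3 : β * (1 + 16 * A) < 9 := by
    rcases le_or_gt β 0 with hb | hb
    · nlinarith
    · have : β * (16 * A * σ₁) ≤ β * (16 * x) := by nlinarith
      nlinarith
  nlinarith [sq_nonneg ν, mul_pos hν hν]


lemma Dz_eq (sq x s' Dh m : ℝ) (hsq : 0 < sq) (h2 : sq^2 = x^5*s') (hx : 0 < x) (hs' : 0 < s') :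
    (0*sq - 2*m*(1/(2*sq)*(3*x^2*(x^2*s')+x^3*Dh)))/sq^2
      = -(2*m/sq*(3+Dh/(x*s')))/(2*x) := by
  rw [eq_comm]
  field_simp
  linear_combination (-m*(3*x*s'+Dh)) * h2

lemma Da_eq (x s s' Dh : ℝ) (hx : x ≠ 0) (hs' : s' ≠ 0) :
    ((1*s + x*s')*(x^2*s') - x*s*Dh)/(x^2*s')^2
      = (1 + s/(x*s') - s/(x*s') * (Dh/(x*s')))/x := by
  field_simp
  ring

lemma G_deriv_eq (nz n' z x A β : ℝ) (hx : x ≠ 0) :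
    2*nz*(n' * (-(z*(3+β))/(2*x)))*(1+4*A) + nz^2*(4*((1+A-A*β)/x))
      = (-(nz*(z*n')*(3+β)*(1+4*A)) + 4*nz^2*(1+A-A*β))/x := by
  field_simp

theorem stmt_11 (σ f ν : ℝ → ℝ) (σ₁ : ℝ)
    (hσsm : ∀ x > (0:ℝ), ContDiffAt ℝ (⊤ : ℕ∞) σ x)
    (hσ₁ : 0 < σ₁)
    (hM1a : Filter.Tendsto σ Filter.atTop (nhds 1))
    (hM1b : Filter.Tendsto (fun x => x ^ 2 * deriv σ x) Filter.atTop (nhds σ₁))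
    (hM2a : σ 1 = 0)
    (hM2b : 0 < deriv σ 1)
    (hM3 : ∀ x > (1:ℝ), 0 < σ x ∧ 0 < deriv σ x)
    (hM4 : ∀ x > (1:ℝ),
      -3 < deriv (fun y => y ^ 2 * deriv σ y) x / (x * deriv σ x) ∧
      deriv (fun y => y ^ 2 * deriv σ y) x / (x * deriv σ x)
        < σ₁ / (2 * x) * (9 / (8 + σ₁ / (2 * x))))
    (hfsm : ∀ z > (0:ℝ), ContDiffAt ℝ (⊤ : ℕ∞) f z)
    (hfpos : ∀ z > (0:ℝ), 0 < f z)
    (hν : ∀ z : ℝ, ν z = Real.sqrt (z * deriv f z / f z))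
    (hF1 : Filter.Tendsto f (nhdsWithin 0 (Set.Ioi 0)) (nhds 1))
    (hF2 : ∀ z > (0:ℝ), 0 < ν z ∧ ν z < 1)
    (hF3 : ∀ z > (0:ℝ), 0 ≤ z * deriv ν z / ν z ∧ z * deriv ν z / ν z ≤ 1 / 3)
    (F : ℝ → ℝ → ℝ → ℝ)
    (hF : ∀ μ x z : ℝ, F μ x z = f z ^ 2 * (σ x + μ ^ 2 / (x ^ 4 * z ^ 2)))
    (μ : ℝ) (hμ : μ ≠ 0)
    (a zfun G : ℝ → ℝ)
    (ha : ∀ x : ℝ, a x = σ x / (x * deriv σ x))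
    (hzfun : ∀ x : ℝ, zfun x = 2 * |μ| / Real.sqrt (x ^ 5 * deriv σ x))
    (hG : ∀ x : ℝ, G x = (ν (zfun x)) ^ 2 * (1 + 4 * a x) - 1) :
    (∀ x > (1:ℝ), 0 < deriv G x) ∧
    StrictMonoOn G (Set.Ioi 1) ∧
    (∀ x ∈ Set.Ioi (1:ℝ), ∀ y ∈ Set.Ioi (1:ℝ), G x = 0 → G y = 0 → x = y) ∧
    ∀ xc zc : ℝ, 1 < xc → 0 < zc →
      ((deriv (fun x => F μ x zc) xc = 0 ∧ deriv (fun z => F μ xc z) zc = 0) ↔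
        (G xc = 0 ∧ zc = zfun xc)) := by
  have hμpos : (0:ℝ) < |μ| := abs_pos.mpr hμ
  have hGf : G = fun y => (ν (zfun y)) ^ 2 * (1 + 4 * a y) - 1 := funext hG
  have hzf : zfun = fun y => 2 * |μ| / Real.sqrt (y ^ 5 * deriv σ y) := funext hzfun
  have hνf : ν = fun z => Real.sqrt (z * deriv f z / f z) := funext hν
  -- basic facts about ν
  have hgpos : ∀ t > (0:ℝ), 0 < t * deriv f t / f t := by
    intro t ht
    have h1 := (hF2 t ht).1
    rw [hν t] at h1
    exact Real.sqrt_pos.mp h1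
  have hνsq : ∀ t > (0:ℝ), ν t ^ 2 = t * deriv f t / f t := by
    intro t ht
    rw [hν t]
    exact Real.sq_sqrt (hgpos t ht).le
  have hνdiff : ∀ t > (0:ℝ), DifferentiableAt ℝ ν t := by
    intro t ht
    have hfd : DifferentiableAt ℝ f t := (hfsm t ht).differentiableAt (by simp)
    have hf'd : DifferentiableAt ℝ (deriv f) t :=
      (derivCD (hfsm t ht)).differentiableAt (by simp)
    have hgd : DifferentiableAt ℝ (fun z => z * deriv f z / f z) t :=
      (differentiableAt_id.mul hf'd).div hfd (hfpos t ht).ne'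
    rw [hνf]
    exact hgd.sqrt (hgpos t ht).ne'
  have hwx := sigma_bound σ σ₁ hσ₁ hσsm hM1a hM1b hM3 (fun x hx => (hM4 x hx).2)
  -- master derivative computation of G
  have master : ∀ x > (1:ℝ), ∃ d, HasDerivAt G d x ∧ 0 < d := by
    intro x hx
    have hx0 : (0:ℝ) < x := by linarith
    obtain ⟨hσp, hs'⟩ := hM3 x hx
    have hσd : DifferentiableAt ℝ σ x := (hσsm x hx0).differentiableAt (by simp)
    have hσ'd : DifferentiableAt ℝ (deriv σ) x :=
      (derivCD (hσsm x hx0)).differentiableAt (by simp)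
    obtain ⟨Dh, hDh⟩ : ∃ d, deriv (fun t => t ^ 2 * deriv σ t) x = d := ⟨_, rfl⟩
    have Hh : HasDerivAt (fun t => t ^ 2 * deriv σ t) Dh x := by
      rw [← hDh]; exact ((differentiableAt_pow 2).mul hσ'd).hasDerivAt
    have hβl : -3 < Dh / (x * deriv σ x) := by rw [← hDh]; exact (hM4 x hx).1
    have hβu : Dh / (x * deriv σ x) < σ₁ / (2 * x) * (9 / (8 + σ₁ / (2 * x))) := by
      rw [← hDh]; exact (hM4 x hx).2
    have HP : HasDerivAt (fun y => y ^ 5 * deriv σ y)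
        (3 * x ^ 2 * (x ^ 2 * deriv σ x) + x ^ 3 * Dh) x := by
      have heq : (fun y : ℝ => y ^ 5 * deriv σ y) = fun y => y ^ 3 * (y ^ 2 * deriv σ y) := by
        funext y; ring
      rw [heq]
      have h5 := (hasDerivAt_pow 3 x).mul Hh
      norm_num at h5
      exact h5
    have hPpos : 0 < x ^ 5 * deriv σ x := by positivity
    have hsqpos : 0 < Real.sqrt (x ^ 5 * deriv σ x) := Real.sqrt_pos.mpr hPpos
    have hsq2 : (Real.sqrt (x ^ 5 * deriv σ x)) ^ 2 = x ^ 5 * deriv σ x := Real.sq_sqrt hPpos.le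
    have HQ : HasDerivAt (fun y => Real.sqrt (y ^ 5 * deriv σ y))
        (1 / (2 * Real.sqrt (x ^ 5 * deriv σ x)) * (3 * x ^ 2 * (x ^ 2 * deriv σ x) + x ^ 3 * Dh))
        x := (Real.hasDerivAt_sqrt hPpos.ne').comp x HP
    have Hz0 : HasDerivAt zfun
        ((0 * Real.sqrt (x ^ 5 * deriv σ x) - 2 * |μ| *
          (1 / (2 * Real.sqrt (x ^ 5 * deriv σ x)) * (3 * x ^ 2 * (x ^ 2 * deriv σ x) + x ^ 3 * Dh)))
          / (Real.sqrt (x ^ 5 * deriv σ x)) ^ 2) x := by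
      rw [hzf]
      exact (hasDerivAt_const x (2 * |μ|)).div HQ hsqpos.ne'
    have Hz : HasDerivAt zfun (-(zfun x * (3 + Dh / (x * deriv σ x))) / (2 * x)) x := by
      rw [hzfun x, ← Dz_eq (Real.sqrt (x ^ 5 * deriv σ x)) x (deriv σ x) Dh |μ| hsqpos hsq2 hx0 hs']
      exact Hz0
    have hzpos : 0 < zfun x := by rw [hzfun x]; positivity
    have hden : x ^ 2 * deriv σ x ≠ 0 := by positivity
    have Ha0 : HasDerivAt a
        (((1 * σ x + x * deriv σ x) * (x ^ 2 * deriv σ x) - x * σ x * Dh)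
          / (x ^ 2 * deriv σ x) ^ 2) x := by
      have heq : a =ᶠ[nhds x] fun y => y * σ y / (y ^ 2 * deriv σ y) := by
        filter_upwards [eventually_gt_nhds hx0] with y hy
        rw [ha y, show y ^ 2 * deriv σ y = y * (y * deriv σ y) by ring,
          mul_div_mul_left _ _ hy.ne']
      have HN : HasDerivAt (fun y => y * σ y) (1 * σ x + x * deriv σ x) x :=
        (hasDerivAt_id x).mul hσd.hasDerivAt
      exact (HN.div Hh hden).congr_of_eventuallyEq heq
    have Ha : HasDerivAt a
        ((1 + a x - a x * (Dh / (x * deriv σ x))) / x) x := by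
      rw [ha x, ← Da_eq x (σ x) (deriv σ x) Dh hx0.ne' hs'.ne']
      exact Ha0
    have Hν : HasDerivAt ν (deriv ν (zfun x)) (zfun x) := (hνdiff (zfun x) hzpos).hasDerivAt
    have Hνz : HasDerivAt (fun y => ν (zfun y))
        (deriv ν (zfun x) * (-(zfun x * (3 + Dh / (x * deriv σ x))) / (2 * x))) x := Hν.comp x Hz
    have Hν2 : HasDerivAt (fun y => ν (zfun y) ^ 2)
        (2 * ν (zfun x) * (deriv ν (zfun x) *
          (-(zfun x * (3 + Dh / (x * deriv σ x))) / (2 * x)))) x := by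
      have h6 := Hνz.pow 2
      refine h6.congr_deriv ?_
      push_cast
      ring
    have Hv : HasDerivAt (fun y => 1 + 4 * a y)
        (4 * ((1 + a x - a x * (Dh / (x * deriv σ x))) / x)) x := (Ha.const_mul 4).const_add 1
    have HG : HasDerivAt G
        ((-(ν (zfun x) * (zfun x * deriv ν (zfun x)) * (3 + Dh / (x * deriv σ x)) * (1 + 4 * a x))
          + 4 * ν (zfun x) ^ 2 * (1 + a x - a x * (Dh / (x * deriv σ x)))) / x) x := by
      rw [hGf, ← G_deriv_eq (ν (zfun x)) (deriv ν (zfun x)) (zfun x) x (a x)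
        (Dh / (x * deriv σ x)) hx0.ne']
      exact (Hν2.mul Hv).sub_const 1
    refine ⟨_, HG, ?_⟩
    -- positivity
    have hβu' : Dh / (x * deriv σ x) * (16 * x + σ₁) < 9 * σ₁ := by
      have hB2 : σ₁ / (2 * x) * (9 / (8 + σ₁ / (2 * x))) = 9 * σ₁ / (16 * x + σ₁) := by
        have h2y : (2:ℝ) * x ≠ 0 := by positivity
        have h8 : (8:ℝ) + σ₁ / (2 * x) ≠ 0 := by positivity
        field_simp
        ring
      rw [hB2] at hβu
      have h16 : (0:ℝ) < 16 * x + σ₁ := by linarith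
      calc Dh / (x * deriv σ x) * (16 * x + σ₁)
          < 9 * σ₁ / (16 * x + σ₁) * (16 * x + σ₁) := mul_lt_mul_of_pos_right hβu h16
        _ = 9 * σ₁ := by field_simp
    have hApos : 0 < a x := by rw [ha x]; positivity
    have hAx : a x * σ₁ < x := by
      rw [ha x, div_mul_eq_mul_div, div_lt_iff₀ (by positivity : 0 < x * deriv σ x)]
      nlinarith [hwx x hx]
    obtain ⟨hν0, hν1⟩ := hF2 (zfun x) hzpos
    have hu0 : 0 ≤ zfun x * deriv ν (zfun x) := by
      have h1 := (hF3 (zfun x) hzpos).1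
      have h7 : zfun x * deriv ν (zfun x) = zfun x * deriv ν (zfun x) / ν (zfun x) * ν (zfun x) := by
        field_simp
      rw [h7]
      exact mul_nonneg h1 hν0.le
    have hu3 : 3 * (zfun x * deriv ν (zfun x)) ≤ ν (zfun x) := by
      have h1 := (hF3 (zfun x) hzpos).2
      rw [div_le_iff₀ hν0] at h1
      linarith
    exact div_pos (key_ineq (ν (zfun x)) (zfun x * deriv ν (zfun x)) (Dh / (x * deriv σ x))
      (a x) x σ₁ hν0 hu0 hu3 hApos hAx hx hσ₁ hβl hβu') hx0
  have part1 : ∀ x > (1:ℝ), 0 < deriv G x := by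
    intro x hx
    obtain ⟨d, hd, hdpos⟩ := master x hx
    rw [hd.deriv]
    exact hdpos
  have part2 : StrictMonoOn G (Set.Ioi 1) := by
    apply strictMonoOn_of_deriv_pos (convex_Ioi 1)
    · intro y hy
      obtain ⟨d, hd, _⟩ := master y hy
      exact hd.differentiableAt.continuousAt.continuousWithinAt
    · intro y hy
      rw [interior_Ioi] at hy
      exact part1 y hy
  refine ⟨part1, part2, ?_, ?_⟩
  · intro x hx y hy hgx hgy
    exact part2.injOn hx hy (by rw [hgx, hgy])
  · intro xc zc hxc hzc
    have hxc0 : (0:ℝ) < xc := by linarith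
    obtain ⟨hσp, hs'⟩ := hM3 xc hxc
    have hσd : DifferentiableAt ℝ σ xc := (hσsm xc hxc0).differentiableAt (by simp)
    have hfz : 0 < f zc := hfpos zc hzc
    have hfd : DifferentiableAt ℝ f zc := (hfsm zc hzc).differentiableAt (by simp)
    have hνsqc : ν zc ^ 2 = zc * deriv f zc / f zc := hνsq zc hzc
    have H1 : HasDerivAt (fun x => F μ x zc)
        (f zc ^ 2 * (deriv σ xc - 4 * μ ^ 2 / (xc ^ 5 * zc ^ 2))) xc := by
      have hfun : (fun x => F μ x zc) = fun x => f zc ^ 2 * (σ x + μ ^ 2 / (x ^ 4 * zc ^ 2)) :=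
        funext fun x => hF μ x zc
      rw [hfun]
      have hD : HasDerivAt (fun x : ℝ => x ^ 4 * zc ^ 2) (4 * xc ^ 3 * zc ^ 2) xc := by
        have h0 := (hasDerivAt_pow 4 xc).mul_const (zc ^ 2)
        norm_num at h0
        convert h0 using 1
      have hd : HasDerivAt (fun x : ℝ => μ ^ 2 / (x ^ 4 * zc ^ 2))
          (-(4 * μ ^ 2) / (xc ^ 5 * zc ^ 2)) xc := by
        have h0 := (hasDerivAt_const xc (μ ^ 2)).div hD (by positivity)
        refine h0.congr_deriv ?_
        field_simp
        ring
      have h1 := (hσd.hasDerivAt.add hd).const_mul (f zc ^ 2)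
      refine h1.congr_deriv ?_
      ring
    have H2 : HasDerivAt (fun z => F μ xc z)
        (2 * f zc * deriv f zc * (σ xc + μ ^ 2 / (xc ^ 4 * zc ^ 2))
          - f zc ^ 2 * (2 * μ ^ 2) / (xc ^ 4 * zc ^ 3)) zc := by
      have hfun : (fun z => F μ xc z) = fun z => f z ^ 2 * (σ xc + μ ^ 2 / (xc ^ 4 * z ^ 2)) :=
        funext fun z => hF μ xc z
      rw [hfun]
      have hD : HasDerivAt (fun z : ℝ => xc ^ 4 * z ^ 2) (xc ^ 4 * (2 * zc)) zc := by
        have h0 := (hasDerivAt_pow 2 zc).const_mul (xc ^ 4)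
        norm_num at h0
        convert h0 using 1
      have hd : HasDerivAt (fun z : ℝ => μ ^ 2 / (xc ^ 4 * z ^ 2))
          (-(2 * μ ^ 2) / (xc ^ 4 * zc ^ 3)) zc := by
        have h0 := (hasDerivAt_const zc (μ ^ 2)).div hD (by positivity)
        refine h0.congr_deriv ?_
        field_simp
        ring
      have hsq : HasDerivAt (fun z => f z ^ 2) (2 * f zc * deriv f zc) zc := by
        have h0 := hfd.hasDerivAt.pow 2
        norm_num at h0
        exact h0
      have h1 := hsq.mul ((hasDerivAt_const zc (σ xc)).add hd)
      refine h1.congr_deriv ?_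
      simp only [Pi.add_apply]
      field_simp
      ring
    rw [H1.deriv, H2.deriv]
    have hPpos : 0 < xc ^ 5 * deriv σ xc := by positivity
    have hZpos : 0 < zfun xc := by rw [hzfun xc]; positivity
    have hsq2 : (Real.sqrt (xc ^ 5 * deriv σ xc)) ^ 2 = xc ^ 5 * deriv σ xc :=
      Real.sq_sqrt hPpos.le
    have hZsq : zfun xc ^ 2 * (xc ^ 5 * deriv σ xc) = 4 * μ ^ 2 := by
      rw [hzfun xc, div_pow, hsq2, div_mul_cancel₀ _ hPpos.ne', mul_pow, sq_abs]
      ring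
    constructor
    · rintro ⟨h1, h2⟩
      have hfz2 : f zc ^ 2 ≠ 0 := by positivity
      have h3 : deriv σ xc - 4 * μ ^ 2 / (xc ^ 5 * zc ^ 2) = 0 :=
        (mul_eq_zero.mp h1).resolve_left hfz2
      have hE1 : zc ^ 2 * (xc ^ 5 * deriv σ xc) = 4 * μ ^ 2 := by
        have h4 : 4 * μ ^ 2 / (xc ^ 5 * zc ^ 2) = deriv σ xc := by linarith
        field_simp at h4
        linarith
      have hzZ : zc = zfun xc := by
        have h5 : zc ^ 2 = zfun xc ^ 2 :=
          mul_right_cancel₀ hPpos.ne' (hE1.trans hZsq.symm)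
        have h6 : (zc - zfun xc) * (zc + zfun xc) = 0 := by linear_combination h5
        rcases mul_eq_zero.mp h6 with h | h
        · linarith [sub_eq_zero.mp h]
        · linarith
      refine ⟨?_, hzZ⟩
      have hkey : deriv f zc * zc * (4 * σ xc + xc * deriv σ xc)
          = f zc * (xc * deriv σ xc) := by
        field_simp at h2
        have h7 : (deriv f zc * zc * (4 * σ xc + xc * deriv σ xc) - f zc * (xc * deriv σ xc))
            * (xc ^ 8 * zc ^ 4 * f zc / 2) = 0 := by
          linear_combination (xc ^ 4 * zc ^ 2) * h2 + ((deriv f zc * zc - f zc) * f zc * xc ^ 4 * zc ^ 2 / 2) * hE1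
        have h8 := (mul_eq_zero.mp h7).resolve_right (by positivity)
        linarith
      rw [hG xc, ← hzZ, hνsqc, ha xc]
      field_simp
      linear_combination hkey
    · rintro ⟨hG0, hzZ⟩
      have hE1 : zc ^ 2 * (xc ^ 5 * deriv σ xc) = 4 * μ ^ 2 := by rw [hzZ]; exact hZsq
      have hkey : deriv f zc * zc * (4 * σ xc + xc * deriv σ xc)
          = f zc * (xc * deriv σ xc) := by
        rw [hG xc, ← hzZ, hνsqc, ha xc] at hG0
        field_simp at hG0
        linear_combination hG0
      constructor
      · have h3 : deriv σ xc - 4 * μ ^ 2 / (xc ^ 5 * zc ^ 2) = 0 := by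
          field_simp
          linear_combination hE1
        rw [h3, mul_zero]
      · field_simp
        linear_combination (xc ^ 4 * zc ^ 2 * f zc / 2) * hkey
          - ((deriv f zc * zc - f zc) * f zc / 2) * hE1
end

section
/- Fix μ ≠ 0. The function H(z) := (μ²/z²)·(ν(z)⁻² − 1), z > 0, is strictly monotonically decreasing, satisfies H(z) → ∞ as z → 0 and H(z) → 0 as z → ∞, and is therefore a bijection from (0,∞) onto (0,∞); its derivative satisfies H'(z) = −(2μ²/(z³ν(z)²))·(1 − ν(z)² + z ν'(z)/ν(z)) < 0 for all z > 0. -/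
set_option maxHeartbeats 1000000


open Real Filter Set Topology

theorem stmt_12 (f ν : ℝ → ℝ)
    (hfsm : ∀ z > (0:ℝ), ContDiffAt ℝ (⊤ : ℕ∞) f z)
    (hfpos : ∀ z > (0:ℝ), 0 < f z)
    (hν : ∀ z : ℝ, ν z = Real.sqrt (z * deriv f z / f z))
    (hF1 : Filter.Tendsto f (nhdsWithin 0 (Set.Ioi 0)) (nhds 1))
    (hF2 : ∀ z > (0:ℝ), 0 < ν z ∧ ν z < 1)
    (hF3 : ∀ z > (0:ℝ), 0 ≤ z * deriv ν z / ν z ∧ z * deriv ν z / ν z ≤ 1 / 3)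
    (μ : ℝ) (hμ : μ ≠ 0)
    (H : ℝ → ℝ) (hH : ∀ z : ℝ, H z = μ ^ 2 / z ^ 2 * (((ν z) ^ 2)⁻¹ - 1)) :
    StrictAntiOn H (Set.Ioi 0) ∧
    Filter.Tendsto H (nhdsWithin 0 (Set.Ioi 0)) Filter.atTop ∧
    Filter.Tendsto H Filter.atTop (nhds 0) ∧
    Set.BijOn H (Set.Ioi 0) (Set.Ioi 0) ∧
    ∀ z > (0:ℝ),
      deriv H z = -(2 * μ ^ 2 / (z ^ 3 * (ν z) ^ 2)) *
        (1 - (ν z) ^ 2 + z * deriv ν z / ν z) ∧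
      deriv H z < 0 := by
  have hμ2 : 0 < μ ^ 2 := by positivity
  -- positivity of the argument of sqrt
  have harg : ∀ z > (0:ℝ), 0 < z * deriv f z / f z := by
    intro z hz
    exact Real.sqrt_pos.mp (by rw [← hν z]; exact (hF2 z hz).1)
  -- deriv f is differentiable on (0,∞)
  have hdf : ∀ z > (0:ℝ), DifferentiableAt ℝ (deriv f) z := by
    intro z hz
    have h2 : ContDiffAt ℝ (⊤ : ℕ∞) (fun y => fderiv ℝ f y 1) z :=
      ((hfsm z hz).fderiv_right (by exact_mod_cast le_top)).clm_apply contDiffAt_const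
    have h3 : DifferentiableAt ℝ (fun y => fderiv ℝ f y 1) z := h2.differentiableAt (by simp)
    have he : deriv f = fun y => fderiv ℝ f y 1 := funext fun y => fderiv_apply_one_eq_deriv.symm
    rw [he]; exact h3
  -- ν is differentiable on (0,∞)
  have hνe : ν = fun z => Real.sqrt (z * deriv f z / f z) := funext hν
  have hνd : ∀ z > (0:ℝ), DifferentiableAt ℝ ν z := by
    intro z hz
    have hid : DifferentiableAt ℝ (fun y => y * deriv f y / f y) z :=
      (differentiableAt_id.mul (hdf z hz)).div
        ((hfsm z hz).differentiableAt (by simp)) (hfpos z hz).ne'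
    rw [hνe]
    exact hid.sqrt (harg z hz).ne'
  -- derivative of H
  have hHd : ∀ z > (0:ℝ), HasDerivAt H
      (-(2 * μ ^ 2 / (z ^ 3 * (ν z) ^ 2)) * (1 - (ν z) ^ 2 + z * deriv ν z / ν z)) z := by
    intro z hz
    have hn := (hF2 z hz).1
    have hz0 : z ≠ 0 := hz.ne'
    have hd : HasDerivAt ν (deriv ν z) z := (hνd z hz).hasDerivAt
    have h1 : HasDerivAt (fun y => ((ν y) ^ 2)⁻¹ - 1)
        (-((2:ℕ) * ν z ^ 1 * deriv ν z) / ((ν z) ^ 2) ^ 2) z :=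
      ((hd.pow 2).inv (pow_pos hn 2).ne').sub_const 1
    have h2 : HasDerivAt (fun y : ℝ => μ ^ 2 / y ^ 2)
        ((0 * z ^ 2 - μ ^ 2 * ((2:ℕ) * z ^ 1)) / (z ^ 2) ^ 2) z :=
      (hasDerivAt_const z (μ ^ 2)).div (hasDerivAt_pow 2 z) (by positivity)
    have h3 : HasDerivAt (fun y => μ ^ 2 / y ^ 2 * (((ν y) ^ 2)⁻¹ - 1)) _ z := h2.fun_mul h1
    have hHe : H = fun y => μ ^ 2 / y ^ 2 * (((ν y) ^ 2)⁻¹ - 1) := funext hH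
    rw [hHe]
    convert h3 using 1
    have hn0 : ν z ≠ 0 := hn.ne'
    field_simp
    ring
  have hderiv_neg : ∀ z > (0:ℝ),
      0 < (2 * μ ^ 2 / (z ^ 3 * (ν z) ^ 2)) * (1 - (ν z) ^ 2 + z * deriv ν z / ν z) := by
    intro z hz
    have hn := hF2 z hz
    have h3 := (hF3 z hz).1
    have hA : 0 < 2 * μ ^ 2 / (z ^ 3 * (ν z) ^ 2) := by
      have := hn.1; positivity
    have hB : 0 < 1 - (ν z) ^ 2 + z * deriv ν z / ν z := by
      nlinarith [hn.1, hn.2, h3]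
    exact mul_pos hA hB
  have hderivH : ∀ z > (0:ℝ), deriv H z < 0 := by
    intro z hz
    rw [(hHd z hz).deriv, neg_mul, neg_lt_zero]
    exact hderiv_neg z hz
  -- strict antitonicity
  have hanti : StrictAntiOn H (Ioi 0) := by
    refine strictAntiOn_of_deriv_neg (convex_Ioi 0)
      (fun z hz => (hHd z hz).differentiableAt.continuousAt.continuousWithinAt) ?_
    intro z hz
    rw [interior_Ioi] at hz
    exact hderivH z hz
  -- ν is monotone on (0,∞)
  have hνd0 : ∀ z > (0:ℝ), 0 ≤ deriv ν z := by
    intro z hz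
    have h := (hF3 z hz).1
    have hn := (hF2 z hz).1
    have h2 : 0 ≤ z * deriv ν z := by
      rcases div_nonneg_iff.mp h with ⟨h1, _⟩ | ⟨_, h2⟩
      · exact h1
      · linarith
    nlinarith
  have hmono : MonotoneOn ν (Ioi 0) := by
    refine monotoneOn_of_deriv_nonneg (convex_Ioi 0)
      (fun z hz => (hνd z hz).continuousAt.continuousWithinAt) ?_ ?_
    · intro z hz
      rw [interior_Ioi] at hz
      exact (hνd z hz).differentiableWithinAt
    · intro z hz
      rw [interior_Ioi] at hz
      exact hνd0 z hz
  have hν1 := hF2 1 one_pos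
  have hc₀ : 0 < ((ν 1) ^ 2)⁻¹ - 1 := by
    have h1 : (ν 1) ^ 2 < 1 := by nlinarith [hν1.1, hν1.2]
    have h2 : (0:ℝ) < (ν 1) ^ 2 := pow_pos hν1.1 2
    have := (one_lt_inv₀ h2).mpr h1
    linarith
  -- positivity of H
  have hHpos : ∀ z > (0:ℝ), 0 < H z := by
    intro z hz
    have hn := hF2 z hz
    rw [hH z]
    have h1 : (ν z) ^ 2 < 1 := by nlinarith [hn.1, hn.2]
    have h2 : (0:ℝ) < (ν z) ^ 2 := pow_pos hn.1 2
    have h3 := (one_lt_inv₀ h2).mpr h1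
    have h4 : 0 < μ ^ 2 / z ^ 2 := by positivity
    nlinarith
  -- tendsto atTop near 0
  have hsq : Tendsto (fun z : ℝ => (z ^ 2)⁻¹) (nhdsWithin 0 (Ioi 0)) atTop := by
    apply tendsto_inv_nhdsGT_zero.comp
    have h1 : Tendsto (fun z : ℝ => z ^ 2) (nhdsWithin 0 (Ioi 0)) (nhds 0) := by
      have := ((continuous_pow 2).tendsto (0 : ℝ)).mono_left
        (nhdsWithin_le_nhds : nhdsWithin (0:ℝ) (Ioi 0) ≤ nhds 0)
      simpa using this
    refine tendsto_nhdsWithin_iff.mpr ⟨h1, ?_⟩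
    exact eventually_mem_nhdsWithin.mono fun x hx => mem_Ioi.mpr (pow_pos hx 2)
  have ht0 : Tendsto H (nhdsWithin 0 (Ioi 0)) atTop := by
    have hC : 0 < μ ^ 2 * (((ν 1) ^ 2)⁻¹ - 1) := mul_pos hμ2 hc₀
    refine tendsto_atTop_mono' _ ?_ (hsq.const_mul_atTop hC)
    filter_upwards [Ioc_mem_nhdsGT_of_mem (by simp : (0:ℝ) ∈ Ico (0:ℝ) 1)] with z hz
    obtain ⟨hz1, hz2⟩ := hz
    have hle : ν z ≤ ν 1 := hmono (mem_Ioi.mpr hz1) (mem_Ioi.mpr one_pos) hz2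
    have hn := hF2 z hz1
    have hsqle : (ν z) ^ 2 ≤ (ν 1) ^ 2 := pow_le_pow_left₀ hn.1.le hle 2
    have hinv : ((ν 1) ^ 2)⁻¹ ≤ ((ν z) ^ 2)⁻¹ :=
      inv_anti₀ (pow_pos hn.1 2) hsqle
    rw [hH z, div_eq_mul_inv]
    have hz2pos : (0:ℝ) < (z ^ 2)⁻¹ := by positivity
    nlinarith [mul_nonneg (mul_nonneg hμ2.le hz2pos.le) (sub_nonneg.mpr hinv)]
  -- tendsto 0 at atTop
  have hub : Tendsto (fun z : ℝ => μ ^ 2 * (((ν 1) ^ 2)⁻¹ - 1) * (z ^ 2)⁻¹) atTop (nhds 0) := by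
    have h1 : Tendsto (fun z : ℝ => ((fun z : ℝ => z ^ 2) z)⁻¹) atTop (nhds 0) :=
      (tendsto_pow_atTop (two_ne_zero)).inv_tendsto_atTop
    simpa using h1.const_mul (μ ^ 2 * (((ν 1) ^ 2)⁻¹ - 1))
  have htop : Tendsto H atTop (nhds 0) := by
    refine squeeze_zero' ?_ ?_ hub
    · filter_upwards [eventually_gt_atTop 0] with z hz
      exact (hHpos z hz).le
    · filter_upwards [eventually_ge_atTop 1] with z hz
      have hz0 : (0:ℝ) < z := lt_of_lt_of_le one_pos hz
      have hle : ν 1 ≤ ν z := hmono (mem_Ioi.mpr one_pos) (mem_Ioi.mpr hz0) hz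
      have hsqle : (ν 1) ^ 2 ≤ (ν z) ^ 2 := pow_le_pow_left₀ hν1.1.le hle 2
      have hinv : ((ν z) ^ 2)⁻¹ ≤ ((ν 1) ^ 2)⁻¹ :=
        inv_anti₀ (pow_pos hν1.1 2) hsqle
      rw [hH z, div_eq_mul_inv]
      have hz2pos : (0:ℝ) < (z ^ 2)⁻¹ := by positivity
      nlinarith [mul_nonneg (mul_nonneg hμ2.le hz2pos.le) (sub_nonneg.mpr hinv)]
  -- bijectivity
  have hmaps : MapsTo H (Ioi 0) (Ioi 0) := fun z hz => mem_Ioi.mpr (hHpos z hz)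
  have hsurj : SurjOn H (Ioi 0) (Ioi 0) := by
    intro y hy
    rw [mem_Ioi] at hy
    obtain ⟨a, ha1, ha2⟩ := ((ht0.eventually_ge_atTop y).and self_mem_nhdsWithin).exists
    obtain ⟨b, hb1, hb2⟩ := ((htop.eventually (gt_mem_nhds hy)).and (eventually_gt_atTop a)).exists
    have hcont : ContinuousOn H (Icc a b) := fun z hz =>
      (hHd z (lt_of_lt_of_le ha2 hz.1)).differentiableAt.continuousAt.continuousWithinAt
    obtain ⟨z, hz, hz2⟩ := intermediate_value_Icc' hb2.le hcont ⟨hb1.le, ha1⟩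
    exact ⟨z, mem_Ioi.mpr (lt_of_lt_of_le ha2 hz.1), hz2⟩
  refine ⟨hanti, ht0, htop, ⟨hmaps, hanti.injOn, hsurj⟩, ?_⟩
  intro z hz
  exact ⟨(hHd z hz).deriv, hderivH z hz⟩
end

section
/- Fix μ ≠ 0. The functions z₁(x) := 2|μ|/√(x⁵σ'(x)) and z₂(x) := H⁻¹(x⁴σ(x)), where H(z) := (μ²/z²)·(ν(z)⁻² − 1) is the strictly decreasing bijection of (0,∞) onto itself, are both strictly monotonically decreasing on (1,∞). (These curves consist exactly of the points where ∂F_μ/∂x = 0 and ∂F_μ/∂z = 0, respectively, and z₂ separates the subsonic from the supersonic region of the flow.) -/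
open Real Filter Set Topology

private lemma derivDiffAt_of_contDiffAt {g : ℝ → ℝ} {x : ℝ}
    (h : ContDiffAt ℝ (⊤ : ℕ∞) g x) : DifferentiableAt ℝ (deriv g) x := by
  obtain ⟨u, hu, hcd⟩ := h.contDiffOn (m := 2) (by norm_cast) (by simp)
  obtain ⟨t, hts, ht, hxt⟩ := mem_nhds_iff.mp hu
  have h2 := (hcd.mono hts).deriv_of_isOpen ht (m := 1) le_rfl
  exact (h2.differentiableOn one_ne_zero).differentiableAt (ht.mem_nhds hxt)

theorem stmt_13 (σ f ν : ℝ → ℝ) (σ₁ : ℝ)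
    (hσsm : ∀ x > (0:ℝ), ContDiffAt ℝ (⊤ : ℕ∞) σ x)
    (hσ₁ : 0 < σ₁)
    (hM1a : Filter.Tendsto σ Filter.atTop (nhds 1))
    (hM1b : Filter.Tendsto (fun x => x ^ 2 * deriv σ x) Filter.atTop (nhds σ₁))
    (hM2a : σ 1 = 0)
    (hM2b : 0 < deriv σ 1)
    (hM3 : ∀ x > (1:ℝ), 0 < σ x ∧ 0 < deriv σ x)
    (hM4 : ∀ x > (1:ℝ),
      -3 < deriv (fun y => y ^ 2 * deriv σ y) x / (x * deriv σ x) ∧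
      deriv (fun y => y ^ 2 * deriv σ y) x / (x * deriv σ x)
        < σ₁ / (2 * x) * (9 / (8 + σ₁ / (2 * x))))
    (hfsm : ∀ z > (0:ℝ), ContDiffAt ℝ (⊤ : ℕ∞) f z)
    (hfpos : ∀ z > (0:ℝ), 0 < f z)
    (hν : ∀ z : ℝ, ν z = Real.sqrt (z * deriv f z / f z))
    (hF1 : Filter.Tendsto f (nhdsWithin 0 (Set.Ioi 0)) (nhds 1))
    (hF2 : ∀ z > (0:ℝ), 0 < ν z ∧ ν z < 1)
    (hF3 : ∀ z > (0:ℝ), 0 ≤ z * deriv ν z / ν z ∧ z * deriv ν z / ν z ≤ 1 / 3)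
    (F : ℝ → ℝ → ℝ → ℝ)
    (hF : ∀ μ x z : ℝ, F μ x z = f z ^ 2 * (σ x + μ ^ 2 / (x ^ 4 * z ^ 2)))
    (μ : ℝ) (hμ : μ ≠ 0)
    (H Hinv : ℝ → ℝ)
    (hH : ∀ z : ℝ, H z = μ ^ 2 / z ^ 2 * (((ν z) ^ 2)⁻¹ - 1))
    (hHinv : ∀ y > (0:ℝ), 0 < Hinv y ∧ H (Hinv y) = y) :
    StrictAntiOn (fun x => 2 * |μ| / Real.sqrt (x ^ 5 * deriv σ x)) (Set.Ioi 1) ∧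
    StrictAntiOn (fun x => Hinv (x ^ 4 * σ x)) (Set.Ioi 1) := by
  have hμ2 : (0:ℝ) < μ ^ 2 := by positivity
  constructor
  · -- Part 1
    have hg : StrictMonoOn (fun x => x ^ 5 * deriv σ x) (Set.Ioi 1) := by
      apply strictMonoOn_of_deriv_pos (convex_Ioi 1)
      · intro x hx
        have hx1 : (1:ℝ) < x := hx
        exact ((continuousAt_id.pow 5).mul
          (derivDiffAt_of_contDiffAt (hσsm x (by linarith))).continuousAt).continuousWithinAt
      · intro x hx
        rw [interior_Ioi] at hx
        have hx1 : (1:ℝ) < x := hx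
        have hx0 : (0:ℝ) < x := by linarith
        have hu : DifferentiableAt ℝ (deriv σ) x :=
          derivDiffAt_of_contDiffAt (hσsm x hx0)
        have hσ' : 0 < deriv σ x := (hM3 x hx1).2
        have h5 : deriv (fun y => y ^ 5 * deriv σ y) x
            = 5 * x ^ 4 * deriv σ x + x ^ 5 * deriv (deriv σ) x := by
          have := ((hasDerivAt_pow 5 x).mul hu.hasDerivAt).deriv
          exact this.trans (by push_cast; ring)
        have h2 : deriv (fun y => y ^ 2 * deriv σ y) x
            = 2 * x * deriv σ x + x ^ 2 * deriv (deriv σ) x := by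
          have := ((hasDerivAt_pow 2 x).mul hu.hasDerivAt).deriv
          exact this.trans (by push_cast; ring)
        have hM := (hM4 x hx1).1
        rw [h2] at hM
        have hden : 0 < x * deriv σ x := by positivity
        have hkey : -3 * (x * deriv σ x) < 2 * x * deriv σ x + x ^ 2 * deriv (deriv σ) x :=
          (lt_div_iff₀ hden).mp hM
        rw [h5]
        nlinarith [mul_lt_mul_of_pos_left hkey (pow_pos hx0 3), pow_pos hx0 4]
    intro a ha b hb hab
    have ha1 : (1:ℝ) < a := ha
    have hPa : 0 < a ^ 5 * deriv σ a := by
      have := (hM3 a ha1).2; positivity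
    have hlt : a ^ 5 * deriv σ a < b ^ 5 * deriv σ b := hg ha hb hab
    have hs : Real.sqrt (a ^ 5 * deriv σ a) < Real.sqrt (b ^ 5 * deriv σ b) :=
      Real.sqrt_lt_sqrt hPa.le hlt
    have h2μ : 0 < 2 * |μ| := by
      have : 0 < |μ| := abs_pos.mpr hμ; linarith
    exact div_lt_div_of_pos_left h2μ (Real.sqrt_pos.mpr hPa) hs
  · -- Part 2
    have hνd : ∀ z > (0:ℝ), DifferentiableAt ℝ ν z := by
      intro z hz
      have hfz : 0 < f z := hfpos z hz
      have hνz : 0 < ν z := (hF2 z hz).1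
      have harg : 0 < z * deriv f z / f z := by
        rw [hν z] at hνz; exact Real.sqrt_pos.mp hνz
      have hgd : DifferentiableAt ℝ (fun w => w * deriv f w / f w) z :=
        (differentiableAt_id.mul (derivDiffAt_of_contDiffAt (hfsm z hz))).div
          ((hfsm z hz).differentiableAt (by norm_cast)) hfz.ne'
      have : ν = fun w => Real.sqrt (w * deriv f w / f w) := funext hν
      rw [this]
      exact hgd.sqrt harg.ne'
    have hνmono : MonotoneOn ν (Set.Ioi 0) := by
      apply monotoneOn_of_deriv_nonneg (convex_Ioi 0)
      · exact fun z hz => (hνd z hz).continuousAt.continuousWithinAt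
      · rw [interior_Ioi]; exact fun z hz => (hνd z hz).differentiableWithinAt
      · intro z hz
        rw [interior_Ioi] at hz
        have hz0 : (0:ℝ) < z := hz
        have hνz : 0 < ν z := (hF2 z hz0).1
        have h3 := (hF3 z hz0).1
        have heq : deriv ν z = (z * deriv ν z / ν z) * (ν z / z) := by
          field_simp
        rw [heq]; positivity
    have hHanti : StrictAntiOn H (Set.Ioi 0) := by
      intro a ha b hb hab
      have ha0 : (0:ℝ) < a := ha
      have hb0 : (0:ℝ) < b := hb
      have hA : 0 < ν a := (hF2 a ha0).1
      have hA1 : ν a < 1 := (hF2 a ha0).2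
      have hB : 0 < ν b := (hF2 b hb0).1
      have hB1 : ν b < 1 := (hF2 b hb0).2
      have hAB : ν a ≤ ν b := hνmono ha hb hab.le
      rw [hH a, hH b]
      have e1 : ((ν a) ^ 2)⁻¹ - 1 = (1 - (ν a) ^ 2) / (ν a) ^ 2 := by
        field_simp
      have e2 : ((ν b) ^ 2)⁻¹ - 1 = (1 - (ν b) ^ 2) / (ν b) ^ 2 := by
        field_simp
      rw [e1, e2, div_mul_div_comm, div_mul_div_comm]
      rw [div_lt_div_iff₀ (by positivity) (by positivity)]
      have h1 : a * ν a < b * ν b := by nlinarith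
      have h2 : (a * ν a) ^ 2 < (b * ν b) ^ 2 :=
        pow_lt_pow_left₀ h1 (by positivity) two_ne_zero
      nlinarith [mul_lt_mul_of_pos_left h2 (mul_pos hμ2 (by nlinarith : (0:ℝ) < 1 - (ν a) ^ 2)),
        mul_nonneg (mul_nonneg hμ2.le (by nlinarith : (0:ℝ) ≤ (1 - ν a ^ 2) - (1 - ν b ^ 2)))
          (by positivity : (0:ℝ) ≤ (a * ν a) ^ 2)]
    have hσmono : StrictMonoOn σ (Set.Ioi 1) := by
      apply strictMonoOn_of_deriv_pos (convex_Ioi 1)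
      · intro x hx
        have hx1 : (1:ℝ) < x := hx
        exact ((hσsm x (by linarith)).differentiableAt (by norm_cast)).continuousAt.continuousWithinAt
      · intro x hx
        rw [interior_Ioi] at hx
        exact (hM3 x hx).2
    intro a ha b hb hab
    have ha1 : (1:ℝ) < a := ha
    have hb1 : (1:ℝ) < b := hb
    have hσa : 0 < σ a := (hM3 a ha1).1
    have hσb : 0 < σ b := (hM3 b hb1).1
    have hσab : σ a < σ b := hσmono ha hb hab
    have ha4 : a ^ 4 < b ^ 4 := by
      apply pow_lt_pow_left₀ hab (by linarith)
      norm_num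
    have hya : 0 < a ^ 4 * σ a := by positivity
    have hylt : a ^ 4 * σ a < b ^ 4 * σ b := by
      have e1 := mul_lt_mul_of_pos_right ha4 hσa
      have e2 := mul_lt_mul_of_pos_left hσab (pow_pos (by linarith : (0:ℝ) < b) 4)
      linarith
    obtain ⟨hia, hHa⟩ := hHinv (a ^ 4 * σ a) hya
    obtain ⟨hib, hHb⟩ := hHinv (b ^ 4 * σ b) (lt_trans hya hylt)
    show Hinv (b ^ 4 * σ b) < Hinv (a ^ 4 * σ a)
    by_contra hcon
    push_neg at hcon
    rcases eq_or_lt_of_le hcon with heq | hlt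
    · rw [heq] at hHa
      rw [hHb] at hHa
      linarith
    · have := hHanti (Set.mem_Ioi.mpr hia) (Set.mem_Ioi.mpr hib) hlt
      rw [hHa, hHb] at this
      linarith
end

section
/- Fix μ ≠ 0. If z : [1,∞) → (0,∞) is a differentiable function such that F_μ(x, z(x)) is constant on [1,∞) and lim_{x→∞} z(x) = z_∞ for some z_∞ > 0, then there exists x_c > 1 such that both partial derivatives of F_μ vanish at (x_c, z(x_c)); that is, any differentiable level curve of F_μ extending from the horizon to infinity with finite positive particle density at infinity must pass through a critical point of F_μ. -/
open Real Filter Set Topology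

theorem stmt_14 (σ f ν : ℝ → ℝ) (σ₁ : ℝ)
    (hσsm : ∀ x > (0:ℝ), ContDiffAt ℝ (⊤ : ℕ∞) σ x)
    (hσ₁ : 0 < σ₁)
    (hM1a : Filter.Tendsto σ Filter.atTop (nhds 1))
    (hM1b : Filter.Tendsto (fun x => x ^ 2 * deriv σ x) Filter.atTop (nhds σ₁))
    (hM2a : σ 1 = 0)
    (hM2b : 0 < deriv σ 1)
    (hM3 : ∀ x > (1:ℝ), 0 < σ x ∧ 0 < deriv σ x)
    (hfsm : ∀ z > (0:ℝ), ContDiffAt ℝ (⊤ : ℕ∞) f z)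
    (hfpos : ∀ z > (0:ℝ), 0 < f z)
    (hν : ∀ z : ℝ, ν z = Real.sqrt (z * deriv f z / f z))
    (hF1 : Filter.Tendsto f (nhdsWithin 0 (Set.Ioi 0)) (nhds 1))
    (hF2 : ∀ z > (0:ℝ), 0 < ν z ∧ ν z < 1)
    (hF3 : ∀ z > (0:ℝ), 0 ≤ z * deriv ν z / ν z ∧ z * deriv ν z / ν z ≤ 1 / 3)
    (F : ℝ → ℝ → ℝ → ℝ)
    (hF : ∀ μ x z : ℝ, F μ x z = f z ^ 2 * (σ x + μ ^ 2 / (x ^ 4 * z ^ 2)))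
    (μ : ℝ) (hμ : μ ≠ 0)
    (z : ℝ → ℝ) (zinf : ℝ) (hzinf : 0 < zinf)
    (hzpos : ∀ x ≥ (1:ℝ), 0 < z x)
    (hzdiff : ∀ x ≥ (1:ℝ), DifferentiableAt ℝ z x)
    (hconst : ∀ x ≥ (1:ℝ), F μ x (z x) = F μ 1 (z 1))
    (hlim : Filter.Tendsto z Filter.atTop (nhds zinf)) :
    ∃ xc : ℝ, 1 < xc ∧
      deriv (fun x => F μ x (z xc)) xc = 0 ∧
      deriv (fun w => F μ xc w) (z xc) = 0 := by
  have hcpos : (0:ℝ) < μ ^ 2 := by positivity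
  -- facts about f from the sound speed condition
  have hfd : ∀ w > (0:ℝ), 0 < deriv f w ∧ w * deriv f w < f w := by
    intro w hw
    have hfw := hfpos w hw
    have h2 := hF2 w hw
    have hνw := hν w
    have ht0 : 0 < w * deriv f w / f w := by
      have := h2.1; rw [hνw] at this; exact Real.sqrt_pos.mp this
    have ht1 : w * deriv f w / f w < 1 := by
      have h1 := h2.2; rw [hνw] at h1
      nlinarith [Real.sq_sqrt ht0.le, Real.sqrt_nonneg (w * deriv f w / f w)]
    have hwf : 0 < w * deriv f w := by
      have := mul_pos ht0 hfw
      rwa [div_mul_cancel₀ _ hfw.ne'] at this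
    refine ⟨by nlinarith, ?_⟩
    have := (div_lt_one hfw).mp ht1
    linarith
  -- continuity of deriv f
  have hdfcont : ∀ w > (0:ℝ), ContinuousAt (deriv f) w := by
    intro w hw
    obtain ⟨u, hu, hcd⟩ := (hfsm w hw).contDiffOn (m := 1)
      (by exact_mod_cast le_top) (by simp)
    have hop : IsOpen (interior u) := isOpen_interior
    have : ContinuousOn (deriv f) (interior u) :=
      (hcd.mono interior_subset).continuousOn_deriv_of_isOpen hop le_rfl
    exact this.continuousAt (hop.mem_nhds (mem_interior_iff_mem_nhds.mpr hu))
  have hfcont : ∀ w > (0:ℝ), ContinuousAt f w := fun w hw => (hfsm w hw).continuousAt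
  have hz1 : (0:ℝ) < z 1 := hzpos 1 le_rfl
  -- the function G = ∂F/∂z along the curve
  set G : ℝ → ℝ := fun x =>
    2 * f (z x) * deriv f (z x) * (σ x + μ ^ 2 / (x ^ 4 * (z x) ^ 2))
      - 2 * μ ^ 2 * f (z x) ^ 2 / (x ^ 4 * (z x) ^ 3) with hGdef
  -- G is continuous on [1, ∞)
  have hGcont : ∀ x ≥ (1:ℝ), ContinuousAt G x := by
    intro x hx
    have hx0 : (0:ℝ) < x := by linarith
    have hzx : 0 < z x := hzpos x hx
    have h1 : ContinuousAt z x := (hzdiff x hx).continuousAt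
    have h2 : ContinuousAt (fun x => f (z x)) x := (hfcont _ hzx).comp h1
    have h3 : ContinuousAt (fun x => deriv f (z x)) x := (hdfcont _ hzx).comp h1
    have hσc : ContinuousAt σ x := (hσsm x hx0).continuousAt
    have hden : ContinuousAt (fun x => x ^ 4 * (z x) ^ 2) x :=
      (continuousAt_id.pow 4).mul (h1.pow 2)
    have hden3 : ContinuousAt (fun x => x ^ 4 * (z x) ^ 3) x :=
      (continuousAt_id.pow 4).mul (h1.pow 3)
    have hne : x ^ 4 * (z x) ^ 2 ≠ 0 := by positivity
    have hne3 : x ^ 4 * (z x) ^ 3 ≠ 0 := by positivity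
    exact (((continuousAt_const.mul h2).mul h3).mul
      (hσc.add (continuousAt_const.div hden hne))).sub
      ((continuousAt_const.mul (h2.pow 2)).div hden3 hne3)
  -- G 1 < 0
  have hG1 : G 1 < 0 := by
    have hdf1 := hfd (z 1) hz1
    have hf1 := hfpos (z 1) hz1
    have heq : G 1 = (2 * μ ^ 2 * f (z 1) / (z 1) ^ 3) * (z 1 * deriv f (z 1) - f (z 1)) := by
      simp only [hGdef, hM2a]
      field_simp
      ring
    rw [heq]
    exact mul_neg_of_pos_of_neg (by positivity) (by linarith [hdf1.2])
  -- G tends to a positive limit at infinity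
  have hzf : Tendsto (fun x => f (z x)) atTop (𝓝 (f zinf)) :=
    (hfcont zinf hzinf).tendsto.comp hlim
  have hzdf : Tendsto (fun x => deriv f (z x)) atTop (𝓝 (deriv f zinf)) :=
    (hdfcont zinf hzinf).tendsto.comp hlim
  have hdenTop : Tendsto (fun x : ℝ => x ^ 4 * (z x) ^ 2) atTop atTop :=
    Filter.Tendsto.atTop_mul_pos (by positivity) (tendsto_pow_atTop (by norm_num)) (hlim.pow 2)
  have hdenTop3 : Tendsto (fun x : ℝ => x ^ 4 * (z x) ^ 3) atTop atTop :=
    Filter.Tendsto.atTop_mul_pos (by positivity) (tendsto_pow_atTop (by norm_num)) (hlim.pow 3)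
  have hq : Tendsto (fun x => μ ^ 2 / (x ^ 4 * (z x) ^ 2)) atTop (𝓝 0) :=
    tendsto_const_nhds.div_atTop hdenTop
  have hq2 : Tendsto (fun x => 2 * μ ^ 2 * f (z x) ^ 2 / (x ^ 4 * (z x) ^ 3)) atTop (𝓝 0) :=
    (tendsto_const_nhds.mul (hzf.pow 2)).div_atTop hdenTop3
  have hGlim : Tendsto G atTop
      (𝓝 (2 * f zinf * deriv f zinf * (1 + 0) - 0)) :=
    (((tendsto_const_nhds.mul hzf).mul hzdf).mul (hM1a.add hq)).sub hq2
  have hLpos : 0 < 2 * f zinf * deriv f zinf * (1 + 0) - 0 := by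
    have h1 := hfpos zinf hzinf
    have h2 := (hfd zinf hzinf).1
    nlinarith
  obtain ⟨X, hX1, hGX⟩ :=
    ((eventually_gt_atTop (1:ℝ)).and (hGlim.eventually_const_lt hLpos)).exists
  -- intermediate value theorem
  have hGcontOn : ContinuousOn G (Icc 1 X) := fun x hx =>
    (hGcont x hx.1).continuousWithinAt
  have h0mem : (0:ℝ) ∈ Ioc (G 1) (G X) := ⟨hG1, hGX.le⟩
  obtain ⟨xc, hxcmem, hGxc⟩ := intermediate_value_Ioc hX1.le hGcontOn h0mem
  have hxc1 : 1 < xc := hxcmem.1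
  have hxc0 : (0:ℝ) < xc := by linarith
  have hxcne : xc ≠ 0 := hxc0.ne'
  refine ⟨xc, hxc1, ?_⟩
  set zc := z xc with hzcdef
  have hzcpos : 0 < zc := hzpos xc hxc1.le
  have hzcne : zc ≠ 0 := hzcpos.ne'
  have hne2 : xc ^ 4 * zc ^ 2 ≠ 0 := by positivity
  -- basic derivative facts at the point
  have hfdzc : HasDerivAt f (deriv f zc) zc :=
    ((hfsm zc hzcpos).differentiableAt (by simp)).hasDerivAt
  have hσd : HasDerivAt σ (deriv σ xc) xc :=
    ((hσsm xc hxc0).differentiableAt (by simp)).hasDerivAt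
  have hzd : HasDerivAt z (deriv z xc) xc := (hzdiff xc hxc1.le).hasDerivAt
  set z' := deriv z xc with hz'def
  -- ∂F/∂z at (xc, zc)
  have hDz : HasDerivAt (fun w => f w ^ 2 * (σ xc + μ ^ 2 / (xc ^ 4 * w ^ 2)))
      (2 * f zc * deriv f zc * (σ xc + μ ^ 2 / (xc ^ 4 * zc ^ 2)) + f zc ^ 2 *
        ((0 * (xc ^ 4 * zc ^ 2) - μ ^ 2 * (xc ^ 4 * (2 * zc ^ 1))) / (xc ^ 4 * zc ^ 2) ^ 2)) zc := by
    have hden : HasDerivAt (fun w : ℝ => xc ^ 4 * w ^ 2) (xc ^ 4 * (2 * zc ^ 1)) zc := by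
      simpa using (hasDerivAt_pow 2 zc).const_mul (xc ^ 4)
    have hdiv := (hasDerivAt_const zc (μ ^ 2)).fun_div hden hne2
    have hpow : HasDerivAt (fun w => f w ^ 2) (2 * f zc * deriv f zc) zc := by
      simpa [mul_comm, mul_assoc] using hfdzc.fun_pow 2
    simpa using hpow.fun_mul ((hasDerivAt_const zc (σ xc)).fun_add hdiv)
  have hgoal2 : deriv (fun w => F μ xc w) zc = 0 := by
    rw [show (fun w => F μ xc w) = fun w => f w ^ 2 * (σ xc + μ ^ 2 / (xc ^ 4 * w ^ 2))
      from funext fun w => hF μ xc w, hDz.deriv]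
    have : 2 * f zc * deriv f zc * (σ xc + μ ^ 2 / (xc ^ 4 * zc ^ 2)) + f zc ^ 2 *
        ((0 * (xc ^ 4 * zc ^ 2) - μ ^ 2 * (xc ^ 4 * (2 * zc ^ 1))) / (xc ^ 4 * zc ^ 2) ^ 2)
        = G xc := by
      simp only [hGdef, ← hzcdef]
      field_simp
      ring
    rw [this, hGxc]
  -- ∂F/∂x at (xc, zc)
  have hdenx : HasDerivAt (fun x : ℝ => x ^ 4 * zc ^ 2) (4 * xc ^ 3 * zc ^ 2) xc := by
    simpa using (hasDerivAt_pow 4 xc).mul_const (zc ^ 2)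
  have hdivx := (hasDerivAt_const xc (μ ^ 2)).div hdenx hne2
  have hDx : HasDerivAt (fun x => f zc ^ 2 * (σ x + μ ^ 2 / (x ^ 4 * zc ^ 2)))
      (f zc ^ 2 * (deriv σ xc +
        (0 * (xc ^ 4 * zc ^ 2) - μ ^ 2 * (4 * xc ^ 3 * zc ^ 2)) / (xc ^ 4 * zc ^ 2) ^ 2)) xc := by
    simpa using (hσd.add hdivx).const_mul (f zc ^ 2)
  -- total derivative along the curve
  have hfz : HasDerivAt (fun x => f (z x)) (deriv f zc * z') xc := hfdzc.comp xc hzd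
  have hsq : HasDerivAt (fun x => f (z x) ^ 2) (2 * f zc * (deriv f zc * z')) xc := by
    simpa [← hzcdef, mul_comm, mul_assoc] using hfz.fun_pow 2
  have hz2 : HasDerivAt (fun x => (z x) ^ 2) (2 * zc * z') xc := by
    simpa [← hzcdef, mul_comm, mul_assoc] using hzd.fun_pow 2
  have hden2 : HasDerivAt (fun x : ℝ => x ^ 4 * (z x) ^ 2)
      (4 * xc ^ 3 * (z xc) ^ 2 + xc ^ 4 * (2 * zc * z')) xc := by
    have h := (hasDerivAt_pow 4 xc).fun_mul hz2
    norm_num at h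
    convert h using 1
  have hne2' : xc ^ 4 * (z xc) ^ 2 ≠ 0 := by rw [← hzcdef]; exact hne2
  have hdiv2 := (hasDerivAt_const xc (μ ^ 2)).fun_div hden2 hne2'
  have htot : HasDerivAt (fun x => f (z x) ^ 2 * (σ x + μ ^ 2 / (x ^ 4 * (z x) ^ 2)))
      (2 * f zc * (deriv f zc * z') * (σ xc + μ ^ 2 / (xc ^ 4 * zc ^ 2)) + f zc ^ 2 *
        (deriv σ xc + (0 * (xc ^ 4 * zc ^ 2) -
          μ ^ 2 * (4 * xc ^ 3 * zc ^ 2 + xc ^ 4 * (2 * zc * z'))) / (xc ^ 4 * zc ^ 2) ^ 2)) xc := by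
    have := hsq.fun_mul (hσd.fun_add hdiv2)
    simpa [← hzcdef] using this
  -- the curve function is locally constant near xc
  have hD0 : deriv (fun x => f (z x) ^ 2 * (σ x + μ ^ 2 / (x ^ 4 * (z x) ^ 2))) xc = 0 := by
    have hmem : Ioi (1:ℝ) ∈ 𝓝 xc := isOpen_Ioi.mem_nhds hxc1
    have heq : (fun x => f (z x) ^ 2 * (σ x + μ ^ 2 / (x ^ 4 * (z x) ^ 2)))
        =ᶠ[𝓝 xc] (fun _ => F μ 1 (z 1)) := by
      filter_upwards [hmem] with x hx
      rw [← hF μ x (z x)]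
      exact hconst x (le_of_lt hx)
    rw [heq.deriv_eq]
    exact deriv_const _ _
  have hDval := htot.deriv
  rw [hD0] at hDval
  -- algebra: total derivative = ∂x F + ∂z F * z'
  have halg : 2 * f zc * (deriv f zc * z') * (σ xc + μ ^ 2 / (xc ^ 4 * zc ^ 2)) + f zc ^ 2 *
        (deriv σ xc + (0 * (xc ^ 4 * zc ^ 2) -
          μ ^ 2 * (4 * xc ^ 3 * zc ^ 2 + xc ^ 4 * (2 * zc * z'))) / (xc ^ 4 * zc ^ 2) ^ 2)
      = (f zc ^ 2 * (deriv σ xc +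
        (0 * (xc ^ 4 * zc ^ 2) - μ ^ 2 * (4 * xc ^ 3 * zc ^ 2)) / (xc ^ 4 * zc ^ 2) ^ 2))
      + G xc * z' := by
    simp only [hGdef, ← hzcdef]
    field_simp
    ring
  have h0 : G xc * z' = 0 := by rw [hGxc, zero_mul]
  rw [h0, add_zero] at halg
  rw [halg] at hDval
  refine ⟨?_, hgoal2⟩
  rw [show (fun x => F μ x zc) = fun x => f zc ^ 2 * (σ x + μ ^ 2 / (x ^ 4 * zc ^ 2))
    from funext fun x => hF μ x zc, hDx.deriv]
  exact hDval.symm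
end

section
/- (No steady radial dust accretion flow with positive density at infinity.) Fix μ ≠ 0 and a constant C. If n : (1,∞) → (0,∞) satisfies σ(x) + μ²/(x⁴ n(x)²) = C for all x > 1 and the limit n_∞ := lim_{x→∞} n(x) exists, then n_∞ = 0. -/
open Real Filter Set Topology

theorem stmt_15 (σ : ℝ → ℝ) (σ₁ : ℝ)
    (hσsm : ∀ x > (0:ℝ), ContDiffAt ℝ (⊤ : ℕ∞) σ x)
    (hσ₁ : 0 < σ₁)
    (hM1a : Filter.Tendsto σ Filter.atTop (nhds 1))
    (hM1b : Filter.Tendsto (fun x => x ^ 2 * deriv σ x) Filter.atTop (nhds σ₁))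
    (hM2a : σ 1 = 0)
    (hM2b : 0 < deriv σ 1)
    (hM3 : ∀ x > (1:ℝ), 0 < σ x ∧ 0 < deriv σ x)
    (μ C : ℝ) (hμ : μ ≠ 0)
    (n : ℝ → ℝ) (hnpos : ∀ x > (1:ℝ), 0 < n x)
    (heq : ∀ x > (1:ℝ), σ x + μ ^ 2 / (x ^ 4 * n x ^ 2) = C)
    (ninf : ℝ) (hlim : Filter.Tendsto n Filter.atTop (nhds ninf)) :
    ninf = 0 := by
  by_contra hne
  -- ninf ≥ 0
  have hge : 0 ≤ ninf := by
    refine ge_of_tendsto hlim ?_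
    filter_upwards [eventually_gt_atTop (1:ℝ)] with x hx
    exact (hnpos x hx).le
  have hpos : 0 < ninf := lt_of_le_of_ne hge (Ne.symm hne)
  -- n^2 → ninf^2 > 0
  have hsq : Tendsto (fun x => n x ^ 2) atTop (nhds (ninf ^ 2)) := hlim.pow 2
  have hnsq : 0 < ninf ^ 2 := by positivity
  -- x^4 * n^2 → atTop
  have hx4 : Tendsto (fun x : ℝ => x ^ 4) atTop atTop :=
    tendsto_pow_atTop (by norm_num)
  have hprod : Tendsto (fun x : ℝ => x ^ 4 * n x ^ 2) atTop atTop :=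
    hx4.atTop_mul_pos hnsq hsq
  -- μ²/(x⁴n²) → 0
  have hzero : Tendsto (fun x : ℝ => μ ^ 2 / (x ^ 4 * n x ^ 2)) atTop (nhds 0) :=
    Tendsto.div_atTop tendsto_const_nhds hprod
  -- C = 1
  have hC : C = 1 := by
    have h1 : Tendsto (fun x => σ x + μ ^ 2 / (x ^ 4 * n x ^ 2)) atTop (nhds (1 + 0)) :=
      hM1a.add hzero
    have h2 : Tendsto (fun x => σ x + μ ^ 2 / (x ^ 4 * n x ^ 2)) atTop (nhds C) := by
      refine Tendsto.congr' ?_ tendsto_const_nhds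
      filter_upwards [eventually_gt_atTop (1:ℝ)] with x hx
      exact (heq x hx).symm
    have := tendsto_nhds_unique h2 h1
    linarith
  -- eventual lower bound on deriv: σ₁/2 ≤ x² deriv σ x
  have hev : ∀ᶠ x : ℝ in atTop, σ₁ / 2 ≤ x ^ 2 * deriv σ x :=
    hM1b.eventually (eventually_ge_nhds (by linarith))
  obtain ⟨M, hM⟩ := (hev.and (eventually_ge_atTop (2:ℝ))).exists_forall_of_atTop
  have hM2 : (2:ℝ) ≤ M := (hM M le_rfl).2
  -- the auxiliary monotone function
  set g : ℝ → ℝ := fun y => σ y + (σ₁ / 2) * y⁻¹ with hg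
  have hgdiff : ∀ y ≥ M, HasDerivAt g (deriv σ y + (σ₁ / 2) * (-(y ^ 2)⁻¹)) y := by
    intro y hy
    have hy0 : (0:ℝ) < y := by linarith
    have hd1 : HasDerivAt σ (deriv σ y) y :=
      ((hσsm y hy0).differentiableAt (by simp)).hasDerivAt
    have hd2 : HasDerivAt (fun y : ℝ => y⁻¹) (-(y ^ 2)⁻¹) y := hasDerivAt_inv hy0.ne'
    exact hd1.add (hd2.const_mul (σ₁ / 2))
  have hgmono : ∀ x ≥ M, ∀ z ≥ x, g x ≤ g z := by
    intro x hx z hz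
    have hmono : MonotoneOn g (Ici x) := by
      refine monotoneOn_of_deriv_nonneg (convex_Ici x) ?_ ?_ ?_
      · intro y hy
        exact ((hgdiff y (le_trans hx hy)).continuousAt).continuousWithinAt
      · intro y hy
        rw [interior_Ici] at hy
        exact ((hgdiff y (by linarith [(Set.mem_Ioi.mp hy).le])).differentiableAt).differentiableWithinAt
      · intro y hy
        rw [interior_Ici] at hy
        have hyM : M ≤ y := le_trans hx hy.le
        have hy0 : (0:ℝ) < y := by linarith
        rw [(hgdiff y hyM).deriv]
        have hb := (hM y hyM).1
        have hy2 : (0:ℝ) < y ^ 2 := by positivity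
        have : σ₁ / 2 / y ^ 2 ≤ deriv σ y := by
          rw [div_le_iff₀ hy2]; linarith [hb]
        have h2 : (σ₁ / 2) * (y ^ 2)⁻¹ = σ₁ / 2 / y ^ 2 := by ring
        nlinarith [this]
    exact hmono (self_mem_Ici) hz hz
  have hgtend : Tendsto g atTop (nhds 1) := by
    have : Tendsto (fun y : ℝ => (σ₁ / 2) * y⁻¹) atTop (nhds ((σ₁ / 2) * 0)) :=
      tendsto_inv_atTop_zero.const_mul _
    simpa using hM1a.add this
  have hlow : ∀ x ≥ M, σ₁ / 2 * x⁻¹ ≤ 1 - σ x := by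
    intro x hx
    have : g x ≤ 1 := by
      refine ge_of_tendsto hgtend ?_
      filter_upwards [eventually_ge_atTop x] with z hz
      exact hgmono x hx z hz
    simp only [hg] at this
    linarith
  -- n² ≤ 2μ²/(σ₁ x³) eventually, so n² → 0
  have hbound : ∀ᶠ x : ℝ in atTop, n x ^ 2 ≤ μ ^ 2 / (σ₁ / 2 * x ^ 3) := by
    filter_upwards [eventually_ge_atTop M] with x hx
    have hx1 : (1:ℝ) < x := by linarith
    have hx0 : (0:ℝ) < x := by linarith
    have hn := hnpos x hx1
    have hxn : (0:ℝ) < x ^ 4 * n x ^ 2 := by positivity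
    have he := heq x hx1
    have hss : μ ^ 2 / (x ^ 4 * n x ^ 2) = 1 - σ x := by rw [← hC] at *; linarith
    have hlb := hlow x hx
    have h3 : (0:ℝ) < σ₁ / 2 * x ^ 3 := by positivity
    have hkey : σ₁ / 2 * x ^ 3 ≤ x ^ 4 * (1 - σ x) := by
      have : σ₁ / 2 * x⁻¹ * x ^ 4 ≤ (1 - σ x) * x ^ 4 := by
        apply mul_le_mul_of_nonneg_right hlb (by positivity)
      calc σ₁ / 2 * x ^ 3 = σ₁ / 2 * x⁻¹ * x ^ 4 := by field_simp
        _ ≤ (1 - σ x) * x ^ 4 := this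
        _ = x ^ 4 * (1 - σ x) := by ring
    have hsig : (0:ℝ) < 1 - σ x := by
      have : 0 < σ₁ / 2 * x⁻¹ := by positivity
      linarith
    have hnx2 : n x ^ 2 = μ ^ 2 / (x ^ 4 * (1 - σ x)) := by
      field_simp at hss ⊢
      nlinarith [hss]
    rw [hnx2]
    exact div_le_div_of_nonneg_left (by positivity) h3 hkey
  have hnz : Tendsto (fun x => n x ^ 2) atTop (nhds 0) := by
    refine squeeze_zero' ?_ hbound ?_
    · filter_upwards [eventually_gt_atTop (1:ℝ)] with x hx
      positivity
    · refine Tendsto.div_atTop tendsto_const_nhds ?_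
      exact (tendsto_pow_atTop (by norm_num)).const_mul_atTop (by positivity)
  have := tendsto_nhds_unique hsq hnz
  nlinarith [this]
end
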